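/- arXiv:1908.04524 — 11 statements merged into one kernel-verified Lean document; each statement's English description precedes it below -/
import Mathlib

section
/- For any finite poset P and any positive integer k, the maximum total size of a family of k pairwise disjoint antichains equals the minimum over all chain partitions C of P of the sum over chains C in the partition of min(|C|, k). -/
/-!
Fomin's network-flow proof. Every element `x` gets an entry copy `pre x` and an exit copy
`post x`, joined by an arc of capacity one and cost `-1`; a hub sends arcs of cost `k` to all
entries, every exit returns an arc to the hub, and `post x → pre y` is an arc when `x < y`.
An integral flow is then a family of disjoint chains, and together with the singletons it misses
it is a chain partition of `k`-norm at most `|P| + cost`.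

For a flow of minimum cost, augmenting along a negative cycle of the residual graph would lower
the cost, so the residual graph carries a potential `π` with `π hub = 0`. On
`S = {x | π (post x) < π (pre x)}` the values `π (pre x)` lie in `1, …, k` and strictly decrease
along `<`, so their level sets are `k` disjoint antichains, and complementary slackness gives
`|S| ≥ |P| + cost`. As a chain meets each antichain at most once, the two bounds meet.
-/

open Finset

namespace List

variable {V : Type*}

@[simp] lemma consecutivePairs_nil : ([] : List V).consecutivePairs = [] := rfl

@[simp] lemma consecutivePairs_singleton (a : V) : [a].consecutivePairs = [] := rfl

@[simp] lemma consecutivePairs_cons_cons (a b : V) (l : List V) :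
    (a :: b :: l).consecutivePairs = (a, b) :: (b :: l).consecutivePairs := rfl

lemma consecutivePairs_append_cons (p q : List V) (v : V) :
    (p ++ v :: q).consecutivePairs = (p ++ [v]).consecutivePairs ++ (v :: q).consecutivePairs := by
  induction p with
  | nil => simp
  | cons a p ih => cases p <;> simp_all

lemma map_fst_consecutivePairs (l : List V) : l.consecutivePairs.map Prod.fst = l.dropLast := by
  induction l with
  | nil => rfl
  | cons a l ih => cases l <;> simp_all

lemma map_snd_consecutivePairs (l : List V) : l.consecutivePairs.map Prod.snd = l.tail :=
  map_snd_zip (by simp)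

lemma isChain_iff_forall_consecutivePairs {R : V → V → Prop} {l : List V} :
    l.IsChain R ↔ ∀ e ∈ l.consecutivePairs, R e.1 e.2 := by
  induction l with
  | nil => simp
  | cons a l ih => cases l <;> simp_all

lemma nodup_consecutivePairs_of_nodup_dropLast {l : List V} (h : l.dropLast.Nodup) :
    l.consecutivePairs.Nodup :=
  Nodup.of_map Prod.fst (map_fst_consecutivePairs l ▸ h)

lemma IsChain.concat {R : V → V → Prop} {l : List V} {u v : V} (hl : l.IsChain R)
    (hu : l.getLast? = some u) (huv : R u v) : (l ++ [v]).IsChain R :=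
  isChain_append.2 ⟨hl, isChain_singleton v, by simp_all⟩

end List

section Walks

open List

variable {V : Type*}

def walkWeight (w : V → V → ℤ) (l : List V) : ℤ :=
  (l.consecutivePairs.map fun e => w e.1 e.2).sum

lemma walkWeight_append_cons (w : V → V → ℤ) (p q : List V) (v : V) :
    walkWeight w (p ++ v :: q) = walkWeight w (p ++ [v]) + walkWeight w (v :: q) := by
  rw [walkWeight, consecutivePairs_append_cons, map_append, sum_append]
  rfl

lemma walkWeight_concat (w : V → V → ℤ) {l : List V} {u : V} (hu : l.getLast? = some u) (v : V) :
    walkWeight w (l ++ [v]) = walkWeight w l + w u v := by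
  obtain ⟨p, rfl⟩ : ∃ p, l = p ++ [u] := ⟨l.dropLast, (dropLast_append_getLast? u hu).symm⟩
  rw [append_assoc, singleton_append, walkWeight_append_cons]
  simp [walkWeight]

/-- The Bellman–Ford potential: `π v` is the least weight of a simple walk ending at `v`. -/
theorem exists_potential_of_cycle_nonneg [Finite V] (r : V → V → Prop) (w : V → V → ℤ)
    (hcyc : ∀ v q, (v :: q).Nodup → (v :: q ++ [v]).IsChain r → 0 ≤ walkWeight w (v :: q ++ [v])) :
    ∃ π : V → ℤ, ∀ u v, r u v → π v ≤ π u + w u v := by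
  classical
  let W (v : V) : Set ℤ :=
    {x | ∃ l : List V, l.Nodup ∧ l.IsChain r ∧ l.getLast? = some v ∧ walkWeight w l = x}
  have hne (v : V) : (W v).Nonempty := ⟨0, [v], by simp, by simp, rfl, rfl⟩
  have hbdd (v : V) : BddBelow (W v) := by
    have := Fintype.ofFinite V
    refine Set.Finite.bddBelow ((List.finite_length_le V (Fintype.card V)).image
      (walkWeight w) |>.subset ?_)
    rintro _ ⟨l, hl, -, -, rfl⟩
    exact ⟨l, hl.length_le_card, rfl⟩
  refine ⟨fun v => sInf (W v), fun u v huv => ?_⟩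
  obtain ⟨l, hnd, hch, hlast, hl⟩ := Int.csInf_mem (hne u) (hbdd u)
  simp only [← hl]
  by_cases hv : v ∈ l
  -- `l = p ++ v :: q`: cutting off the cycle `v :: q ++ [v]` does not increase the weight.
  · obtain ⟨p, q, rfl⟩ := append_of_mem hv
    have hq : (v :: q).getLast? = some u := by simpa using hlast
    have hcycle := hcyc v q (hnd.sublist (sublist_append_right p _))
      ((hch.infix ⟨p, [], by simp⟩).concat hq huv)
    have hpre : p ++ [v] <+: p ++ v :: q := ⟨q, by simp⟩
    have : sInf (W v) ≤ walkWeight w (p ++ [v]) :=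
      csInf_le (hbdd v) ⟨_, hnd.sublist hpre.sublist, hch.prefix hpre, by simp, rfl⟩
    rw [walkWeight_concat w hq] at hcycle
    rw [walkWeight_append_cons]
    linarith
  · have : sInf (W v) ≤ walkWeight w (l ++ [v]) :=
      csInf_le (hbdd v) ⟨_, hnd.append (nodup_singleton v) (by simpa using hv),
        hch.concat hlast huv, by simp, rfl⟩
    rwa [walkWeight_concat w hlast] at this

end Walks

section Flows

variable {V : Type*} [Fintype V]

structure IsFlow (c f : V → V → ℤ) : Prop where
  nonneg : ∀ u v, 0 ≤ f u v
  le_cap : ∀ u v, f u v ≤ c u v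
  conserv : ∀ v, ∑ u, f u v = ∑ u, f v u

def flowCost (w f : V → V → ℤ) : ℤ := ∑ u, ∑ v, w u v * f u v

def IsMinCostFlow (c w f : V → V → ℤ) : Prop :=
  IsFlow c f ∧ ∀ g, IsFlow c g → flowCost w f ≤ flowCost w g

def Residual (c f : V → V → ℤ) (u v : V) : Prop := f u v < c u v ∨ 0 < f v u

lemma IsFlow.eq_zero {c f : V → V → ℤ} (hf : IsFlow c f) {u v : V} (h : c u v ≤ 0) :
    f u v = 0 :=
  le_antisymm (h.trans' (hf.le_cap u v)) (hf.nonneg u v)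

theorem exists_isMinCostFlow (c w : V → V → ℤ) (hc : ∀ u v, 0 ≤ c u v) :
    ∃ f, IsMinCostFlow c w f := by
  have hzero : IsFlow c 0 := ⟨fun _ _ => le_rfl, hc, fun _ => by simp⟩
  have hbdd (f) (hf : IsFlow c f) : -∑ u, ∑ v, |w u v| * c u v ≤ flowCost w f := by
    rw [flowCost, ← sum_neg_distrib]
    refine sum_le_sum fun u _ => ?_
    rw [← sum_neg_distrib]
    refine sum_le_sum fun v _ => ?_
    have h0 := hf.nonneg u v
    have h1 := hf.le_cap u v
    nlinarith [abs_nonneg (w u v), neg_abs_le (w u v)]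
  obtain ⟨_, ⟨f, hf, rfl⟩, hmin⟩ := Int.exists_least_of_bdd
    (P := fun z => ∃ f, IsFlow c f ∧ flowCost w f = z)
    ⟨_, by rintro _ ⟨f, hf, rfl⟩; exact hbdd f hf⟩ ⟨_, 0, hzero, rfl⟩
  exact ⟨f, hf, fun g hg => hmin _ ⟨g, hg, rfl⟩⟩

variable [DecidableEq V]

lemma sum_count_fst (s : List (V × V)) (x : V) :
    ∑ u, s.count (x, u) = (s.map Prod.fst).count x := by
  induction s with
  | nil => simp
  | cons e s ih =>
    obtain ⟨a, b⟩ := e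
    by_cases h : a = x <;> simp [List.count_cons, sum_add_distrib, ih, h]

lemma sum_count_snd (s : List (V × V)) (x : V) :
    ∑ u, s.count (u, x) = (s.map Prod.snd).count x := by
  induction s with
  | nil => simp
  | cons e s ih =>
    obtain ⟨a, b⟩ := e
    by_cases h : b = x <;> simp [List.count_cons, sum_add_distrib, ih, h]

lemma sum_sum_mul_count (g : V → V → ℤ) (s : List (V × V)) :
    ∑ u, ∑ v, g u v * s.count (u, v) = (s.map fun e => g e.1 e.2).sum := by
  induction s with
  | nil => simp
  | cons e s ih =>
    obtain ⟨a, b⟩ := e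
    simp [List.count_cons, mul_add, sum_add_distrib, ih, add_comm, ite_and]

section Augment

lemma sum_count_consecutivePairs_cycle (v : V) (q : List V) (x : V) :
    ∑ u, (v :: q ++ [v]).consecutivePairs.count (u, x) =
      ∑ u, (v :: q ++ [v]).consecutivePairs.count (x, u) := by
  rw [sum_count_fst, sum_count_snd, List.map_fst_consecutivePairs, List.map_snd_consecutivePairs,
    List.dropLast_concat, List.cons_append, List.tail_cons]
  exact List.perm_append_singleton v q |>.count_eq x

/-- Push one unit of flow along the residual walk `l`: forward through arcs, backward against
them. -/
def augment (c f : V → V → ℤ) (l : List V) (u v : V) : ℤ :=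
  f u v + (if 0 < c u v then (l.consecutivePairs.count (u, v) : ℤ) else 0) -
    if 0 < c u v then (l.consecutivePairs.count (v, u) : ℤ) else 0

variable {c f : V → V → ℤ} {l : List V}
  (hc : ∀ u v, c u v ≤ 0 ∨ c v u ≤ 0) (hf : IsFlow c f) (hres : l.IsChain (Residual c f))
include hc hf hres

/-- Without antiparallel arcs, each residual step `u → v` uses exactly one of the arcs `u → v`,
`v → u`. -/
lemma count_consecutivePairs_eq_add (u x : V) :
    (l.consecutivePairs.count (u, x) : ℤ) =
      (if 0 < c u x then (l.consecutivePairs.count (u, x) : ℤ) else 0) +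
      (if 0 < c x u then (l.consecutivePairs.count (u, x) : ℤ) else 0) := by
  rcases Nat.eq_zero_or_pos (l.consecutivePairs.count (u, x)) with h | h
  · simp [h]
  · have hux : Residual c f u x :=
      List.isChain_iff_forall_consecutivePairs.1 hres (u, x) (List.count_pos_iff.1 h)
    have := hf.nonneg u x; have := hf.nonneg x u
    have := hf.le_cap u x; have := hf.le_cap x u; have := hc u x
    unfold Residual at hux
    split_ifs <;> omega

lemma isFlow_augment (hnd : l.consecutivePairs.Nodup)
    (hbal : ∀ x, ∑ u, l.consecutivePairs.count (u, x) = ∑ u, l.consecutivePairs.count (x, u)) :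
    IsFlow c (augment c f l) := by
  have hstep (u x : V) : l.consecutivePairs.count (u, x) = 0 ∨ Residual c f u x :=
    (Nat.eq_zero_or_pos _).imp_right fun h =>
      List.isChain_iff_forall_consecutivePairs.1 hres _ (List.count_pos_iff.1 h)
  have hbound (u x : V) : 0 ≤ augment c f l u x ∧ augment c f l u x ≤ c u x := by
    have := List.nodup_iff_count_le_one.1 hnd (u, x)
    have := List.nodup_iff_count_le_one.1 hnd (x, u)
    have := hstep u x; have := hstep x u
    have := hf.nonneg u x; have := hf.nonneg x u
    have := hf.le_cap u x; have := hf.le_cap x u; have := hc u x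
    unfold augment Residual at *
    split_ifs <;> omega
  refine ⟨fun u x => (hbound u x).1, fun u x => (hbound u x).2, fun x => ?_⟩
  have hin := sum_congr rfl fun u (_ : u ∈ univ) => count_consecutivePairs_eq_add hc hf hres u x
  have hout := sum_congr rfl fun u (_ : u ∈ univ) => count_consecutivePairs_eq_add hc hf hres x u
  have := hf.conserv x
  have := congrArg (Nat.cast (R := ℤ)) (hbal x)
  push_cast at this
  simp only [augment, sum_add_distrib, sum_sub_distrib] at hin hout ⊢
  linarith

lemma flowCost_augment (w : V → V → ℤ) (hw : ∀ u v, w v u = -w u v) :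
    flowCost w (augment c f l) = flowCost w f + walkWeight w l := by
  have hsplit := sum_congr rfl fun u (_ : u ∈ univ) => sum_congr rfl fun x (_ : x ∈ univ) =>
    congrArg (w u x * ·) (count_consecutivePairs_eq_add hc hf hres u x)
  have hswap : ∑ u, ∑ x, w u x * (if 0 < c u x then (l.consecutivePairs.count (x, u) : ℤ) else 0)
      = -∑ u, ∑ x, w u x * (if 0 < c x u then (l.consecutivePairs.count (u, x) : ℤ) else 0) := by
    rw [sum_comm, ← sum_neg_distrib]
    refine sum_congr rfl fun u _ => ?_
    rw [← sum_neg_distrib]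
    refine sum_congr rfl fun x _ => ?_
    rw [hw]
    ring
  rw [walkWeight, ← sum_sum_mul_count]
  simp only [flowCost, augment, mul_add, mul_sub, sum_add_distrib, sum_sub_distrib] at hsplit ⊢
  linarith

end Augment

theorem IsMinCostFlow.exists_residual_potential {c w f : V → V → ℤ}
    (hc : ∀ u v, c u v ≤ 0 ∨ c v u ≤ 0) (hw : ∀ u v, w v u = -w u v) (hf : IsMinCostFlow c w f) :
    ∃ π : V → ℤ, ∀ u v, Residual c f u v → π v ≤ π u + w u v := by
  refine exists_potential_of_cycle_nonneg _ w fun v q hq hres => ?_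
  have hnd := List.nodup_consecutivePairs_of_nodup_dropLast (l := v :: q ++ [v])
    (by rwa [List.dropLast_concat])
  have := hf.2 _ (isFlow_augment hc hf.1 hres hnd (sum_count_consecutivePairs_cycle v q))
  rw [flowCost_augment hc hf.1 hres w hw] at this
  linarith

end Flows

section Posets

variable {α : Type*}

theorem sum_card_le_sum_min_card {ι : Type*} [Fintype ι] [DecidableEq α] {r : α → α → Prop}
    (A : ι → Finset α) (hA : ∀ i, IsAntichain r (A i : Set α))
    (hAd : Pairwise fun i j => Disjoint (A i) (A j)) (𝒞 : Finset (Finset α))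
    (h𝒞 : ∀ C ∈ 𝒞, IsChain r (C : Set α)) (hpart : ∀ x, ∃! C, C ∈ 𝒞 ∧ x ∈ C) :
    ∑ i, (A i).card ≤ ∑ C ∈ 𝒞, min C.card (Fintype.card ι) := by
  have hcard (s : Finset α) : s.card = ∑ C ∈ 𝒞, (s ∩ C).card := by
    have hone (x : α) : (𝒞.filter (x ∈ ·)).card = 1 := by
      obtain ⟨C, hC, huniq⟩ := hpart x
      exact card_eq_one.2 ⟨C, by ext D; simpa using ⟨fun hD => huniq D hD, fun h => h ▸ hC⟩⟩
    calc s.card = ∑ x ∈ s, (𝒞.filter (x ∈ ·)).card := by simp [hone]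
      _ = ∑ C ∈ 𝒞, (s.filter (· ∈ C)).card := by simp only [card_filter]; exact sum_comm
      _ = ∑ C ∈ 𝒞, (s ∩ C).card := by simp [filter_mem_eq_inter]
  calc ∑ i, (A i).card = ∑ C ∈ 𝒞, ∑ i, (A i ∩ C).card := by
        simp only [hcard (A _)]; exact sum_comm
    _ ≤ ∑ C ∈ 𝒞, min C.card (Fintype.card ι) := by
        refine sum_le_sum fun C hC => le_min ?_ ?_
        · rw [← card_biUnion fun i _ j _ hij => (hAd hij).mono inter_subset_left inter_subset_left]
          exact card_le_card (biUnion_subset.2 fun i _ => inter_subset_right)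
        · refine (sum_le_sum fun i _ => card_le_one.2 fun x hx y hy => ?_).trans_eq (by simp)
          exact inter_subsingleton_of_isAntichain_of_isChain (hA i) (h𝒞 C hC)
            (by simpa using hx) (by simpa using hy)

theorem exists_forall_not_rel_reflTransGen [Preorder α] [WellFoundedLT α] {M : α → α → Prop}
    (hM : ∀ x y, M x y → x < y) (x : α) : ∃ b, (∀ p, ¬ M p b) ∧ Relation.ReflTransGen M b x := by
  induction x using WellFoundedLT.induction with
  | _ x ih =>
    by_cases h : ∃ p, M p x
    · obtain ⟨p, hp⟩ := h
      obtain ⟨b, hb, hbp⟩ := ih p (hM p x hp)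
      exact ⟨b, hb, hbp.tail hp⟩
    · exact ⟨x, not_exists.1 h, .refl⟩

variable [Fintype α] [DecidableEq α] {β : Type*} [DecidableEq β]

def fiberPartition (g : α → β) : Finset (Finset α) :=
  (univ.image g).image fun b => univ.filter (g · = b)

lemma existsUnique_mem_fiberPartition (g : α → β) (x : α) :
    ∃! C, C ∈ fiberPartition g ∧ x ∈ C := by
  refine ⟨univ.filter (g · = g x), ⟨by simp [fiberPartition], by simp⟩, ?_⟩
  rintro C ⟨hC, hx⟩
  obtain ⟨y, rfl⟩ : ∃ y, univ.filter (g · = g y) = C := by simpa [fiberPartition] using hC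
  simp_all

lemma isChain_of_mem_fiberPartition {r : α → α → Prop} {g : α → β}
    (hg : ∀ b, IsChain r {x | g x = b}) {C : Finset α} (hC : C ∈ fiberPartition g) :
    IsChain r (C : Set α) := by
  obtain ⟨y, rfl⟩ : ∃ y, univ.filter (g · = g y) = C := by simpa [fiberPartition] using hC
  simpa using hg (g y)

end Posets

namespace ChainNetwork

open scoped Classical

variable {α : Type*}

variable (α) in
/-- `none` is the hub, where every chain starts and ends; `some (.inl x)` and `some (.inr x)` are
the entry and exit copies of `x`. -/
abbrev Node := Option (α ⊕ α)

abbrev hub : Node α := none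
abbrev pre (x : α) : Node α := some (.inl x)
abbrev post (x : α) : Node α := some (.inr x)

lemma sum_node [Fintype α] (g : Node α → ℤ) :
    ∑ v, g v = g hub + ∑ x, g (pre x) + ∑ x, g (post x) := by
  rw [Fintype.sum_option, Fintype.sum_sum_type, add_assoc]

/-- Each chain costs `k` and each element it covers saves `1`; reversed arcs get the opposite
cost. -/
noncomputable def cost (k : ℕ) : Node α → Node α → ℤ
  | none, some (.inl _) => k
  | some (.inl _), none => -k
  | some (.inl x), some (.inr y) => if x = y then -1 else 0
  | some (.inr x), some (.inl y) => if x = y then 1 else 0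
  | _, _ => 0

lemma cost_swap (k : ℕ) (u v : Node α) : cost k v u = -cost k u v := by
  rcases u with _ | x | x <;> rcases v with _ | y | y <;> simp only [cost] <;>
    (try split_ifs) <;> simp_all

/-- `|α| + cost f`. -/
def value [Fintype α] (k : ℕ) (f : Node α → Node α → ℤ) : ℤ :=
  ∑ x, (k * f hub (pre x) + (1 - f (pre x) (post x)))

/-- `y` follows `x` on a chain of the flow `f`. -/
def Link (f : Node α → Node α → ℤ) (x y : α) : Prop := 0 < f (post x) (pre y)

variable [PartialOrder α]

/-- No flow reaches `2` (`flow_le_one`), so the arcs of capacity `2` are uncapacitated. -/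
noncomputable def cap : Node α → Node α → ℤ
  | none, some (.inl _) => 2
  | some (.inl x), some (.inr y) => if x = y then 1 else 0
  | some (.inr x), some (.inl y) => if x < y then 2 else 0
  | some (.inr _), none => 2
  | _, _ => 0

lemma cap_nonneg (u v : Node α) : 0 ≤ cap u v := by
  unfold cap; split <;> try split
  all_goals norm_num

lemma cap_antiparallel (u v : Node α) : cap u v ≤ 0 ∨ cap v u ≤ 0 := by
  rcases u with _ | x | x <;> rcases v with _ | y | y <;> simp only [cap] <;>
    (try split_ifs) <;> simp_all

section Potential

variable {f : Node α → Node α → ℤ} {k : ℕ} {π : Node α → ℤ}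
  (hπ : ∀ u v, Residual cap f u v → π v ≤ π u + cost k u v)
include hπ

lemma potential_post_lt_pre (x : α) (h : f (pre x) (post x) = 0) : π (post x) < π (pre x) := by
  have := hπ (pre x) (post x) (Or.inl (by simp [cap, h]))
  simp only [cost, if_true] at this
  linarith

lemma potential_pre_le_post_add_one (x : α) (h : 0 < f (pre x) (post x)) :
    π (pre x) ≤ π (post x) + 1 := by
  simpa [cost] using hπ (post x) (pre x) (Or.inr h)

lemma le_potential_pre (hπ₀ : π hub = 0) (x : α) (h : 0 < f hub (pre x)) : k ≤ π (pre x) := by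
  have := hπ (pre x) hub (Or.inr h)
  simp only [cost, hπ₀] at this
  linarith

lemma potential_post_nonpos (hπ₀ : π hub = 0) (x : α) (h : 0 < f (post x) hub) :
    π (post x) ≤ 0 := by
  simpa [cost, hπ₀] using hπ hub (post x) (Or.inr h)

end Potential

section Flow

variable [Fintype α] {f : Node α → Node α → ℤ} (hf : IsFlow cap f)
include hf

lemma balance_pre (x : α) :
    f hub (pre x) + ∑ z, f (post z) (pre x) = f (pre x) (post x) := by
  have h := hf.conserv (pre x)
  have h₁ : ∑ z, f (pre z) (pre x) = 0 := sum_eq_zero fun z _ => hf.eq_zero (by simp [cap])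
  have h₂ : ∑ z, f (pre x) (pre z) = 0 := sum_eq_zero fun z _ => hf.eq_zero (by simp [cap])
  have h₃ : ∑ z, f (pre x) (post z) = f (pre x) (post x) :=
    sum_eq_single_of_mem x (mem_univ x) fun z _ hz => hf.eq_zero (by simp [cap, Ne.symm hz])
  rw [sum_node, sum_node, h₁, h₂, h₃, hf.eq_zero (u := pre x) (v := hub) (by simp [cap])] at h
  simpa using h

lemma balance_post (x : α) :
    f (pre x) (post x) = f (post x) hub + ∑ y, f (post x) (pre y) := by
  have h := hf.conserv (post x)
  have h₁ : ∑ z, f (post z) (post x) = 0 := sum_eq_zero fun z _ => hf.eq_zero (by simp [cap])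
  have h₂ : ∑ z, f (post x) (post z) = 0 := sum_eq_zero fun z _ => hf.eq_zero (by simp [cap])
  have h₃ : ∑ z, f (pre z) (post x) = f (pre x) (post x) :=
    sum_eq_single_of_mem x (mem_univ x) fun z _ hz => hf.eq_zero (by simp [cap, hz])
  rw [sum_node, sum_node, h₁, h₂, h₃, hf.eq_zero (u := hub) (v := post x) (by simp [cap])] at h
  simpa using h

lemma flow_le_one (u v : Node α) : f u v ≤ 1 := by
  have hel (x : α) : f (pre x) (post x) ≤ 1 := (hf.le_cap _ _).trans (by simp [cap])
  rcases u with _ | x | x <;> rcases v with _ | y | y <;>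
    try (refine (hf.eq_zero ?_).trans_le zero_le_one; simp [cap]; done)
  · have := balance_pre hf y
    have := sum_nonneg fun z (_ : z ∈ univ) => hf.nonneg (post z) (pre y)
    linarith [hel y]
  · exact (hf.le_cap _ _).trans (by simp [cap]; split_ifs <;> norm_num)
  · have := balance_post hf x
    have := sum_nonneg fun z (_ : z ∈ univ) => hf.nonneg (post x) (pre z)
    linarith [hel x]
  · have := balance_post hf x
    have := single_le_sum (fun z _ => hf.nonneg (post x) (pre z)) (mem_univ y)
    linarith [hel x, hf.nonneg (post x) hub]

lemma residual_of_cap_eq_two {u v : Node α} (h : cap u v = 2) : Residual cap f u v :=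
  Or.inl (by linarith [flow_le_one hf u v])

lemma lt_of_link {x y : α} (h : Link f x y) : x < y := by
  by_contra hxy
  exact h.ne' (hf.eq_zero (by simp [cap, hxy]))

lemma link_rightUnique : Relator.RightUnique (Link f) := by
  intro x y y' hy hy'
  by_contra hne
  have := add_le_sum (f := fun z => f (post x) (pre z)) (fun z _ => hf.nonneg _ _)
    (mem_univ y) (mem_univ y') hne
  have := balance_post hf x
  have := flow_le_one hf (pre x) (post x)
  have := hf.nonneg (post x) hub
  unfold Link at hy hy'
  omega

/-- An uncovered `b` has no link, so its chain is `{b}`. -/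
lemma min_card_le_of_reflTransGen_link (k : ℕ) {b : α} (hb : ∀ p, ¬ Link f p b) {C : Finset α}
    (hC : ∀ y ∈ C, Relation.ReflTransGen (Link f) b y) :
    (min C.card k : ℤ) ≤ k * f hub (pre b) + (1 - f (pre b) (post b)) := by
  have hsrc : f hub (pre b) = f (pre b) (post b) := by
    rw [← balance_pre hf b, sum_eq_zero fun p _ => ?_, add_zero]
    exact le_antisymm (not_lt.1 (hb p)) (hf.nonneg _ _)
  have hel := flow_le_one hf (pre b) (post b)
  rcases (hf.nonneg (pre b) (post b)).eq_or_lt with h | h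
  · have hCb : C ⊆ {b} := fun y hy => by
      rcases (hC y hy).cases_head with rfl | ⟨c, hbc, -⟩
      · simp
      · have := single_le_sum (fun z _ => hf.nonneg (post b) (pre z)) (mem_univ c)
        have := balance_post hf b
        have := hf.nonneg (post b) hub
        unfold Link at hbc
        omega
    have := card_le_card hCb
    simp only [card_singleton] at this
    rw [← h, hsrc, ← h]
    omega
  · rw [hsrc, (by omega : f (pre b) (post b) = 1)]
    omega

theorem exists_chainPartition (k : ℕ) :
    ∃ 𝒞 : Finset (Finset α), (∀ C ∈ 𝒞, IsChain (· ≤ ·) (C : Set α)) ∧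
      (∀ x, ∃! C, C ∈ 𝒞 ∧ x ∈ C) ∧ (∑ C ∈ 𝒞, min C.card k : ℤ) ≤ value k f := by
  choose root hroot hrtg using exists_forall_not_rel_reflTransGen fun _ _ => lt_of_link hf
  have hle {x y : α} (h : Relation.ReflTransGen (Link f) x y) : x ≤ y := by
    induction h with
    | refl => rfl
    | tail _ hyz ih => exact ih.trans (lt_of_link hf hyz).le
  have hchain (b : α) : IsChain (· ≤ ·) {x | root x = b} := by
    rintro x rfl y (hy : root y = root x) -
    exact ((hrtg x).total_of_right_unique (link_rightUnique hf) (hy ▸ hrtg y)).imp hle hle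
  refine ⟨fiberPartition root, fun C hC => isChain_of_mem_fiberPartition hchain hC,
    existsUnique_mem_fiberPartition root, ?_⟩
  calc (∑ C ∈ fiberPartition root, min C.card k : ℤ)
      ≤ ∑ b ∈ univ.image root, (min (univ.filter (root · = b)).card k : ℤ) :=
        sum_image_le_of_nonneg fun C _ => by positivity
    _ ≤ ∑ b ∈ univ.image root, (k * f hub (pre b) + (1 - f (pre b) (post b))) := by
        refine sum_le_sum fun b hb => ?_
        obtain ⟨x, -, rfl⟩ := mem_image.1 hb
        exact min_card_le_of_reflTransGen_link hf k (hroot x) fun y hy =>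
          (mem_filter.1 hy).2 ▸ hrtg y
    _ ≤ value k f := sum_le_sum_of_subset_of_nonneg (subset_univ _) fun b _ _ => by
        have := mul_nonneg k.cast_nonneg (hf.nonneg hub (pre b))
        linarith [flow_le_one hf (pre b) (post b)]

section Potential

variable {k : ℕ} {π : Node α → ℤ} (hπ : ∀ u v, Residual cap f u v → π v ≤ π u + cost k u v)
include hπ

lemma potential_pre_le (hπ₀ : π hub = 0) (x : α) : π (pre x) ≤ k := by
  simpa [cost, hπ₀] using hπ hub (pre x) (residual_of_cap_eq_two hf (by simp [cap]))

lemma potential_post_nonneg (hπ₀ : π hub = 0) (x : α) : 0 ≤ π (post x) := by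
  simpa [cost, hπ₀] using hπ (post x) hub (residual_of_cap_eq_two hf (by simp [cap]))

lemma potential_pre_le_post {x y : α} (hxy : x < y) : π (pre y) ≤ π (post x) := by
  simpa [cost, hxy.ne] using hπ (post x) (pre y) (residual_of_cap_eq_two hf (by simp [cap, hxy]))

lemma potential_post_le_pre {x y : α} (h : Link f x y) : π (post x) ≤ π (pre y) := by
  simpa [cost, (lt_of_link hf h).ne'] using hπ (pre y) (post x) (Or.inr h)

variable (hπ₀ : π hub = 0)
include hπ₀

/-- Complementary slackness: `π` is constant along each link, and drops by `k` from the entry of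
a chain back to the hub. -/
lemma sum_mul_potential_sub :
    ∑ x, f (pre x) (post x) * (π (pre x) - π (post x)) = k * ∑ x, f hub (pre x) := by
  have hsrc (x : α) : f hub (pre x) * π (pre x) = k * f hub (pre x) := by
    rcases (hf.nonneg hub (pre x)).eq_or_lt with h | h
    · simp [← h]
    · rw [le_antisymm (potential_pre_le hf hπ hπ₀ x) (le_potential_pre hπ hπ₀ x h), mul_comm]
  have hlink (z x : α) : f (post z) (pre x) * π (pre x) = f (post z) (pre x) * π (post z) := by
    rcases (hf.nonneg (post z) (pre x)).eq_or_lt with h | h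
    · simp [← h]
    · rw [le_antisymm (potential_pre_le_post hf hπ (lt_of_link hf h))
        (potential_post_le_pre hf hπ h)]
  have hsnk (x : α) : f (post x) hub * π (post x) = 0 := by
    rcases (hf.nonneg (post x) hub).eq_or_lt with h | h
    · simp [← h]
    · simp [le_antisymm (potential_post_nonpos hπ hπ₀ x h) (potential_post_nonneg hf hπ hπ₀ x)]
  have hin : ∑ x, f (pre x) (post x) * π (pre x) =
      k * ∑ x, f hub (pre x) + ∑ x, ∑ z, f (post z) (pre x) * π (post z) := by
    rw [mul_sum, ← sum_add_distrib]
    refine sum_congr rfl fun x _ => ?_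
    rw [← balance_pre hf x, add_mul, sum_mul, hsrc]
    exact congrArg _ (sum_congr rfl fun z _ => hlink z x)
  have hout : ∑ x, f (pre x) (post x) * π (post x) =
      ∑ x, ∑ z, f (post z) (pre x) * π (post z) := by
    rw [sum_comm]
    refine sum_congr rfl fun z _ => ?_
    rw [balance_post hf z, add_mul, hsnk, zero_add, sum_mul]
  simp only [mul_sub, sum_sub_distrib, hin, hout]
  ring

theorem exists_antichains :
    ∃ A : Fin k → Finset α, (∀ i, IsAntichain (· ≤ ·) (A i : Set α)) ∧
      (Pairwise fun i j => Disjoint (A i) (A j)) ∧ value k f ≤ ∑ i, (A i).card := by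
  set S := univ.filter fun x => π (post x) < π (pre x)
  set A : Fin k → Finset α := fun i => S.filter fun x => π (pre x) = i + 1
  have hA (i : Fin k) : IsAntichain (· ≤ ·) (A i : Set α) := by
    intro x hx y hy hne hxy
    simp only [A, S, coe_filter, mem_filter, mem_univ, true_and, Set.mem_ofPred_eq] at hx hy
    have := potential_pre_le_post hf hπ (lt_of_le_of_ne hxy hne)
    omega
  have hAd : Pairwise fun i j => Disjoint (A i) (A j) := fun i j hij =>
    disjoint_filter.2 fun x _ hi hj => hij (Fin.ext (by omega))
  have hS : univ.biUnion A = S := by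
    ext x
    simp only [A, mem_biUnion, mem_univ, mem_filter, true_and, S]
    refine ⟨fun ⟨_, h, _⟩ => h, fun h => ?_⟩
    have := potential_pre_le hf hπ hπ₀ x
    have := potential_post_nonneg hf hπ hπ₀ x
    exact ⟨⟨(π (pre x) - 1).toNat, by omega⟩, h, by simp only; omega⟩
  refine ⟨A, hA, hAd, ?_⟩
  rw [← card_biUnion fun i _ j _ hij => hAd hij, hS, card_filter]
  have hgap := sum_mul_potential_sub hf hπ hπ₀
  rw [value, sum_add_distrib, ← mul_sum, ← hgap, ← sum_add_distrib]
  push_cast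
  refine sum_le_sum fun x _ => ?_
  have := flow_le_one hf (pre x) (post x)
  rcases (hf.nonneg (pre x) (post x)).eq_or_lt with h | h
  · simp [← h, potential_post_lt_pre hπ x h.symm]
  · have := potential_pre_le_post_add_one hπ x h
    split_ifs <;> nlinarith

end Potential

end Flow

end ChainNetwork

theorem greene_kleitman_general {α : Type*} [Fintype α] [PartialOrder α] (k : ℕ) :
    sSup {m : ℕ | ∃ A : Fin k → Finset α,
        (∀ i, IsAntichain (· ≤ ·) (A i : Set α)) ∧
        (Pairwise fun i j => Disjoint (A i) (A j)) ∧
        m = ∑ i, (A i).card} =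
    sInf {m : ℕ | ∃ 𝒞 : Finset (Finset α),
        (∀ C ∈ 𝒞, IsChain (· ≤ ·) (C : Set α)) ∧
        (∀ x : α, ∃! C, C ∈ 𝒞 ∧ x ∈ C) ∧
        m = ∑ C ∈ 𝒞, min C.card k} := by
  classical
  have hweak := @sum_card_le_sum_min_card α (Fin k) _ _ (· ≤ ·)
  simp only [Fintype.card_fin] at hweak
  obtain ⟨f, hf⟩ := exists_isMinCostFlow (ChainNetwork.cap (α := α)) (ChainNetwork.cost k)
    ChainNetwork.cap_nonneg
  obtain ⟨π, hπ⟩ :=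
    hf.exists_residual_potential ChainNetwork.cap_antiparallel (ChainNetwork.cost_swap k)
  obtain ⟨A, hA, hAd, hA_ge⟩ := ChainNetwork.exists_antichains hf.1 (π := fun v => π v - π none)
    (fun u v huv => by linarith [hπ u v huv]) (sub_self _)
  obtain ⟨𝒞, h𝒞, h𝒞_part, h𝒞_le⟩ := ChainNetwork.exists_chainPartition hf.1 k
  have heq : ∑ i, (A i).card = ∑ C ∈ 𝒞, min C.card k :=
    le_antisymm (hweak A hA hAd 𝒞 h𝒞 h𝒞_part) (by exact_mod_cast h𝒞_le.trans hA_ge)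
  rw [IsGreatest.csSup_eq (a := ∑ i, (A i).card), IsLeast.csInf_eq (a := ∑ C ∈ 𝒞, min C.card k),
    heq]
  · refine ⟨⟨𝒞, h𝒞, h𝒞_part, rfl⟩, ?_⟩
    rintro _ ⟨𝒞', h𝒞', h𝒞'_part, rfl⟩
    exact heq ▸ hweak A hA hAd 𝒞' h𝒞' h𝒞'_part
  · refine ⟨⟨A, hA, hAd, rfl⟩, ?_⟩
    rintro _ ⟨A', hA', hA'd, rfl⟩
    exact heq ▸ hweak A' hA' hA'd 𝒞 h𝒞 h𝒞_part

/-- **Greene–Kleitman theorem.** For any finite poset and any positive integer `k`,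
the maximum total size of a family of `k` pairwise disjoint antichains equals the
minimum, over all chain partitions `𝒞`, of `∑ C ∈ 𝒞, min |C| k`. -/
theorem greene_kleitman {α : Type*} [Fintype α] [PartialOrder α] (k : ℕ) (hk : 0 < k) :
    sSup {m : ℕ | ∃ A : Fin k → Finset α,
        (∀ i, IsAntichain (· ≤ ·) (A i : Set α)) ∧
        (Pairwise fun i j => Disjoint (A i) (A j)) ∧
        m = ∑ i, (A i).card} =
    sInf {m : ℕ | ∃ 𝒞 : Finset (Finset α),
        (∀ C ∈ 𝒞, IsChain (· ≤ ·) (C : Set α)) ∧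
        (∀ x : α, ∃! C, C ∈ 𝒞 ∧ x ∈ C) ∧
        m = ∑ C ∈ 𝒞, min C.card k} :=
  greene_kleitman_general k
end

section
/- In any finite poset, the maximum size of an antichain equals the minimum number of chains needed to partition the elements. -/
/-!
Galvin's induction. Remove a maximal element `a` of `s` and partition `s.erase a` into `k` chains,
`k` being its width. Every antichain of size `k` in `s.erase a` meets each of these chains; on
each chain `C` let the top `t C` be the largest element lying on such an antichain. The tops form
an antichain. If `a` is incomparable with all of them, adding `a` gives an antichain of size
`k + 1`, and `{a}` is the `k + 1`-st chain. Otherwise `t C ≤ a` for some `C`; removing the chain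
`{a} ∪ {x ∈ C | x ≤ t C}` leaves a set with no antichain of size `k`, which by induction splits
into `k - 1` chains.
-/

open Finset

section

variable {α : Type*} [PartialOrder α]

theorem IsChain.exists_isGreatest {s : Finset α} (hs : IsChain (· ≤ ·) (s : Set α))
    (hne : s.Nonempty) : ∃ b, IsGreatest (s : Set α) b := by
  obtain ⟨b, hb⟩ := s.exists_maximal hne
  exact ⟨b, hb.1, fun x hx => (hs.total hx hb.1).elim id (hb.2 hx)⟩

theorem IsAntichain.card_le_card_of_isChain_cover {A : Finset α} {𝒞 : Finset (Finset α)}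
    (hA : IsAntichain (· ≤ ·) (A : Set α)) (h𝒞 : ∀ C ∈ 𝒞, IsChain (· ≤ ·) (C : Set α))
    (hcover : ∀ x ∈ A, ∃ C ∈ 𝒞, x ∈ C) : #A ≤ #𝒞 :=
  card_le_card_of_forall_subsingleton (· ∈ ·) hcover fun C hC =>
    inter_subsingleton_of_isAntichain_of_isChain hA (h𝒞 C hC)

theorem IsAntichain.exists_mem_of_isChain_cover {A : Finset α} {𝒞 : Finset (Finset α)}
    (hA : IsAntichain (· ≤ ·) (A : Set α)) (h𝒞 : ∀ C ∈ 𝒞, IsChain (· ≤ ·) (C : Set α))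
    (hcover : ∀ x ∈ A, ∃ C ∈ 𝒞, x ∈ C) (hcard : #𝒞 ≤ #A) {C : Finset α} (hC : C ∈ 𝒞) :
    ∃ x ∈ A, x ∈ C := by
  classical
  by_contra! hAC
  have hcover' : ∀ x ∈ A, ∃ D ∈ 𝒞.erase C, x ∈ D := fun x hx => by
    obtain ⟨D, hD, hxD⟩ := hcover x hx
    exact ⟨D, mem_erase.2 ⟨fun hDC => hAC x hx (hDC ▸ hxD), hD⟩, hxD⟩
  have := hA.card_le_card_of_isChain_cover (fun D hD => h𝒞 D (mem_of_mem_erase hD)) hcover'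
  have := card_erase_lt_of_mem hC
  omega

variable [DecidableEq α]

def Finpartition.IsChainPartition {s : Finset α} (P : Finpartition s) : Prop :=
  ∀ C ∈ P.parts, IsChain (· ≤ ·) (C : Set α)

namespace Finpartition.IsChainPartition

variable {s A : Finset α} {P : Finpartition s}

theorem card_le (hP : P.IsChainPartition) (hAs : A ⊆ s) (hA : IsAntichain (· ≤ ·) (A : Set α)) :
    #A ≤ #P.parts :=
  hA.card_le_card_of_isChain_cover hP fun _ hx => P.exists_mem (hAs hx)

theorem exists_mem_of_card_le (hP : P.IsChainPartition) (hAs : A ⊆ s)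
    (hA : IsAntichain (· ≤ ·) (A : Set α)) (hPA : #P.parts ≤ #A) {C : Finset α}
    (hC : C ∈ P.parts) : ∃ x ∈ A, x ∈ C :=
  hA.exists_mem_of_isChain_cover hP (fun _ hx => P.exists_mem (hAs hx)) hPA hC

theorem extend (hP : P.IsChainPartition) {K t : Finset α} (hK : IsChain (· ≤ ·) (K : Set α))
    (hK₀ : K ≠ ⊥) (hsK : Disjoint s K) (ht : s ⊔ K = t) :
    (P.extend hK₀ hsK ht).IsChainPartition := by
  simp only [Finpartition.IsChainPartition, Finpartition.extend_parts, forall_mem_insert]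
  exact ⟨hK, hP⟩

theorem exists_tops [Nonempty α] (hP : P.IsChainPartition) (hAs : A ⊆ s)
    (hA : IsAntichain (· ≤ ·) (A : Set α)) (hPA : #P.parts ≤ #A) :
    ∃ t : Finset α → α, (∀ C ∈ P.parts, t C ∈ C) ∧
      (∀ C ∈ P.parts, ∀ B ⊆ s, IsAntichain (· ≤ ·) (B : Set α) → #P.parts ≤ #B →
        ∀ x ∈ B, x ∈ C → x ≤ t C) ∧
      IsAntichain (· ≤ ·) (t '' P.parts) := by
  classical
  let OnMaxAntichain (x : α) : Prop :=
    ∃ B ⊆ s, IsAntichain (· ≤ ·) (B : Set α) ∧ #P.parts ≤ #B ∧ x ∈ B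
  have htop : ∀ C ∈ P.parts, ∃ c, IsGreatest (C.filter OnMaxAntichain : Set α) c := by
    intro C hC
    obtain ⟨x, hxA, hxC⟩ := hP.exists_mem_of_card_le hAs hA hPA hC
    exact ((hP C hC).mono (coe_subset.2 (filter_subset _ _))).exists_isGreatest
      ⟨x, mem_filter.2 ⟨hxC, A, hAs, hA, hPA, hxA⟩⟩
  choose! t ht using htop
  have le_t : ∀ C ∈ P.parts, ∀ B ⊆ s, IsAntichain (· ≤ ·) (B : Set α) → #P.parts ≤ #B →
      ∀ x ∈ B, x ∈ C → x ≤ t C := fun C hC B hBs hB hPB x hxB hxC =>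
    (ht C hC).2 (mem_filter.2 ⟨hxC, B, hBs, hB, hPB, hxB⟩)
  refine ⟨t, fun C hC => (mem_filter.1 (ht C hC).1).1, le_t, ?_⟩
  rintro _ ⟨C, hC, rfl⟩ _ ⟨D, hD, rfl⟩ hne hle
  obtain ⟨B, hBs, hB, hPB, htD⟩ := (mem_filter.1 (ht D hD).1).2
  obtain ⟨x, hxB, hxC⟩ := hP.exists_mem_of_card_le hBs hB hPB hC
  -- `x ≤ t C ≤ t D` on the antichain `B` forces `x = t D`, so `t D` lies on both `C` and `D`.
  have hx : x = t D := hB.eq hxB htD ((le_t C hC B hBs hB hPB x hxB hxC).trans hle)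
  exact hne (congrArg t (P.eq_of_mem_parts hC hD (hx ▸ hxC) (mem_filter.1 (ht D hD).1).1))

end Finpartition.IsChainPartition

def Finset.HasDilworthDecomposition (s : Finset α) : Prop :=
  ∃ A ⊆ s, IsAntichain (· ≤ ·) (A : Set α) ∧
    ∃ P : Finpartition s, P.IsChainPartition ∧ #P.parts ≤ #A

namespace Finset.HasDilworthDecomposition

variable {s : Finset α} {a : α}

theorem empty : (∅ : Finset α).HasDilworthDecomposition :=
  ⟨∅, subset_rfl, by simp, Finpartition.empty _, by simp [Finpartition.IsChainPartition], by simp⟩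

theorem of_isAntichain_insert (ha : a ∈ s) {P : Finpartition (s.erase a)}
    (hP : P.IsChainPartition) {B : Finset α} (hBs : B ⊆ s.erase a)
    (hB : IsAntichain (· ≤ ·) (insert a (B : Set α))) (hPB : #P.parts ≤ #B) :
    s.HasDilworthDecomposition := by
  have haB : a ∉ B := fun h => notMem_erase a s (hBs h)
  refine ⟨insert a B, insert_subset ha (hBs.trans (erase_subset a s)), by rwa [coe_insert],
    P.extend (b := {a}) (singleton_ne_empty a) (disjoint_singleton_right.2 (notMem_erase a s))
      (by rw [sup_eq_union, union_comm, ← insert_eq, insert_erase ha]),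
    hP.extend (by rw [coe_singleton]; exact IsChain.singleton) _ _ _, ?_⟩
  rw [Finpartition.card_extend, card_insert_of_notMem haB]
  omega

theorem of_top_le (IH : ∀ t ⊂ s, t.HasDilworthDecomposition) (ha : a ∈ s)
    {P : Finpartition (s.erase a)} (hP : P.IsChainPartition) {A : Finset α}
    (hAs : A ⊆ s.erase a) (hA : IsAntichain (· ≤ ·) (A : Set α)) (hPA : #P.parts ≤ #A)
    {C : Finset α} (hC : C ∈ P.parts) {c : α} (hca : c ≤ a)
    (hc : ∀ B ⊆ s.erase a, IsAntichain (· ≤ ·) (B : Set α) → #P.parts ≤ #B →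
      ∀ x ∈ B, x ∈ C → x ≤ c) :
    s.HasDilworthDecomposition := by
  classical
  set K := insert a (C.filter (· ≤ c))
  have haK : a ∈ K := mem_insert_self _ _
  have hKs : K ⊆ s :=
    insert_subset ha ((filter_subset _ _).trans ((P.subset hC).trans (erase_subset a s)))
  have hK : IsChain (· ≤ ·) (K : Set α) := by
    rw [coe_insert]
    exact ((hP C hC).mono (coe_subset.2 (filter_subset _ _))).insert fun x hx _ =>
      Or.inr ((mem_filter.1 hx).2.trans hca)
  obtain ⟨B, hBs, hB, Q, hQ, hQB⟩ := IH (s \ K) (sdiff_ssubset hKs ⟨a, haK⟩)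
  have hBs' : B ⊆ s.erase a := fun x hx =>
    mem_erase.2 ⟨fun h => (mem_sdiff.1 (hBs hx)).2 (h ▸ haK), (mem_sdiff.1 (hBs hx)).1⟩
  have hBP : #B < #P.parts := by
    refine (hP.card_le hBs' hB).lt_of_ne fun hBP => ?_
    obtain ⟨x, hxB, hxC⟩ := hP.exists_mem_of_card_le hBs' hB hBP.ge hC
    exact (mem_sdiff.1 (hBs hxB)).2
      (mem_insert_of_mem (mem_filter.2 ⟨hxC, hc B hBs' hB hBP.ge x hxB hxC⟩))
  refine ⟨A, hAs.trans (erase_subset a s), hA,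
    Q.extend (b := K) (ne_empty_of_mem haK) sdiff_disjoint (sdiff_union_of_subset hKs),
    hQ.extend hK _ _ _, ?_⟩
  rw [Finpartition.card_extend]
  omega

end Finset.HasDilworthDecomposition

open Finset.HasDilworthDecomposition in
theorem Finset.hasDilworthDecomposition (s : Finset α) : s.HasDilworthDecomposition := by
  induction s using Finset.strongInduction with
  | H s IH =>
  obtain rfl | hs := s.eq_empty_or_nonempty
  · exact empty
  obtain ⟨a, ha⟩ := s.exists_maximal hs
  have : Nonempty α := ⟨a⟩
  obtain ⟨A, hAs, hA, P, hP, hPA⟩ := IH _ (erase_ssubset ha.1)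
  obtain ⟨t, htC, le_t, ht⟩ := hP.exists_tops hAs hA hPA
  by_cases hcomp : ∃ C ∈ P.parts, t C ≤ a
  · obtain ⟨C, hC, hCa⟩ := hcomp
    exact of_top_le IH ha.1 hP hAs hA hPA hC hCa (le_t C hC)
  push Not at hcomp
  have hts : ∀ C ∈ P.parts, t C ∈ s.erase a := fun C hC => P.subset hC (htC C hC)
  refine of_isAntichain_insert ha.1 hP (B := P.parts.image t) ?_ ?_ ?_
  · simpa [subset_iff] using hts
  · rw [coe_image]
    refine ht.insert (fun _ ⟨C, hC, hb⟩ _ => hb ▸ hcomp C hC) fun _ ⟨C, hC, hb⟩ _ h => ?_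
    exact hcomp C hC (ha.2 (mem_of_mem_erase (hts C hC)) (hb ▸ h))
  · have ht_inj : Set.InjOn t P.parts := fun C hC D hD h =>
      P.eq_of_mem_parts hC hD (htC C hC) (h ▸ htC D hD)
    rw [card_image_of_injOn ht_inj]

end

/-- **Dilworth's theorem.** In any finite poset, the maximum size of an antichain
equals the minimum number of chains needed to partition the elements. -/
theorem dilworth {α : Type*} [Fintype α] [PartialOrder α] :
    sSup {m : ℕ | ∃ A : Finset α, IsAntichain (· ≤ ·) (A : Set α) ∧ m = A.card} =
    sInf {m : ℕ | ∃ 𝒞 : Finset (Finset α),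
        (∀ C ∈ 𝒞, IsChain (· ≤ ·) (C : Set α)) ∧
        (∀ x : α, ∃! C, C ∈ 𝒞 ∧ x ∈ C) ∧
        m = 𝒞.card} := by
  classical
  obtain ⟨A, -, hA, P, hP, hPA⟩ := (univ : Finset α).hasDilworthDecomposition
  have hPunique (x : α) : ∃! C, C ∈ P.parts ∧ x ∈ C := P.existsUnique_mem (mem_univ x)
  have weak_duality (B : Finset α) (𝒞 : Finset (Finset α)) (hB : IsAntichain (· ≤ ·) (B : Set α))
      (h𝒞 : ∀ C ∈ 𝒞, IsChain (· ≤ ·) (C : Set α)) (hunique : ∀ x : α, ∃! C, C ∈ 𝒞 ∧ x ∈ C) :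
      #B ≤ #𝒞 :=
    hB.card_le_card_of_isChain_cover h𝒞 fun x _ => (hunique x).exists
  have hAP : #A = #P.parts := le_antisymm (weak_duality A P.parts hA hP hPunique) hPA
  rw [IsGreatest.csSup_eq (a := #A), IsLeast.csInf_eq (a := #P.parts), hAP]
  · refine ⟨⟨P.parts, hP, hPunique, rfl⟩, ?_⟩
    rintro _ ⟨𝒞, h𝒞, hunique, rfl⟩
    exact hAP ▸ weak_duality A 𝒞 hA h𝒞 hunique
  · refine ⟨⟨A, hA, rfl⟩, ?_⟩
    rintro _ ⟨B, hB, rfl⟩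
    exact hAP ▸ weak_duality B P.parts hB hP hPunique
end

section
/- In any finite poset, the maximum size of a chain equals the minimum number of antichains needed to partition the elements. -/
open Finset

section MirskyAux

variable {α : Type*} [Fintype α] [PartialOrder α]

/-- set of sizes of chains ending at `x` -/
private def hset (x : α) : Set ℕ :=
  {m | ∃ C : Finset α, IsChain (· ≤ ·) (C : Set α) ∧ (∀ y ∈ C, y ≤ x) ∧ x ∈ C ∧ m = C.card}

noncomputable def ht (x : α) : ℕ := sSup (hset x)

private lemma hset_nonempty (x : α) : (hset x).Nonempty := by
  refine ⟨1, {x}, ?_, ?_, ?_, ?_⟩ <;> simp [Set.subsingleton_singleton.isChain]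

private lemma hset_bdd (x : α) : BddAbove (hset x) := by
  refine ⟨Fintype.card α, fun m hm => ?_⟩
  obtain ⟨C, _, _, _, rfl⟩ := hm
  simpa using C.card_le_univ

private lemma ht_mem (x : α) : ht x ∈ hset x :=
  Nat.sSup_mem (hset_nonempty x) (hset_bdd x)

private lemma one_le_ht (x : α) : 1 ≤ ht x := by
  apply le_csSup (hset_bdd x)
  refine ⟨{x}, ?_, ?_, ?_, ?_⟩ <;> simp [Set.subsingleton_singleton.isChain]

private lemma ht_lt_ht {x y : α} (hxy : x < y) : ht x < ht y := by
  obtain ⟨C, hC, hle, hxC, hcard⟩ := ht_mem x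
  have hyC : y ∉ C := fun hy => absurd (hle y hy) (not_le_of_gt hxy)
  classical
  have : ht x + 1 ∈ hset y := by
    refine ⟨insert y C, ?_, ?_, ?_, ?_⟩
    · rw [Finset.coe_insert]
      refine hC.insert (fun z hz _ => ?_)
      exact Or.inr (le_of_lt (lt_of_le_of_lt (hle z hz) hxy))
    · intro z hz
      rcases Finset.mem_insert.1 hz with rfl | hz
      · exact le_rfl
      · exact le_of_lt (lt_of_le_of_lt (hle z hz) hxy)
    · exact Finset.mem_insert_self _ _
    · rw [Finset.card_insert_of_notMem hyC, hcard]
  exact lt_of_lt_of_le (Nat.lt_succ_self _) (le_csSup (hset_bdd y) this)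

end MirskyAux

/-- **Mirsky's theorem.** In any finite poset, the maximum size of a chain
equals the minimum number of antichains needed to partition the elements. -/
theorem mirsky {α : Type*} [Fintype α] [PartialOrder α] :
    sSup {m : ℕ | ∃ C : Finset α, IsChain (· ≤ ·) (C : Set α) ∧ m = C.card} =
    sInf {m : ℕ | ∃ 𝒜 : Finset (Finset α),
        (∀ A ∈ 𝒜, IsAntichain (· ≤ ·) (A : Set α)) ∧
        (∀ x : α, ∃! A, A ∈ 𝒜 ∧ x ∈ A) ∧
        m = 𝒜.card} := by
  classical
  set S : Set ℕ := {m : ℕ | ∃ C : Finset α, IsChain (· ≤ ·) (C : Set α) ∧ m = C.card} with hS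
  set T : Set ℕ := {m : ℕ | ∃ 𝒜 : Finset (Finset α),
        (∀ A ∈ 𝒜, IsAntichain (· ≤ ·) (A : Set α)) ∧
        (∀ x : α, ∃! A, A ∈ 𝒜 ∧ x ∈ A) ∧
        m = 𝒜.card} with hT
  have hSne : S.Nonempty := ⟨0, ∅, by simp, by simp⟩
  have hSbdd : BddAbove S := by
    refine ⟨Fintype.card α, fun m hm => ?_⟩
    obtain ⟨C, _, rfl⟩ := hm
    simpa using C.card_le_univ
  set n := sSup S with hn
  obtain ⟨C₀, hC₀, hC₀card⟩ : n ∈ S := Nat.sSup_mem hSne hSbdd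
  -- heights are between 1 and n
  have ht_le_n : ∀ x : α, ht x ≤ n := by
    intro x
    obtain ⟨C, hC, _, _, hcard⟩ := ht_mem x
    exact le_csSup hSbdd ⟨C, hC, hcard⟩
  -- the level-set partition
  set 𝒜 : Finset (Finset α) :=
    (Finset.range n).image (fun i => Finset.univ.filter (fun x => ht x = i + 1)) with h𝒜
  have h𝒜T : 𝒜.card ∈ T := by
    refine ⟨𝒜, ?_, ?_, rfl⟩
    · intro A hA
      rw [h𝒜] at hA
      obtain ⟨i, _, rfl⟩ := Finset.mem_image.1 hA
      intro a ha b hb hab hle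
      simp only [Finset.coe_filter, Set.mem_setOf_eq] at ha hb
      exact absurd (ht_lt_ht (lt_of_le_of_ne hle hab)) (by omega)
    · intro x
      have h1 := one_le_ht x
      have h2 := ht_le_n x
      refine ⟨Finset.univ.filter (fun y => ht y = ht x), ⟨?_, by simp⟩, ?_⟩
      · rw [h𝒜]
        refine Finset.mem_image.2 ⟨ht x - 1, Finset.mem_range.2 (show ht x - 1 < n by omega), ?_⟩
        congr 1
        ext y
        constructor <;> intro h <;> omega
      · rintro A ⟨hA, hxA⟩
        rw [h𝒜] at hA
        obtain ⟨i, _, rfl⟩ := Finset.mem_image.1 hA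
        simp only [Finset.mem_filter] at hxA
        congr 1
        ext y
        omega
  have h𝒜card : 𝒜.card ≤ n := by
    rw [h𝒜]
    exact le_trans Finset.card_image_le (by simp)
  have hTne : T.Nonempty := ⟨_, h𝒜T⟩
  -- every chain size is ≤ every partition size
  have key : ∀ m ∈ S, ∀ k ∈ T, m ≤ k := by
    rintro m ⟨C, hC, rfl⟩ k ⟨ℬ, hanti, hpart, rfl⟩
    have : ∀ x ∈ C, (hpart x).exists.choose ∈ ℬ := fun x _ => (hpart x).exists.choose_spec.1
    refine Finset.card_le_card_of_injOn (fun x => (hpart x).exists.choose) this ?_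
    intro a ha b hb hfab
    by_contra hne
    have hcomp := hC.total ha hb
    have haA := (hpart a).exists.choose_spec.2
    have hbA := (hpart b).exists.choose_spec.2
    have hfab' : (hpart a).exists.choose = (hpart b).exists.choose := hfab
    rw [hfab'] at haA
    have hanti' := hanti _ (hpart b).exists.choose_spec.1
    rcases hcomp with h | h
    · exact hanti' haA hbA hne h
    · exact hanti' hbA haA (Ne.symm hne) h
  refine le_antisymm ?_ ?_
  · exact csSup_le hSne (fun m hm => le_csInf hTne (fun k hk => key m hm k hk))
  · exact le_trans (Nat.sInf_le h𝒜T) h𝒜card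
end

section
/- Let (A, C) be an orthogonal pair of a finite poset P, where A is a k-antichain family, and let P_A be the subposet induced on the union of the antichains in A. If A' is the canonical antichain partition of P_A, then (A', C) is again an orthogonal pair of P. -/
/-!
Every element of the `j`-th canonical level of `S = ⋃ A` is the top of a strict chain
`x₀ < ⋯ < x_j` in `S`, and a chain meets each antichain of `A` at most once, so only the levels
`0, …, k - 1` are nonempty. A chain `C` of the pair meets `S` in exactly `k` points, one in each
antichain of `A`; these points are spread over the levels `0, …, k - 1`, and each level, being an
antichain, receives at most one of them. Hence each of these `k` levels meets `C` exactly once.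
-/

open Finset

/-- The canonical antichain partition (0-indexed) of the subposet induced on `S`,
with respect to a strict relation `lt`: `canonAntichain lt S 0` is the set of
minimal elements of `S`, and `canonAntichain lt S j` is the set of minimal elements
of what remains of `S` after removing the earlier antichains. -/
noncomputable def canonAntichain {α : Type*} [DecidableEq α] (lt : α → α → Prop) (S : Finset α) :
    ℕ → Finset α
  | j =>
    let R := S \ (Finset.range j).attach.biUnion (fun i => canonAntichain lt S i.1)
    @Finset.filter α (fun x => ∀ y ∈ R, ¬ lt y x) (fun _ => Classical.dec _) R
  decreasing_by exact Finset.mem_range.mp i.2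

namespace LTSeries

variable {α : Type*} [Preorder α]

theorem length_lt_card_of_forall_mem {S : Finset α} (p : LTSeries α) (hp : ∀ y ∈ p, y ∈ S) :
    p.length < S.card := by
  have := card_le_card_of_injOn (s := univ) p (fun i _ => hp _ ⟨i, rfl⟩)
    p.strictMono.injective.injOn
  simpa using this

theorem length_lt_card_of_isAntichain {ι : Type*} [Fintype ι] {A : ι → Set α}
    (hA : ∀ i, IsAntichain (· ≤ ·) (A i)) (p : LTSeries α) (hp : ∀ y ∈ p, ∃ i, y ∈ A i) :
    p.length < Fintype.card ι := by
  choose g hg using fun m => hp (p m) ⟨m, rfl⟩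
  have hg_inj : Function.Injective g := fun m n hmn => p.strictMono.injective <|
    inter_subsingleton_of_isAntichain_of_isChain (hA (g m)) p.strictMono.monotone.isChain_range
      ⟨hg m, m, rfl⟩ ⟨hmn ▸ hg n, n, rfl⟩
  simpa using Fintype.card_le_of_injective g hg_inj

end LTSeries

theorem Finset.card_inter_biUnion_of_card_inter_eq_one {α ι : Type*} [DecidableEq α] [Fintype ι]
    {A : ι → Finset α} (hA : Pairwise fun i j => Disjoint (A i) (A j)) {C : Finset α}
    (hC : ∀ i, (A i ∩ C).card = 1) : (C ∩ univ.biUnion A).card = Fintype.card ι := by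
  rw [inter_biUnion,
    card_biUnion fun i _ j _ hij => (hA hij).mono inter_subset_right inter_subset_right]
  simp only [inter_comm C, hC, sum_const, card_univ, smul_eq_mul, mul_one]

section CanonAntichain

variable {α : Type*} [DecidableEq α] [PartialOrder α] {S : Finset α} {j : ℕ} {x : α}

-- The `let` in the body of `canonAntichain`, so that unfolding `canonAntichain` produces it.
noncomputable def canonRemainder (S : Finset α) (j : ℕ) : Finset α :=
  S \ (range j).attach.biUnion fun i => canonAntichain (· < ·) S i.1

theorem mem_canonAntichain_iff :
    x ∈ canonAntichain (· < ·) S j ↔ Minimal (· ∈ canonRemainder S j) x := by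
  rw [canonAntichain, minimal_iff_forall_lt]
  simp only [mem_filter]
  exact and_congr_right fun _ => ⟨fun h y hyx hy => h y hy hyx, fun h y hy hyx => h hyx hy⟩

theorem mem_canonRemainder_iff :
    x ∈ canonRemainder S j ↔ x ∈ S ∧ ∀ i < j, x ∉ canonAntichain (· < ·) S i := by
  simp [canonRemainder]

theorem canonRemainder_zero : canonRemainder S 0 = S := by
  simp [canonRemainder]

theorem canonRemainder_succ :
    canonRemainder S (j + 1) = canonRemainder S j \ canonAntichain (· < ·) S j := by
  ext x
  simp only [mem_canonRemainder_iff, mem_sdiff, Nat.lt_succ_iff_lt_or_eq, or_imp, forall_and,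
    forall_eq, and_assoc]

theorem canonAntichain_subset_canonRemainder :
    canonAntichain (· < ·) S j ⊆ canonRemainder S j :=
  fun _ hx => (mem_canonAntichain_iff.1 hx).prop

theorem canonRemainder_subset : canonRemainder S j ⊆ S := sdiff_subset

theorem isAntichain_canonAntichain :
    IsAntichain (· ≤ ·) (canonAntichain (· < ·) S j : Set α) := fun _ hx _ hy hne hxy =>
  (mem_canonAntichain_iff.1 hy).not_lt (canonAntichain_subset_canonRemainder hx)
    (lt_of_le_of_ne hxy hne)

theorem exists_lt_of_mem_canonRemainder_succ (hx : x ∈ canonRemainder S (j + 1)) :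
    ∃ y ∈ canonAntichain (· < ·) S j, y < x := by
  rw [canonRemainder_succ, mem_sdiff, mem_canonAntichain_iff, minimal_iff_forall_lt] at hx
  obtain ⟨z, hzx, hz⟩ : ∃ z < x, z ∈ canonRemainder S j := by simpa [hx.1] using hx.2
  obtain ⟨y, hyz, hy⟩ := (canonRemainder S j).exists_le_minimal hz
  exact ⟨y, mem_canonAntichain_iff.2 hy, hyz.trans_lt hzx⟩

theorem exists_ltSeries_of_mem_canonRemainder (hx : x ∈ canonRemainder S j) :
    ∃ p : LTSeries α, p.length = j ∧ p.last = x ∧ ∀ y ∈ p, y ∈ S := by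
  induction j generalizing x with
  | zero =>
    exact ⟨RelSeries.singleton _ x, rfl, rfl, fun y ⟨_, hy⟩ => hy ▸ canonRemainder_subset hx⟩
  | succ j ih =>
    obtain ⟨y, hy, hyx⟩ := exists_lt_of_mem_canonRemainder_succ hx
    obtain ⟨p, hlen, rfl, hp⟩ := ih (canonAntichain_subset_canonRemainder hy)
    refine ⟨p.snoc x hyx, by simp [hlen], p.last_snoc x hyx, fun z hz => ?_⟩
    rcases RelSeries.mem_snoc.1 hz with hz | rfl
    · exact hp z hz
    · exact canonRemainder_subset hx

theorem exists_mem_canonAntichain (hx : x ∈ S) : ∃ j, x ∈ canonAntichain (· < ·) S j := by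
  by_contra! h
  have hmem : ∀ j, x ∈ canonRemainder S j := by
    intro j
    induction j with
    | zero => rwa [canonRemainder_zero]
    | succ j ih => rw [canonRemainder_succ]; exact mem_sdiff.2 ⟨ih, h j⟩
  obtain ⟨p, hlen, -, hp⟩ := exists_ltSeries_of_mem_canonRemainder (hmem S.card)
  exact (hlen ▸ LTSeries.length_lt_card_of_forall_mem p hp).false

theorem lt_card_of_canonAntichain_nonempty {ι : Type*} [Fintype ι] {A : ι → Set α}
    (hA : ∀ i, IsAntichain (· ≤ ·) (A i)) (hS : ∀ x ∈ S, ∃ i, x ∈ A i)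
    (hj : (canonAntichain (· < ·) S j).Nonempty) : j < Fintype.card ι := by
  obtain ⟨x, hx⟩ := hj
  obtain ⟨p, rfl, -, hp⟩ :=
    exists_ltSeries_of_mem_canonRemainder (canonAntichain_subset_canonRemainder hx)
  exact LTSeries.length_lt_card_of_isAntichain hA p fun y hy => hS y (hp y hy)

theorem card_canonAntichain_inter_eq_one {ι : Type*} [Fintype ι] {A : ι → Finset α}
    (hA : ∀ i, IsAntichain (· ≤ ·) (A i : Set α))
    (hAdisj : Pairwise fun i j => Disjoint (A i) (A j)) {C : Finset α}
    (hC : IsChain (· ≤ ·) (C : Set α)) (horth : ∀ i, (A i ∩ C).card = 1)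
    (hj : (canonAntichain (· < ·) (univ.biUnion A) j).Nonempty) :
    (canonAntichain (· < ·) (univ.biUnion A) j ∩ C).card = 1 := by
  set L := canonAntichain (· < ·) (univ.biUnion A)
  set k := Fintype.card ι
  have hS : ∀ x ∈ univ.biUnion A, ∃ i, x ∈ (A i : Set α) := by simp
  have hlt : ∀ m, (L m).Nonempty → m < k := fun m => lt_card_of_canonAntichain_nonempty hA hS
  have hle : ∀ m, (L m ∩ C).card ≤ 1 := fun m => card_le_one_iff_subsingleton.2 <| by
    push_cast
    exact inter_subsingleton_of_isAntichain_of_isChain isAntichain_canonAntichain hC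
  have hsub : C ∩ univ.biUnion A ⊆ (range k).biUnion fun m => L m ∩ C := by
    intro x hx
    obtain ⟨m, hm⟩ := exists_mem_canonAntichain (mem_inter.1 hx).2
    exact mem_biUnion.2 ⟨m, mem_range.2 (hlt m ⟨x, hm⟩), mem_inter.2 ⟨hm, (mem_inter.1 hx).1⟩⟩
  have hsum : ∑ m ∈ range k, (L m ∩ C).card = ∑ m ∈ range k, 1 := by
    refine le_antisymm (sum_le_sum fun m _ => hle m) ?_
    calc ∑ m ∈ range k, 1 = (C ∩ univ.biUnion A).card := by
          simp [k, card_inter_biUnion_of_card_inter_eq_one hAdisj horth]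
      _ ≤ ((range k).biUnion fun m => L m ∩ C).card := card_le_card hsub
      _ ≤ ∑ m ∈ range k, (L m ∩ C).card := card_biUnion_le
  exact (sum_eq_sum_iff_of_le fun m _ => hle m).1 hsum j (mem_range.2 (hlt j hj))

end CanonAntichain

theorem canonical_partition_orthogonal_general {α : Type*} [DecidableEq α]
    [PartialOrder α] (k ℓ : ℕ) (A : Fin k → Finset α) (C : Fin ℓ → Finset α)
    (hA : ∀ i, IsAntichain (· ≤ ·) (A i : Set α))
    (hAdisj : Pairwise fun i j => Disjoint (A i) (A j))
    (hC : ∀ j, IsChain (· ≤ ·) (C j : Set α))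
    (hcover : ∀ x : α, (∃ i, x ∈ A i) ∨ (∃ j, x ∈ C j))
    (horth : ∀ i j, (A i ∩ C j).card = 1) :
    let XA : Finset α := Finset.univ.biUnion A
    let A' : ℕ → Finset α := canonAntichain (· < ·) XA
    (∀ x : α, (∃ i, x ∈ A' i) ∨ (∃ j, x ∈ C j)) ∧
    (∀ i j, (A' i).Nonempty → (A' i ∩ C j).card = 1) := by
  intro XA A'
  refine ⟨fun x => ?_, fun i j hi =>
    card_canonAntichain_inter_eq_one hA hAdisj (hC j) (fun a => horth a j) hi⟩
  rcases hcover x with ⟨i, hi⟩ | hx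
  · exact .inl (exists_mem_canonAntichain (mem_biUnion.2 ⟨i, mem_univ i, hi⟩))
  · exact .inr hx

/-- Let `(A, C)` be an orthogonal pair of a finite poset `P` (every element lies in
some antichain of `A` or some chain of `C`, and each antichain meets each chain in
exactly one element).  If `A'` is the canonical antichain partition of the subposet
induced on the union of the antichains of `A`, then `(A', C)` is again an orthogonal
pair of `P`. -/
theorem canonical_partition_orthogonal {α : Type*} [Fintype α] [DecidableEq α]
    [PartialOrder α] (k ℓ : ℕ) (A : Fin k → Finset α) (C : Fin ℓ → Finset α)
    (hA : ∀ i, IsAntichain (· ≤ ·) (A i : Set α))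
    (hAdisj : Pairwise fun i j => Disjoint (A i) (A j))
    (hC : ∀ j, IsChain (· ≤ ·) (C j : Set α))
    (hCdisj : Pairwise fun i j => Disjoint (C i) (C j))
    (hcover : ∀ x : α, (∃ i, x ∈ A i) ∨ (∃ j, x ∈ C j))
    (horth : ∀ i j, (A i ∩ C j).card = 1) :
    let XA : Finset α := Finset.univ.biUnion A
    let A' : ℕ → Finset α := canonAntichain (· < ·) XA
    (∀ x : α, (∃ i, x ∈ A' i) ∨ (∃ j, x ∈ C j)) ∧
    (∀ i j, (A' i).Nonempty → (A' i ∩ C j).card = 1) :=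
  canonical_partition_orthogonal_general k ℓ A C hA hAdisj hC hcover horth
end

section
/- Let (A, C) be an orthogonal pair of a finite poset P and choose two antichains A_i, A_j from A with i < j. Let B_i = {y ∈ A_i : ∃ x ∈ A_j, x < y} and B_j = {x ∈ A_j : ∃ y ∈ A_i, x < y}. Then A_i' = (A_i \ B_i) ∪ B_j and A_j' = (A_j \ B_j) ∪ B_i are antichains, and replacing A_i, A_j by A_i', A_j' yields a family still orthogonal to C. -/
open Finset

attribute [local instance] Classical.propDecidable

/-- **The uncrossing step.** Let `(A, C)` be an orthogonal pair of a finite poset and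
`A i`, `A j` (with `i < j`) two of the antichains.  With
`B i = {y ∈ A i : ∃ x ∈ A j, x < y}` and `B j = {x ∈ A j : ∃ y ∈ A i, x < y}`,
the sets `A i \ B i ∪ B j` and `A j \ B j ∪ B i` are antichains and replacing
`A i, A j` by them yields a family which is still orthogonal to `C`. -/
theorem uncrossing_step {α : Type*} [Fintype α] [DecidableEq α] [PartialOrder α]
    (k ℓ : ℕ) (A : Fin k → Finset α) (C : Fin ℓ → Finset α)
    (hA : ∀ i, IsAntichain (· ≤ ·) (A i : Set α))
    (hAdisj : Pairwise fun i j => Disjoint (A i) (A j))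
    (hC : ∀ j, IsChain (· ≤ ·) (C j : Set α))
    (hCdisj : Pairwise fun i j => Disjoint (C i) (C j))
    (hcover : ∀ x : α, (∃ i, x ∈ A i) ∨ (∃ j, x ∈ C j))
    (horth : ∀ i j, (A i ∩ C j).card = 1)
    (i j : Fin k) (hij : i < j) :
    let Bi : Finset α := (A i).filter (fun y => ∃ x ∈ A j, x < y)
    let Bj : Finset α := (A j).filter (fun x => ∃ y ∈ A i, x < y)
    let Ai' : Finset α := (A i \ Bi) ∪ Bj
    let Aj' : Finset α := (A j \ Bj) ∪ Bi
    let A' : Fin k → Finset α := Function.update (Function.update A i Ai') j Aj'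
    IsAntichain (· ≤ ·) (Ai' : Set α) ∧ IsAntichain (· ≤ ·) (Aj' : Set α) ∧
    (∀ l, IsAntichain (· ≤ ·) (A' l : Set α)) ∧
    (Pairwise fun l m => Disjoint (A' l) (A' m)) ∧
    (∀ x : α, (∃ l, x ∈ A' l) ∨ (∃ m, x ∈ C m)) ∧
    (∀ l m, (A' l ∩ C m).card = 1) := by
  intro Bi Bj Ai' Aj' A'
  have hne : i ≠ j := hij.ne
  have hdij : Disjoint (A i) (A j) := hAdisj hne
  have hBim : ∀ a : α, a ∈ Bi ↔ a ∈ A i ∧ ∃ x ∈ A j, x < a := fun a => mem_filter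
  have hBjm : ∀ a : α, a ∈ Bj ↔ a ∈ A j ∧ ∃ y ∈ A i, a < y := fun a => mem_filter
  have hAim : ∀ a : α, a ∈ Ai' ↔ (a ∈ A i ∧ a ∉ Bi) ∨ a ∈ Bj := by
    intro a
    show a ∈ (A i \ Bi) ∪ Bj ↔ _
    simp [mem_union, mem_sdiff]
  have hAjm : ∀ a : α, a ∈ Aj' ↔ (a ∈ A j ∧ a ∉ Bj) ∨ a ∈ Bi := by
    intro a
    show a ∈ (A j \ Bj) ∪ Bi ↔ _
    simp [mem_union, mem_sdiff]
  have hAiU : ∀ a : α, a ∈ Ai' → a ∈ A i ∨ a ∈ A j := by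
    intro a ha
    rcases (hAim a).mp ha with ⟨h, _⟩ | h
    · exact Or.inl h
    · exact Or.inr ((hBjm a).mp h).1
  have hAjU : ∀ a : α, a ∈ Aj' → a ∈ A i ∨ a ∈ A j := by
    intro a ha
    rcases (hAjm a).mp ha with ⟨h, _⟩ | h
    · exact Or.inr h
    · exact Or.inl ((hBim a).mp h).1
  have noti : ∀ {a b : α}, a ∈ A i → b ∈ A i → a < b → False :=
    fun ha hb h => hA i (mem_coe.mpr ha) (mem_coe.mpr hb) h.ne h.le
  have notj : ∀ {a b : α}, a ∈ A j → b ∈ A j → a < b → False :=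
    fun ha hb h => hA j (mem_coe.mpr ha) (mem_coe.mpr hb) h.ne h.le
  -- `Ai'` is an antichain
  have anti_i : IsAntichain (· ≤ ·) (Ai' : Set α) := by
    intro a ha b hb hab hle
    have ha' := (hAim a).mp (mem_coe.mp ha)
    have hb' := (hAim b).mp (mem_coe.mp hb)
    have hlt : a < b := lt_of_le_of_ne hle hab
    rcases ha' with ⟨hai, _⟩ | haj
    · rcases hb' with ⟨hbi, _⟩ | hbj
      · exact noti hai hbi hlt
      · obtain ⟨hbAj, y, hyAi, hby⟩ := (hBjm b).mp hbj
        exact noti hai hyAi (hlt.trans hby)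
    · obtain ⟨haAj, _⟩ := (hBjm a).mp haj
      rcases hb' with ⟨hbi, hbnbi⟩ | hbj
      · exact hbnbi ((hBim b).mpr ⟨hbi, a, haAj, hlt⟩)
      · exact notj haAj ((hBjm b).mp hbj).1 hlt
  -- `Aj'` is an antichain
  have anti_j : IsAntichain (· ≤ ·) (Aj' : Set α) := by
    intro a ha b hb hab hle
    have ha' := (hAjm a).mp (mem_coe.mp ha)
    have hb' := (hAjm b).mp (mem_coe.mp hb)
    have hlt : a < b := lt_of_le_of_ne hle hab
    rcases ha' with ⟨haj, hanbj⟩ | hai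
    · rcases hb' with ⟨hbj, _⟩ | hbi
      · exact notj haj hbj hlt
      · exact hanbj ((hBjm a).mpr ⟨haj, b, ((hBim b).mp hbi).1, hlt⟩)
    · obtain ⟨haAi, x, hxAj, hxa⟩ := (hBim a).mp hai
      rcases hb' with ⟨hbj, _⟩ | hbi
      · exact notj hxAj hbj (hxa.trans hlt)
      · exact noti haAi ((hBim b).mp hbi).1 hlt
  -- computing the updated family
  have hA'i : A' i = Ai' := by
    show Function.update (Function.update A i Ai') j Aj' i = Ai'
    rw [Function.update_of_ne hne, Function.update_self]
  have hA'j : A' j = Aj' := by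
    show Function.update (Function.update A i Ai') j Aj' j = Aj'
    rw [Function.update_self]
  have hA'o : ∀ l, l ≠ i → l ≠ j → A' l = A l := by
    intro l h1 h2
    show Function.update (Function.update A i Ai') j Aj' l = A l
    rw [Function.update_of_ne h2, Function.update_of_ne h1]
  -- disjointness facts
  have hdisjIJ : Disjoint Ai' Aj' := by
    rw [disjoint_left]
    intro a hai haj
    rcases (hAim a).mp hai with ⟨h1, h2⟩ | h1
    · rcases (hAjm a).mp haj with ⟨h3, _⟩ | h3
      · exact disjoint_left.mp hdij h1 h3
      · exact h2 h3
    · rcases (hAjm a).mp haj with ⟨_, h4⟩ | h3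
      · exact h4 h1
      · exact disjoint_left.mp hdij ((hBim a).mp h3).1 ((hBjm a).mp h1).1
  have hdAi' : ∀ l, l ≠ i → l ≠ j → Disjoint (A l) Ai' := by
    intro l h1 h2
    rw [disjoint_right]
    intro a ha hal
    rcases hAiU a ha with h | h
    · exact disjoint_left.mp (hAdisj h1) hal h
    · exact disjoint_left.mp (hAdisj h2) hal h
  have hdAj' : ∀ l, l ≠ i → l ≠ j → Disjoint (A l) Aj' := by
    intro l h1 h2
    rw [disjoint_right]
    intro a ha hal
    rcases hAjU a ha with h | h
    · exact disjoint_left.mp (hAdisj h1) hal h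
    · exact disjoint_left.mp (hAdisj h2) hal h
  -- the new family is pairwise disjoint
  have hpw : Pairwise fun l m => Disjoint (A' l) (A' m) := by
    intro l m hlm
    by_cases hl1 : l = i
    · subst hl1
      rw [hA'i]
      by_cases hm2 : m = j
      · subst hm2; rw [hA'j]; exact hdisjIJ
      · rw [hA'o m (Ne.symm hlm) hm2]
        exact (hdAi' m (Ne.symm hlm) hm2).symm
    by_cases hl2 : l = j
    · subst hl2
      rw [hA'j]
      by_cases hm1 : m = i
      · subst hm1; rw [hA'i]; exact hdisjIJ.symm
      · rw [hA'o m hm1 (Ne.symm hlm)]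
        exact (hdAj' m hm1 (Ne.symm hlm)).symm
    · rw [hA'o l hl1 hl2]
      by_cases hm1 : m = i
      · subst hm1; rw [hA'i]; exact hdAi' l hl1 hl2
      by_cases hm2 : m = j
      · subst hm2; rw [hA'j]; exact hdAj' l hl1 hl2
      · rw [hA'o m hm1 hm2]; exact hAdisj hlm
  -- antichains
  have anti_all : ∀ l, IsAntichain (· ≤ ·) (A' l : Set α) := by
    intro l
    by_cases h1 : l = i
    · subst h1; rw [hA'i]; exact anti_i
    by_cases h2 : l = j
    · subst h2; rw [hA'j]; exact anti_j
    · rw [hA'o l h1 h2]; exact hA l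
  -- cover
  have hcov : ∀ x : α, (∃ l, x ∈ A' l) ∨ (∃ m, x ∈ C m) := by
    intro x
    rcases hcover x with ⟨l, hl⟩ | h
    · left
      by_cases hl1 : l = i
      · rw [hl1] at hl
        by_cases hx : x ∈ Bi
        · exact ⟨j, by rw [hA'j]; exact (hAjm x).mpr (Or.inr hx)⟩
        · exact ⟨i, by rw [hA'i]; exact (hAim x).mpr (Or.inl ⟨hl, hx⟩)⟩
      by_cases hl2 : l = j
      · rw [hl2] at hl
        by_cases hx : x ∈ Bj
        · exact ⟨i, by rw [hA'i]; exact (hAim x).mpr (Or.inr hx)⟩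
        · exact ⟨j, by rw [hA'j]; exact (hAjm x).mpr (Or.inl ⟨hl, hx⟩)⟩
      · exact ⟨l, by rw [hA'o l hl1 hl2]; exact hl⟩
    · exact Or.inr h
  -- orthogonality for the two new antichains
  have horth' : ∀ m, (Ai' ∩ C m).card = 1 ∧ (Aj' ∩ C m).card = 1 := by
    intro m
    obtain ⟨y, hy⟩ := card_eq_one.mp (horth i m)
    obtain ⟨x, hx⟩ := card_eq_one.mp (horth j m)
    have hy' : y ∈ A i ∩ C m := by rw [hy]; exact mem_singleton_self y
    have hx' : x ∈ A j ∩ C m := by rw [hx]; exact mem_singleton_self x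
    obtain ⟨hyA, hyC⟩ := mem_inter.mp hy'
    obtain ⟨hxA, hxC⟩ := mem_inter.mp hx'
    have huy : ∀ a, a ∈ A i → a ∈ C m → a = y := fun a h1 h2 =>
      mem_singleton.mp (hy ▸ mem_inter.mpr ⟨h1, h2⟩)
    have hux : ∀ a, a ∈ A j → a ∈ C m → a = x := fun a h1 h2 =>
      mem_singleton.mp (hx ▸ mem_inter.mpr ⟨h1, h2⟩)
    have hxy : x ≠ y := by rintro rfl; exact disjoint_left.mp hdij hyA hxA
    rcases hC m (mem_coe.mpr hxC) (mem_coe.mpr hyC) hxy with hle | hle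
    · -- case x < y : the intersections get swapped
      have hlt : x < y := lt_of_le_of_ne hle hxy
      have hxBj : x ∈ Bj := (hBjm x).mpr ⟨hxA, y, hyA, hlt⟩
      have hyBi : y ∈ Bi := (hBim y).mpr ⟨hyA, x, hxA, hlt⟩
      constructor
      · refine card_eq_one.mpr ⟨x, ?_⟩
        ext a
        simp only [mem_inter, mem_singleton]
        constructor
        · rintro ⟨ha, hc⟩
          rcases (hAim a).mp ha with ⟨h1, h2⟩ | h1
          · have := huy a h1 hc; subst this; exact absurd hyBi h2
          · exact hux a ((hBjm a).mp h1).1 hc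
        · rintro rfl
          exact ⟨(hAim a).mpr (Or.inr hxBj), hxC⟩
      · refine card_eq_one.mpr ⟨y, ?_⟩
        ext a
        simp only [mem_inter, mem_singleton]
        constructor
        · rintro ⟨ha, hc⟩
          rcases (hAjm a).mp ha with ⟨h1, h2⟩ | h1
          · have := hux a h1 hc; subst this; exact absurd hxBj h2
          · exact huy a ((hBim a).mp h1).1 hc
        · rintro rfl
          exact ⟨(hAjm a).mpr (Or.inr hyBi), hyC⟩
    · -- case y < x : the intersections stay
      have hlt : y < x := lt_of_le_of_ne hle (Ne.symm hxy)
      have hynBi : y ∉ Bi := by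
        intro h
        obtain ⟨_, x', hx'A, hx'y⟩ := (hBim y).mp h
        exact notj hx'A hxA (hx'y.trans hlt)
      have hxnBj : x ∉ Bj := by
        intro h
        obtain ⟨_, y', hy'A, hxy'⟩ := (hBjm x).mp h
        exact noti hyA hy'A (hlt.trans hxy')
      constructor
      · refine card_eq_one.mpr ⟨y, ?_⟩
        ext a
        simp only [mem_inter, mem_singleton]
        constructor
        · rintro ⟨ha, hc⟩
          rcases (hAim a).mp ha with ⟨h1, _⟩ | h1
          · exact huy a h1 hc
          · have := hux a ((hBjm a).mp h1).1 hc; subst this; exact absurd h1 hxnBj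
        · rintro rfl
          exact ⟨(hAim a).mpr (Or.inl ⟨hyA, hynBi⟩), hyC⟩
      · refine card_eq_one.mpr ⟨x, ?_⟩
        ext a
        simp only [mem_inter, mem_singleton]
        constructor
        · rintro ⟨ha, hc⟩
          rcases (hAjm a).mp ha with ⟨h1, _⟩ | h1
          · exact hux a h1 hc
          · have := huy a ((hBim a).mp h1).1 hc; subst this; exact absurd h1 hynBi
        · rintro rfl
          exact ⟨(hAjm a).mpr (Or.inl ⟨hxA, hxnBj⟩), hxC⟩
  have horthA' : ∀ l m, (A' l ∩ C m).card = 1 := by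
    intro l m
    by_cases h1 : l = i
    · subst h1; rw [hA'i]; exact (horth' m).1
    by_cases h2 : l = j
    · subst h2; rw [hA'j]; exact (horth' m).2
    · rw [hA'o l h1 h2]; exact horth l m
  exact ⟨anti_i, anti_j, anti_all, hpw, hcov, horthA'⟩
end

section
/- Let (A, C) be an orthogonal pair of a finite poset P with antichains A_1, …, A_k, and fix i. Let B = {y ∈ A_{i+1} : there is no x ∈ A_i with x < y}. Then A_i ∪ B and A_{i+1} \ B are antichains, and the family obtained by this replacement is still orthogonal to C. -/
open Finset

attribute [local instance] Classical.propDecidable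

/-- **The push-down step.** Let `(A, C)` be an orthogonal pair of a finite poset whose
antichain family is uncrossed (if `i < j` then comparable elements `x ∈ A i`, `y ∈ A j`
satisfy `x < y`).  For consecutive antichains `A i`, `A j` (`j = i + 1`), let
`B = {y ∈ A j : no x ∈ A i has x < y}`.  Then `A i ∪ B` and `A j \ B` are antichains
and the family obtained by this replacement is still orthogonal to `C`. -/
theorem push_down_step {α : Type*} [Fintype α] [DecidableEq α] [PartialOrder α]
    (k ℓ : ℕ) (A : Fin k → Finset α) (C : Fin ℓ → Finset α)
    (hA : ∀ i, IsAntichain (· ≤ ·) (A i : Set α))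
    (hAdisj : Pairwise fun i j => Disjoint (A i) (A j))
    (hC : ∀ j, IsChain (· ≤ ·) (C j : Set α))
    (hCdisj : Pairwise fun i j => Disjoint (C i) (C j))
    (hcover : ∀ x : α, (∃ i, x ∈ A i) ∨ (∃ j, x ∈ C j))
    (horth : ∀ i j, (A i ∩ C j).card = 1)
    (huncrossed : ∀ (i j : Fin k), i < j → ∀ x ∈ A i, ∀ y ∈ A j,
      (x < y ∨ y < x) → x < y)
    (i j : Fin k) (hji : (j : ℕ) = (i : ℕ) + 1) :
    let B : Finset α := (A j).filter (fun y => ¬ ∃ x ∈ A i, x < y)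
    let Ai' : Finset α := A i ∪ B
    let Aj' : Finset α := A j \ B
    let A' : Fin k → Finset α := Function.update (Function.update A i Ai') j Aj'
    IsAntichain (· ≤ ·) (Ai' : Set α) ∧ IsAntichain (· ≤ ·) (Aj' : Set α) ∧
    (∀ l, IsAntichain (· ≤ ·) (A' l : Set α)) ∧
    (Pairwise fun l m => Disjoint (A' l) (A' m)) ∧
    (∀ x : α, (∃ l, x ∈ A' l) ∨ (∃ m, x ∈ C m)) ∧
    (∀ l m, (A' l ∩ C m).card = 1) := by
  intro B Ai' Aj' A'
  have hij : i < j := by rw [Fin.lt_def, hji]; omega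
  have hne : i ≠ j := ne_of_lt hij
  have hBsub : B ⊆ A j := filter_subset _ _
  have hA'i : A' i = Ai' := by
    simp only [A', Function.update_of_ne hne, Function.update_self]
  have hA'j : A' j = Aj' := by simp only [A', Function.update_self]
  have hA'o : ∀ l, l ≠ i → l ≠ j → A' l = A l := fun l h1 h2 => by
    simp only [A', Function.update_of_ne h2, Function.update_of_ne h1]
  have hAi' : IsAntichain (· ≤ ·) (Ai' : Set α) := by
    intro x hx y hy hxy hle
    simp only [Ai', coe_union, Set.mem_union, mem_coe] at hx hy
    rcases hx with hx | hx <;> rcases hy with hy | hy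
    · exact hA i hx hy hxy hle
    · rw [mem_filter] at hy
      exact hy.2 ⟨x, hx, lt_of_le_of_ne hle hxy⟩
    · have hlt : x < y := lt_of_le_of_ne hle hxy
      exact absurd (huncrossed i j hij y hy x (hBsub hx) (Or.inr hlt)) hlt.asymm
    · exact hA j (hBsub hx) (hBsub hy) hxy hle
  have hAj' : IsAntichain (· ≤ ·) (Aj' : Set α) :=
    (hA j).subset (Finset.coe_subset.mpr sdiff_subset)
  have hBC : ∀ m, ∀ y ∈ B, y ∉ C m := by
    intro m y hyB hyC
    obtain ⟨a, ha⟩ := card_eq_one.mp (horth i m)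
    have haA : a ∈ A i := (mem_inter.mp (ha ▸ mem_singleton_self a)).1
    have haC : a ∈ C m := (mem_inter.mp (ha ▸ mem_singleton_self a)).2
    have hyA : y ∈ A j := hBsub hyB
    have hay : a ≠ y := by
      rintro rfl; exact (Finset.disjoint_left.mp (hAdisj hne) haA) hyA
    have hcomp : a ≤ y ∨ y ≤ a := hC m haC hyC hay
    have hor : a < y ∨ y < a := by
      rcases hcomp with h | h
      · exact Or.inl (lt_of_le_of_ne h hay)
      · exact Or.inr (lt_of_le_of_ne h hay.symm)
    have : a < y := huncrossed i j hij a haA y hyA hor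
    rw [mem_filter] at hyB
    exact hyB.2 ⟨a, haA, this⟩
  have hAiC : ∀ m, Ai' ∩ C m = A i ∩ C m := by
    intro m; ext x
    simp only [Ai', mem_inter, mem_union]
    constructor
    · rintro ⟨hx | hx, hxc⟩
      · exact ⟨hx, hxc⟩
      · exact absurd hxc (hBC m x hx)
    · rintro ⟨hx, hxc⟩; exact ⟨Or.inl hx, hxc⟩
  have hAjC : ∀ m, Aj' ∩ C m = A j ∩ C m := by
    intro m; ext x
    simp only [Aj', mem_inter, mem_sdiff]
    constructor
    · rintro ⟨⟨h1, _⟩, h2⟩; exact ⟨h1, h2⟩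
    · rintro ⟨h1, h2⟩; exact ⟨⟨h1, fun hB => hBC m x hB h2⟩, h2⟩
  refine ⟨hAi', hAj', ?_, ?_, ?_, ?_⟩
  · intro l
    by_cases h1 : l = j
    · rw [h1, hA'j]; exact hAj'
    by_cases h2 : l = i
    · rw [h2, hA'i]; exact hAi'
    · rw [hA'o l h2 h1]; exact hA l
  · intro l m hlm
    by_cases hl1 : l = j
    · subst hl1
      rw [hA'j]
      by_cases hm : m = i
      · subst hm; rw [hA'i]
        refine disjoint_union_right.mpr ⟨?_, ?_⟩
        · exact ((hAdisj hne).symm).mono_left sdiff_subset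
        · exact disjoint_sdiff_self_left
      · rw [hA'o m hm (Ne.symm hlm)]
        exact (hAdisj hlm).mono_left sdiff_subset
    by_cases hl2 : l = i
    · subst hl2
      rw [hA'i]
      by_cases hm : m = j
      · subst hm; rw [hA'j]
        refine disjoint_union_left.mpr ⟨?_, ?_⟩
        · exact (hAdisj hne).mono_right sdiff_subset
        · exact disjoint_sdiff_self_right
      · rw [hA'o m (Ne.symm hlm) hm]
        refine disjoint_union_left.mpr ⟨hAdisj hlm, ?_⟩
        exact (hAdisj (show j ≠ m from fun h => hm h.symm)).mono_left hBsub
    · rw [hA'o l hl2 hl1]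
      by_cases hm1 : m = i
      · subst hm1; rw [hA'i]
        refine disjoint_union_right.mpr ⟨hAdisj hlm, ?_⟩
        exact (hAdisj hl1).mono_right hBsub
      by_cases hm2 : m = j
      · subst hm2; rw [hA'j]
        exact (hAdisj hlm).mono_right sdiff_subset
      · rw [hA'o m hm1 hm2]; exact hAdisj hlm
  · intro x
    rcases hcover x with ⟨l, hl⟩ | h
    · left
      by_cases h1 : l = i
      · rw [h1] at hl; exact ⟨i, by rw [hA'i]; exact mem_union_left _ hl⟩
      by_cases h2 : l = j
      · rw [h2] at hl
        by_cases hB : x ∈ B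
        · exact ⟨i, by rw [hA'i]; exact mem_union_right _ hB⟩
        · exact ⟨j, by rw [hA'j]; exact mem_sdiff.mpr ⟨hl, hB⟩⟩
      · exact ⟨l, by rw [hA'o l h1 h2]; exact hl⟩
    · exact Or.inr h
  · intro l m
    by_cases h1 : l = j
    · rw [h1, hA'j, hAjC m]; exact horth j m
    by_cases h2 : l = i
    · rw [h2, hA'i, hAiC m]; exact horth i m
    · rw [hA'o l h2 h1]; exact horth l m
end

section
/- Let P be a finite lattice of dimension at most 2 with realizer L_1, L_2, and place each element x at the point (x_1, x_2), where x_i is the height of x in L_i. If two cover edges (x, y) and (x', y') of P cross as straight segments in this drawing, then x ≤ y', x' ≤ y, and x, x' fail to have a unique least upper bound, a contradiction; hence the straight-line drawing is planar. -/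
open Finset

attribute [local instance] Classical.propDecidable

/-! Counting predecessors in `L₁` and `L₂` turns the realizer into an order embedding of `X` into
`ℝ × ℝ` with the product order. For any order embedding `p` of a lattice into an ordered vector
space, a common point `z` of the segments of two covers `x ⋖ y` and `x' ⋖ y'` gives
`p x ≤ z ≤ p y'` and `p x' ≤ z ≤ p y`, so `x ≤ y'` and `x' ≤ y`; then `x ⊔ x'` is an endpoint of
both covers. Two segments leaving a common endpoint and meeting again lie on one ray, which would
make their far endpoints comparable, impossible for two distinct covers at the same element. -/

theorem Wbtw.wbtw_or_wbtw_of_ne {R V P : Type*} [Field R] [LinearOrder R] [IsStrictOrderedRing R]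
    [AddCommGroup V] [Module R V] [AddTorsor V P] {x y z z' : P}
    (h : Wbtw R x y z) (h' : Wbtw R x y z') (hy : y ≠ x) :
    Wbtw R x z z' ∨ Wbtw R x z' z :=
  wbtw_total_of_sameRay_vsub_left <| h.sameRay_vsub_left.symm.trans h'.sameRay_vsub_left
    fun h0 => absurd (vsub_eq_zero_iff_eq.1 h0) hy

theorem card_filter_le_card_filter_iff {X : Type*} [Fintype X] (r : X → X → Prop)
    [IsLinearOrder X r] {a b : X} :
    #{z | r z a} ≤ #{z | r z b} ↔ r a b := by
  refine ⟨fun hcard => ?_, fun hab => card_le_card fun z hz => ?_⟩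
  · by_contra hab
    have hsub : ({z | r z b} : Finset X) ⊂ ({z | r z a} : Finset X) := by
      refine (ssubset_iff_of_subset fun z hz => ?_).2 ⟨a, ?_, ?_⟩
      · simp only [mem_filter, mem_univ, true_and] at hz ⊢
        exact _root_.trans hz ((total_of r a b).resolve_left hab)
      · simpa using refl_of r a
      · simpa using hab
    exact hcard.not_gt (card_lt_card hsub)
  · simp only [mem_filter, mem_univ, true_and] at hz ⊢
    exact _root_.trans hz hab

theorem CovBy.eq_or_eq_or_eq_or_eq_of_le_of_le {X : Type*} [Lattice X] {x y x' y' : X}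
    (h : x ⋖ y) (h' : x' ⋖ y') (hxy' : x ≤ y') (hx'y : x' ≤ y) :
    x = x' ∨ x = y' ∨ y = x' ∨ y = y' := by
  rcases h.eq_or_eq le_sup_left (sup_le h.le hx'y) with hx | hy <;>
    rcases h'.eq_or_eq le_sup_right (sup_le hxy' h'.le) with hx' | hy'
  exacts [.inl (hx.symm.trans hx'), .inr (.inl (hx.symm.trans hy')),
    .inr (.inr (.inl (hy.symm.trans hx'))), .inr (.inr (.inr (hy.symm.trans hy')))]

section CoverDrawing

variable {𝕜 E : Type*} [Field 𝕜] [LinearOrder 𝕜] [IsStrictOrderedRing 𝕜]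
  [AddCommGroup E] [PartialOrder E] [IsOrderedAddMonoid E] [Module 𝕜 E] [PosSMulMono 𝕜 E]

section PartialOrder

variable {X : Type*} [PartialOrder X] (p : X ↪o E) {x y x' y' : X}

theorem OrderEmbedding.mem_Icc_of_wbtw {a c : X} (h : a ≤ c) {z : E}
    (hz : Wbtw 𝕜 (p a) z (p c)) : z ∈ Set.Icc (p a) (p c) :=
  segment_subset_Icc (p.monotone h) (mem_segment_iff_wbtw.2 hz)

theorem OrderEmbedding.eq_of_covBy_of_wbtw_left (h : x ⋖ y) (h' : x ⋖ y')
    (hw : Wbtw 𝕜 (p x) (p y) (p y')) : y = y' :=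
  (h'.eq_or_eq h.le (p.le_iff_le.1 (p.mem_Icc_of_wbtw h'.le hw).2)).resolve_left h.ne'

theorem OrderEmbedding.eq_of_covBy_of_wbtw_right (h : x ⋖ y) (h' : x' ⋖ y)
    (hw : Wbtw 𝕜 (p y) (p x) (p x')) : x = x' :=
  (h'.eq_or_eq (p.le_iff_le.1 (p.mem_Icc_of_wbtw h'.le hw.symm).1) h.le).resolve_right h.ne

theorem OrderEmbedding.eq_of_covBy_of_wbtw_of_wbtw_left (h : x ⋖ y) (h' : x ⋖ y') (hne : y ≠ y')
    {z : E} (hz : Wbtw 𝕜 (p x) z (p y)) (hz' : Wbtw 𝕜 (p x) z (p y')) : z = p x := by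
  by_contra hzx
  rcases hz.wbtw_or_wbtw_of_ne hz' hzx with hw | hw
  exacts [hne (p.eq_of_covBy_of_wbtw_left h h' hw), hne (p.eq_of_covBy_of_wbtw_left h' h hw).symm]

theorem OrderEmbedding.eq_of_covBy_of_wbtw_of_wbtw_right (h : x ⋖ y) (h' : x' ⋖ y) (hne : x ≠ x')
    {z : E} (hz : Wbtw 𝕜 (p y) z (p x)) (hz' : Wbtw 𝕜 (p y) z (p x')) : z = p y := by
  by_contra hzy
  rcases hz.wbtw_or_wbtw_of_ne hz' hzy with hw | hw
  exacts [hne (p.eq_of_covBy_of_wbtw_right h h' hw), hne (p.eq_of_covBy_of_wbtw_right h' h hw).symm]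

end PartialOrder

theorem OrderEmbedding.segment_inter_segment_subset_of_covBy {X : Type*} [Lattice X] (p : X ↪o E)
    {x y x' y' : X} (h : x ⋖ y) (h' : x' ⋖ y') (hne : (x, y) ≠ (x', y')) :
    segment 𝕜 (p x) (p y) ∩ segment 𝕜 (p x') (p y') ⊆ {p x, p y} ∩ {p x', p y'} := by
  rintro z ⟨hz, hz'⟩
  rw [mem_segment_iff_wbtw] at hz hz'
  have hI := p.mem_Icc_of_wbtw h.le hz
  have hI' := p.mem_Icc_of_wbtw h'.le hz'
  rcases h.eq_or_eq_or_eq_or_eq_of_le_of_le h'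
    (p.le_iff_le.1 (hI.1.trans hI'.2)) (p.le_iff_le.1 (hI'.1.trans hI.2)) with rfl | rfl | rfl | rfl
  · obtain rfl :=
      p.eq_of_covBy_of_wbtw_of_wbtw_left h h' (fun e => hne (congrArg (Prod.mk x) e)) hz hz'
    simp
  · obtain rfl := le_antisymm hI'.2 hI.1
    simp
  · obtain rfl := le_antisymm hI.2 hI'.1
    simp
  · obtain rfl := p.eq_of_covBy_of_wbtw_of_wbtw_right h h'
      (fun e => hne (congrArg (Prod.mk · y) e)) hz.symm hz'.symm
    simp

end CoverDrawing

/-- Let `P` be a finite lattice of dimension at most 2 with realizer `L₁, L₂`, and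
place each element `x` at the grid point `(x₁, x₂)` where `xᵢ` is the height of `x`
in `Lᵢ`.  Joining covers by straight segments yields a planar drawing: two straight
cover edges can meet only in common endpoints (a genuine crossing of cover edges
`(x,y)` and `(x',y')` would give `x ≤ y'` and `x' ≤ y`, so `x` and `x'` would have
no unique least upper bound, contradicting the lattice property). -/
theorem lattice_grid_drawing_planar {X : Type*} [Lattice X] [Fintype X]
    (r₁ r₂ : X → X → Prop) (h₁ : IsLinearOrder X r₁) (h₂ : IsLinearOrder X r₂)
    (hreal : ∀ a b : X, a ≤ b ↔ (r₁ a b ∧ r₂ a b)) :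
    let p : X → ℝ × ℝ := fun x =>
      (((Finset.univ.filter (fun z => r₁ z x)).card : ℝ),
       ((Finset.univ.filter (fun z => r₂ z x)).card : ℝ))
    ∀ x y x' y' : X, x ⋖ y → x' ⋖ y' → (x, y) ≠ (x', y') →
      ∀ z : ℝ × ℝ, z ∈ segment ℝ (p x) (p y) → z ∈ segment ℝ (p x') (p y') →
        z ∈ ({p x, p y} : Set (ℝ × ℝ)) ∩ ({p x', p y'} : Set (ℝ × ℝ)) := by
  intro p x y x' y' h h' hne z hz hz'
  have hp : ∀ a b, p a ≤ p b ↔ a ≤ b := fun a b => by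
    simp only [p, Prod.mk_le_mk, Nat.cast_le, card_filter_le_card_filter_iff, hreal]
  exact (OrderEmbedding.ofMapLEIff p hp).segment_inter_segment_subset_of_covBy h h' hne ⟨hz, hz'⟩
end

section
/- A poset has dimension at most 2 if and only if its incomparability graph is a comparability graph. -/
lemma aux_linear {X : Type*} [PartialOrder X] (s : X → X → Prop)
    (htr : Transitive s) (hasym : ∀ a b : X, s a b → ¬ s b a)
    (hiff : ∀ a b : X, (a ≠ b ∧ ¬ a ≤ b ∧ ¬ b ≤ a) ↔ (s a b ∨ s b a)) :
    IsLinearOrder X (fun a b => a ≤ b ∨ s a b) := by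
  have hs : ∀ a b : X, s a b → a ≠ b ∧ ¬ a ≤ b ∧ ¬ b ≤ a :=
    fun a b h => (hiff a b).2 (Or.inl h)
  refine { refl := fun a => Or.inl le_rfl, trans := ?_, antisymm := ?_, total := ?_ }
  · -- trans
    intro a b c hab hbc
    rcases hab with hab | hab <;> rcases hbc with hbc | hbc
    · exact Or.inl (hab.trans hbc)
    · -- a ≤ b, s b c
      by_cases hac : a ≤ c
      · exact Or.inl hac
      by_cases hsac : s a c
      · exact Or.inr hsac
      exfalso
      obtain ⟨hbc', hnbc, hncb⟩ := hs _ _ hbc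
      by_cases hca : c ≤ a
      · exact hncb (hca.trans hab)
      have hne : a ≠ c := fun h => hac (h ▸ le_rfl)
      rcases (hiff a c).1 ⟨hne, hac, hca⟩ with h | h
      · exact hsac h
      · exact (hs _ _ (htr hbc h)).2.2 hab
    · -- s a b, b ≤ c
      by_cases hac : a ≤ c
      · exact Or.inl hac
      by_cases hsac : s a c
      · exact Or.inr hsac
      exfalso
      obtain ⟨hab', hnab, hnba⟩ := hs _ _ hab
      by_cases hca : c ≤ a
      · exact hnba (hbc.trans hca)
      have hne : a ≠ c := fun h => hac (h ▸ le_rfl)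
      rcases (hiff a c).1 ⟨hne, hac, hca⟩ with h | h
      · exact hsac h
      · exact (hs _ _ (htr h hab)).2.2 hbc
    · exact Or.inr (htr hab hbc)
  · -- antisymm
    intro a b hab hba
    rcases hab with hab | hab <;> rcases hba with hba | hba
    · exact le_antisymm hab hba
    · exact absurd hab (hs _ _ hba).2.2
    · exact absurd hba (hs _ _ hab).2.2
    · exact absurd hba (hasym _ _ hab)
  · -- total
    intro a b
    by_cases h1 : a ≤ b
    · exact Or.inl (Or.inl h1)
    by_cases h2 : b ≤ a
    · exact Or.inr (Or.inl h2)
    have hne : a ≠ b := fun h => h1 (h ▸ le_rfl)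
    rcases (hiff a b).1 ⟨hne, h1, h2⟩ with h | h
    · exact Or.inl (Or.inr h)
    · exact Or.inr (Or.inr h)

/-- A finite poset has order dimension at most 2 (its order is the intersection of two
linear extensions) if and only if its incomparability graph is a comparability graph,
i.e. the incomparability relation admits a transitive orientation. -/
theorem dim_le_two_iff_incomparability_comparability {X : Type*} [Fintype X]
    [PartialOrder X] :
    (∃ r₁ r₂ : X → X → Prop, IsLinearOrder X r₁ ∧ IsLinearOrder X r₂ ∧
      ∀ a b : X, a ≤ b ↔ (r₁ a b ∧ r₂ a b)) ↔
    (∃ s : X → X → Prop, Transitive s ∧ (∀ a b : X, s a b → ¬ s b a) ∧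
      ∀ a b : X, (a ≠ b ∧ ¬ a ≤ b ∧ ¬ b ≤ a) ↔ (s a b ∨ s b a)) := by
  constructor
  · rintro ⟨r₁, r₂, h₁, h₂, hle⟩
    refine ⟨fun a b => r₁ a b ∧ ¬ r₂ a b, ?_, ?_, ?_⟩
    · rintro a b c ⟨hab, hnab⟩ ⟨hbc, hnbc⟩
      refine ⟨h₁.trans _ _ _ hab hbc, fun hac => ?_⟩
      rcases h₂.total c b with h | h
      · exact hnab (h₂.trans _ _ _ hac h)
      · exact hnbc h
    · rintro a b ⟨hab, hnab⟩ ⟨hba, _⟩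
      exact hnab (h₁.antisymm _ _ hab hba ▸ h₂.refl a)
    · intro a b
      constructor
      · rintro ⟨hne, hab, hba⟩
        rcases h₁.total a b with h | h
        · refine Or.inl ⟨h, fun h2 => hab ((hle a b).2 ⟨h, h2⟩)⟩
        · refine Or.inr ⟨h, fun h2 => hba ((hle b a).2 ⟨h, h2⟩)⟩
      · have key : ∀ a b : X, (r₁ a b ∧ ¬ r₂ a b) → a ≠ b ∧ ¬ a ≤ b ∧ ¬ b ≤ a := by
          rintro a b ⟨hab, hnab⟩
          have hne : a ≠ b := fun h => hnab (h ▸ h₂.refl a)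
          refine ⟨hne, fun h => hnab ((hle a b).1 h).2, fun h => ?_⟩
          exact hne (h₁.antisymm _ _ hab ((hle b a).1 h).1)
        rintro (h | h)
        · exact key a b h
        · obtain ⟨h1, h2, h3⟩ := key b a h
          exact ⟨h1.symm, h3, h2⟩
  · rintro ⟨s, htr, hasym, hiff⟩
    refine ⟨fun a b => a ≤ b ∨ s a b, fun a b => a ≤ b ∨ s b a,
      aux_linear s htr hasym hiff, ?_, ?_⟩
    · have : Transitive (fun a b => s b a) := fun a b c h1 h2 => htr h2 h1
      refine aux_linear _ this (fun a b h => hasym b a h) fun a b => ?_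
      rw [hiff a b, or_comm]
    · intro a b
      constructor
      · intro h
        exact ⟨Or.inl h, Or.inl h⟩
      · rintro ⟨h1 | h1, h2 | h2⟩
        · exact h1
        · exact h1
        · exact h2
        · exact absurd h2 (hasym a b h1)
end

section
/- In a bipolar orientation of a planar graph with source s and sink t on the outer face, every face f has exactly two special vertices s_f and t_f such that the boundary of f consists of two non-empty directed paths from s_f to t_f. -/
attribute [local instance] Classical.propDecidable

/-- The number of cycles (orbits) of a permutation `σ` of a finite type; when `σ` is
the face-tracing permutation of a combinatorial map, this is the number of faces. -/
noncomputable def numOrbits {D : Type*} [Fintype D] (σ : Equiv.Perm D) : ℕ :=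
  Fintype.card (Quotient (Setoid.mk σ.SameCycle
    ⟨fun _ => Equiv.Perm.SameCycle.refl σ _, Equiv.Perm.SameCycle.symm,
      Equiv.Perm.SameCycle.trans⟩))

/-!
Count corners. The darts `ρ⁻¹ e` and `e` are consecutive around the vertex `e.1.1`, and the
corner between them lies on the face of `e`, whose previous dart is `φ⁻¹ e = rev (ρ⁻¹ e)`. Call
the corner a source corner if both darts leave the vertex, a sink corner if both enter it, and a
switch if `e` leaves and `ρ⁻¹ e` enters. Acyclicity gives every face at least one source and one
sink corner, and every vertex other than `s` and `t` has both in- and out-edges, hence a switch.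
The `E` forward darts split into source corners and switches, so `E ≥ F + (V - 2) = E` by Euler's
formula: each face has exactly one source corner. Switches with `ρ⁻¹ e` leaving are as many as
those with `e` leaving, so the same count applies to the `E` backward darts and sink corners.
-/

open Finset Function

lemma exists_not_iterate_and_iterate_succ {α : Type*} {f : α → α} {P : α → Prop} {x : α} {n : ℕ}
    (hx : ¬P x) (hn : P (f^[n] x)) : ∃ k, ¬P (f^[k] x) ∧ P (f^[k + 1] x) := by
  by_contra! h
  exact (Nat.rec hx h n : ¬P (f^[n] x)) hn

namespace Equiv.Perm

variable {α : Type*}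

lemma card_filter_and_not_apply_eq [Fintype α] (σ : Perm α) (P : α → Prop) [DecidablePred P] :
    #{a | P a ∧ ¬P (σ a)} = #{a | ¬P a ∧ P (σ a)} := by
  have hσ : #{a | P (σ a)} = #{a | P a} := card_equiv σ (by simp)
  have h₁ := card_filter_add_card_filter_not (s := {a | P a}) (fun a => P (σ a))
  have h₂ := card_filter_add_card_filter_not (s := {a | P (σ a)}) P
  simp only [filter_filter, and_comm (a := P (σ _))] at h₁ h₂
  omega

lemma sameCycle_iterate_right (σ : Perm α) (x : α) (n : ℕ) : σ.SameCycle x (σ^[n] x) :=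
  sameCycle_pow_right.2 (SameCycle.refl σ x)

lemma SameCycle.exists_and_not_inv_apply [Finite α] {σ : Perm α} {P : α → Prop} {x y : α}
    (hxy : σ.SameCycle x y) (hx : ¬P x) (hy : P y) :
    ∃ z, σ.SameCycle x z ∧ P z ∧ ¬P (σ⁻¹ z) := by
  obtain ⟨n, rfl⟩ := hxy.exists_nat_pow_eq
  rw [← iterate_eq_pow] at hy
  obtain ⟨k, hk, hk₁⟩ := exists_not_iterate_and_iterate_succ hx hy
  refine ⟨σ^[k + 1] x, sameCycle_iterate_right σ x (k + 1), hk₁, ?_⟩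
  rwa [iterate_succ_apply', coe_inv, symm_apply_apply]

lemma minimalPeriod_pos [Finite α] (σ : Perm α) (x : α) : 0 < minimalPeriod σ x :=
  IsPeriodicPt.minimalPeriod_pos (orderOf_pos σ) <| by
    rw [IsPeriodicPt, IsFixedPt, iterate_eq_pow, pow_orderOf_eq_one, one_apply]

lemma iterate_add_pred_mod_minimalPeriod [Finite α] (σ : Perm α) (x : α) (i : ℕ) :
    σ^[(i + (minimalPeriod σ x - 1)) % minimalPeriod σ x] x = σ⁻¹ (σ^[i] x) := by
  have hpos := minimalPeriod_pos σ x
  rw [iterate_mod_minimalPeriod_eq, eq_inv_iff_eq, ← iterate_succ_apply' (⇑σ),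
    show (i + (minimalPeriod σ x - 1)).succ = i + minimalPeriod σ x by omega,
    iterate_add_minimalPeriod_eq]

lemma existsUnique_apply_iterate_lt_minimalPeriod [Finite α] (σ : Perm α) {Q : α → Prop}
    {β : Type*} (g : α → β) {x : α} (h : ∃! y, σ.SameCycle x y ∧ Q y) :
    ∃! b, ∃ i < minimalPeriod σ x, g (σ^[i] x) = b ∧ Q (σ^[i] x) := by
  obtain ⟨y, ⟨hxy, hy⟩, huniq⟩ := h
  obtain ⟨n, rfl⟩ := hxy.exists_nat_pow_eq
  refine ⟨g ((σ ^ n) x), ⟨n % minimalPeriod σ x, Nat.mod_lt _ (minimalPeriod_pos σ x), ?_⟩, ?_⟩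
  · rw [iterate_mod_minimalPeriod_eq, iterate_eq_pow]
    exact ⟨rfl, hy⟩
  · rintro b ⟨i, -, rfl, hi⟩
    rw [huniq (σ^[i] x) ⟨sameCycle_iterate_right σ x i, hi⟩]

lemma transGen_of_forall_sameCycle [Finite α] {β : Type*} {σ : Perm α} {R : β → β → Prop}
    (g : α → β) {x : α} (h : ∀ y, σ.SameCycle x y → R (g y) (g (σ y))) :
    Relation.TransGen R (g x) (g x) := by
  have hpath : ∀ k, Relation.TransGen R (g x) (g (σ^[k + 1] x)) := by
    intro k
    induction k with
    | zero => exact .single (h x (SameCycle.refl _ _))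
    | succ k ih =>
      rw [iterate_succ_apply']
      exact ih.tail (h _ (sameCycle_iterate_right σ x (k + 1)))
  simpa only [Nat.sub_add_cancel (minimalPeriod_pos σ x), iterate_minimalPeriod]
    using hpath (minimalPeriod σ x - 1)

lemma surjective_mk_sameCycle_of_forall_exists (σ : Perm α) {Q : α → Prop}
    (hQ : ∀ x, ∃ y, σ.SameCycle x y ∧ Q y) :
    Surjective fun y : {y // Q y} => (Quotient.mk (SameCycle.setoid σ) y.1) :=
  fun c => c.inductionOn fun x =>
    let ⟨y, hxy, hy⟩ := hQ x
    ⟨⟨y, hy⟩, Quotient.sound hxy.symm⟩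

variable [Fintype α] (σ : Perm α) {Q : α → Prop} [DecidablePred Q]

lemma numOrbits_le_card_filter (hQ : ∀ x, ∃ y, σ.SameCycle x y ∧ Q y) :
    numOrbits σ ≤ #{y | Q y} := by
  rw [← Fintype.card_subtype]
  exact Fintype.card_le_of_surjective _ (surjective_mk_sameCycle_of_forall_exists σ hQ)

lemma existsUnique_sameCycle_of_card_filter_eq_numOrbits (hQ : ∀ x, ∃ y, σ.SameCycle x y ∧ Q y)
    (hcard : #{y | Q y} = numOrbits σ) (x : α) : ∃! y, σ.SameCycle x y ∧ Q y := by
  have hinj := ((Fintype.bijective_iff_surjective_and_card _).2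
    ⟨surjective_mk_sameCycle_of_forall_exists σ hQ, (Fintype.card_subtype Q).trans hcard⟩).1
  obtain ⟨y, hxy, hy⟩ := hQ x
  refine ⟨y, ⟨hxy, hy⟩, fun z ⟨hxz, hz⟩ => congrArg Subtype.val (@hinj ⟨z, hz⟩ ⟨y, hy⟩ ?_)⟩
  exact Quotient.sound (hxz.symm.trans hxy)

end Equiv.Perm

section BipolarOrientation

open Equiv

variable {V : Type*} {D : V → V → Prop}

abbrev Dart (D : V → V → Prop) : Type _ := {p : V × V // D p.1 p.2 ∨ D p.2 p.1}

def IsForward (e : Dart D) : Prop := D e.1.1 e.1.2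

variable (ρ rev φ : Perm (Dart D))

lemma isForward_rev (hasym : ∀ u v, D u v → ¬ D v u) (hrev : ∀ d, (rev d).1 = (d.1.2, d.1.1))
    (e : Dart D) : IsForward (rev e) ↔ ¬IsForward e := by
  rw [IsForward, hrev]
  exact ⟨hasym _ _, e.2.resolve_left⟩

lemma isForward_face_inv (hasym : ∀ u v, D u v → ¬ D v u)
    (hrev : ∀ d, (rev d).1 = (d.1.2, d.1.1)) (hφ : ∀ d, φ d = ρ (rev d)) (e : Dart D) :
    IsForward (φ⁻¹ e) ↔ ¬IsForward (ρ⁻¹ e) := by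
  have hrev_rev : ∀ d, rev (rev d) = d := fun d => Subtype.ext (by rw [hrev, hrev])
  have hface : φ⁻¹ e = rev (ρ⁻¹ e) := by
    rw [Perm.inv_eq_iff_eq, hφ, hrev_rev, Perm.coe_inv, apply_symm_apply]
  rw [hface, isForward_rev rev hasym hrev]

lemma tail_face_apply (hρ_tail : ∀ d, (ρ d).1.1 = d.1.1) (hrev : ∀ d, (rev d).1 = (d.1.2, d.1.1))
    (hφ : ∀ d, φ d = ρ (rev d)) (e : Dart D) : (φ e).1.1 = e.1.2 := by
  rw [hφ, hρ_tail, hrev]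

section Faces

variable [Finite V]

lemma exists_sameCycle_isForward (hφ_tail : ∀ e, (φ e).1.1 = e.1.2)
    (hacyclic : ∀ v : V, ¬ Relation.TransGen D v v) (x : Dart D) :
    ∃ y, φ.SameCycle x y ∧ IsForward y := by
  by_contra! h
  refine hacyclic x.1.1 (Relation.transGen_swap.1
    (φ.transGen_of_forall_sameCycle (R := swap D) (fun e => e.1.1) (x := x) fun y hy => ?_))
  rw [hφ_tail]
  exact y.2.resolve_left (h y hy)

lemma exists_sameCycle_not_isForward (hφ_tail : ∀ e, (φ e).1.1 = e.1.2)
    (hacyclic : ∀ v : V, ¬ Relation.TransGen D v v) (x : Dart D) :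
    ∃ y, φ.SameCycle x y ∧ ¬IsForward y := by
  by_contra! h
  refine hacyclic x.1.1 (φ.transGen_of_forall_sameCycle (fun e => e.1.1) (x := x) fun y hy => ?_)
  rw [hφ_tail]
  exact h y hy

lemma exists_sameCycle_sourceCorner (hφ_tail : ∀ e, (φ e).1.1 = e.1.2)
    (hacyclic : ∀ v : V, ¬ Relation.TransGen D v v) (x : Dart D) :
    ∃ y, φ.SameCycle x y ∧ IsForward y ∧ ¬IsForward (φ⁻¹ y) := by
  obtain ⟨b, hxb, hb⟩ := exists_sameCycle_not_isForward φ hφ_tail hacyclic x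
  obtain ⟨f, hxf, hf⟩ := exists_sameCycle_isForward φ hφ_tail hacyclic x
  obtain ⟨y, hby, hy⟩ := (hxb.symm.trans hxf).exists_and_not_inv_apply hb hf
  exact ⟨y, hxb.trans hby, hy⟩

lemma exists_sameCycle_sinkCorner (hφ_tail : ∀ e, (φ e).1.1 = e.1.2)
    (hacyclic : ∀ v : V, ¬ Relation.TransGen D v v) (x : Dart D) :
    ∃ y, φ.SameCycle x y ∧ ¬IsForward y ∧ IsForward (φ⁻¹ y) := by
  obtain ⟨b, hxb, hb⟩ := exists_sameCycle_not_isForward φ hφ_tail hacyclic x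
  obtain ⟨f, hxf, hf⟩ := exists_sameCycle_isForward φ hφ_tail hacyclic x
  obtain ⟨y, hfy, hy, hy'⟩ :=
    (hxf.symm.trans hxb).exists_and_not_inv_apply (P := (¬IsForward ·)) (not_not.2 hf) hb
  exact ⟨y, hxf.trans hfy, hy, not_not.1 hy'⟩

end Faces

lemma exists_switch_at (hasym : ∀ u v, D u v → ¬ D v u) (hρ_tail : ∀ d, (ρ d).1.1 = d.1.1)
    (hρ_cyclic : ∀ d d' : Dart D, d.1.1 = d'.1.1 → ∃ n : ℕ, (⇑ρ)^[n] d = d')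
    {u v w : V} (hin : D u v) (hout : D v w) :
    ∃ e : Dart D, e.1.1 = v ∧ IsForward e ∧ ¬IsForward (ρ⁻¹ e) := by
  let ein : Dart D := ⟨(v, u), Or.inr hin⟩
  obtain ⟨n, hn⟩ := hρ_cyclic ein ⟨(v, w), Or.inl hout⟩ rfl
  obtain ⟨k, hk, hk₁⟩ := exists_not_iterate_and_iterate_succ (f := ρ) (P := IsForward)
    (x := ein) (hasym u v hin) (by rw [hn]; exact hout)
  refine ⟨ρ^[k + 1] ein, congrFun (iterate_invariant (g := fun e : Dart D => e.1.1)
    (funext hρ_tail) _) ein, hk₁, ?_⟩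
  rwa [iterate_succ_apply', Perm.coe_inv, symm_apply_apply]

lemma card_le_card_switches_add_two [Fintype V] (hasym : ∀ u v, D u v → ¬ D v u)
    (hρ_tail : ∀ d, (ρ d).1.1 = d.1.1)
    (hρ_cyclic : ∀ d d' : Dart D, d.1.1 = d'.1.1 → ∃ n : ℕ, (⇑ρ)^[n] d = d') (s t : V)
    (hsource : ∀ v, (∀ u, ¬ D u v) → v = s) (hsink : ∀ v, (∀ u, ¬ D v u) → v = t) :
    Fintype.card V ≤ #{e : Dart D | IsForward e ∧ ¬IsForward (ρ⁻¹ e)} + 2 := by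
  set switches : Finset (Dart D) := {e | IsForward e ∧ ¬IsForward (ρ⁻¹ e)}
  have hcover : univ ⊆ switches.image (fun e => e.1.1) ∪ {s, t} := by
    intro v _
    by_cases hs : v = s
    · simp [hs]
    by_cases ht : v = t
    · simp [ht]
    obtain ⟨u, hu⟩ : ∃ u, D u v := by
      by_contra! h
      exact hs (hsource v h)
    obtain ⟨w, hw⟩ : ∃ w, D v w := by
      by_contra! h
      exact ht (hsink v h)
    obtain ⟨e, rfl, he⟩ := exists_switch_at ρ hasym hρ_tail hρ_cyclic hu hw
    exact mem_union_left _ (mem_image_of_mem _ (by simpa [switches] using he))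
  calc Fintype.card V = #(univ : Finset V) := card_univ.symm
    _ ≤ #(switches.image (fun e => e.1.1) ∪ {s, t}) := card_le_card hcover
    _ ≤ #(switches.image (fun e => e.1.1)) + #({s, t} : Finset V) := card_union_le _ _
    _ ≤ #switches + 2 := add_le_add card_image_le card_le_two

theorem card_sourceCorners_eq_numOrbits_and_card_sinkCorners_eq_numOrbits [Fintype V]
    (hasym : ∀ u v, D u v → ¬ D v u) (hρ_tail : ∀ d, (ρ d).1.1 = d.1.1)
    (hρ_cyclic : ∀ d d' : Dart D, d.1.1 = d'.1.1 → ∃ n : ℕ, (⇑ρ)^[n] d = d')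
    (hrev : ∀ d, (rev d).1 = (d.1.2, d.1.1)) (hφ : ∀ d, φ d = ρ (rev d))
    (heuler : (Fintype.card V : ℤ) - Fintype.card (Dart D) / 2 + numOrbits φ = 2)
    (hacyclic : ∀ v : V, ¬ Relation.TransGen D v v) (s t : V)
    (hsource : ∀ v, (∀ u, ¬ D u v) → v = s) (hsink : ∀ v, (∀ u, ¬ D v u) → v = t) :
    #{e | IsForward e ∧ ¬IsForward (φ⁻¹ e)} = numOrbits φ ∧
      #{e | ¬IsForward e ∧ IsForward (φ⁻¹ e)} = numOrbits φ := by
  have hφ_tail := tail_face_apply ρ rev φ hρ_tail hrev hφ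
  have hsources :=
    Perm.numOrbits_le_card_filter φ (exists_sameCycle_sourceCorner φ hφ_tail hacyclic)
  have hsinks := Perm.numOrbits_le_card_filter φ (exists_sameCycle_sinkCorner φ hφ_tail hacyclic)
  have hswitches := card_le_card_switches_add_two ρ hasym hρ_tail hρ_cyclic s t hsource hsink
  have hbalance := Perm.card_filter_and_not_apply_eq ρ⁻¹ IsForward
  have hout := card_filter_add_card_filter_not (s := {e : Dart D | IsForward e})
    (fun e => IsForward (ρ⁻¹ e))
  have hin := card_filter_add_card_filter_not (s := {e : Dart D | ¬IsForward e})
    (fun e => IsForward (ρ⁻¹ e))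
  have hrev_card : #{e : Dart D | ¬IsForward e} = #{e | IsForward e} :=
    card_equiv rev (by simp [isForward_rev rev hasym hrev])
  have hdarts : Fintype.card (Dart D) = #{e | IsForward e} + #{e | ¬IsForward e} :=
    (card_univ.symm.trans (card_filter_add_card_filter_not _).symm)
  simp only [isForward_face_inv ρ rev φ hasym hrev hφ, not_not] at hsources hsinks ⊢
  simp only [filter_filter] at hout hin
  rw [hdarts, hrev_card] at heuler
  omega

end BipolarOrientation

theorem bipolar_orientation_faces_general {V : Type*} [Fintype V]
    (D : V → V → Prop) (hasym : ∀ u v, D u v → ¬ D v u)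
    (ρ rev φ : Equiv.Perm {p : V × V // D p.1 p.2 ∨ D p.2 p.1})
    (hρ_tail : ∀ d, (ρ d).1.1 = d.1.1)
    (hρ_cyclic : ∀ d d' : {p : V × V // D p.1 p.2 ∨ D p.2 p.1},
      d.1.1 = d'.1.1 → ∃ n : ℕ, (⇑ρ)^[n] d = d')
    (hrev : ∀ d, (rev d).1 = (d.1.2, d.1.1))
    (hφ : ∀ d, φ d = ρ (rev d))
    (heuler : (Fintype.card V : ℤ)
        - Fintype.card {p : V × V // D p.1 p.2 ∨ D p.2 p.1} / 2 + numOrbits φ = 2)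
    (hacyclic : ∀ v : V, ¬ Relation.TransGen D v v)
    (s t : V)
    (hsource : (∀ u, ¬ D u s) ∧ ∀ v, (∀ u, ¬ D u v) → v = s)
    (hsink : (∀ u, ¬ D t u) ∧ ∀ v, (∀ u, ¬ D v u) → v = t) :
    ∀ d : {p : V × V // D p.1 p.2 ∨ D p.2 p.1},
      let m := Function.minimalPeriod (⇑φ) d
      let fwd : {p : V × V // D p.1 p.2 ∨ D p.2 p.1} → Prop := fun e => D e.1.1 e.1.2
      (∃! sf : V, ∃ i < m, ((⇑φ)^[i] d).1.1 = sf ∧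
        fwd ((⇑φ)^[i] d) ∧ ¬ fwd ((⇑φ)^[(i + (m - 1)) % m] d)) ∧
      (∃! tf : V, ∃ i < m, ((⇑φ)^[i] d).1.1 = tf ∧
        ¬ fwd ((⇑φ)^[i] d) ∧ fwd ((⇑φ)^[(i + (m - 1)) % m] d)) := by
  intro d
  have hφ_tail := tail_face_apply ρ rev φ hρ_tail hrev hφ
  obtain ⟨hsources, hsinks⟩ := card_sourceCorners_eq_numOrbits_and_card_sinkCorners_eq_numOrbits
    ρ rev φ hasym hρ_tail hρ_cyclic hrev hφ heuler hacyclic s t hsource.2 hsink.2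
  simp only [Equiv.Perm.iterate_add_pred_mod_minimalPeriod]
  exact ⟨φ.existsUnique_apply_iterate_lt_minimalPeriod (fun e => e.1.1)
      (φ.existsUnique_sameCycle_of_card_filter_eq_numOrbits
        (exists_sameCycle_sourceCorner φ hφ_tail hacyclic) hsources d),
    φ.existsUnique_apply_iterate_lt_minimalPeriod (fun e => e.1.1)
      (φ.existsUnique_sameCycle_of_card_filter_eq_numOrbits
        (exists_sameCycle_sinkCorner φ hφ_tail hacyclic) hsinks d)⟩

/-- **Faces of a bipolar orientation.** Let `D` be an orientation of a connected plane
graph, the plane embedding being given combinatorially by a rotation system `ρ` on the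
darts satisfying Euler's formula `|V| - |E| + |F| = 2`, where the faces are the orbits
of the face-tracing permutation `φ = ρ ∘ rev`.  Assume the orientation is bipolar:
acyclic with a unique source `s` and a unique sink `t`, both lying on the outer face.
Then every face `f` (traced by iterating `φ` from any dart `d`, with period `m`) has
exactly one vertex `s_f` at which both boundary edges leave and exactly one vertex
`t_f` at which both boundary edges enter; i.e. its boundary consists of two non-empty
directed paths from `s_f` to `t_f`. -/
theorem bipolar_orientation_faces {V : Type*} [Fintype V] [DecidableEq V]
    (D : V → V → Prop) (hasym : ∀ u v, D u v → ¬ D v u)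
    (ρ rev φ : Equiv.Perm {p : V × V // D p.1 p.2 ∨ D p.2 p.1})
    (hρ_tail : ∀ d, (ρ d).1.1 = d.1.1)
    (hρ_cyclic : ∀ d d' : {p : V × V // D p.1 p.2 ∨ D p.2 p.1},
      d.1.1 = d'.1.1 → ∃ n : ℕ, (⇑ρ)^[n] d = d')
    (hrev : ∀ d, (rev d).1 = (d.1.2, d.1.1))
    (hφ : ∀ d, φ d = ρ (rev d))
    (hconn : ∀ u v : V, Relation.ReflTransGen (fun a b => D a b ∨ D b a) u v)
    (heuler : (Fintype.card V : ℤ)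
        - Fintype.card {p : V × V // D p.1 p.2 ∨ D p.2 p.1} / 2 + numOrbits φ = 2)
    (hacyclic : ∀ v : V, ¬ Relation.TransGen D v v)
    (s t : V)
    (hsource : (∀ u, ¬ D u s) ∧ ∀ v, (∀ u, ¬ D u v) → v = s)
    (hsink : (∀ u, ¬ D t u) ∧ ∀ v, (∀ u, ¬ D v u) → v = t)
    (d₀ : {p : V × V // D p.1 p.2 ∨ D p.2 p.1})
    (hs_outer : ∃ i : ℕ, ((⇑φ)^[i] d₀).1.1 = s)
    (ht_outer : ∃ i : ℕ, ((⇑φ)^[i] d₀).1.1 = t) :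
    ∀ d : {p : V × V // D p.1 p.2 ∨ D p.2 p.1},
      let m := Function.minimalPeriod (⇑φ) d
      let fwd : {p : V × V // D p.1 p.2 ∨ D p.2 p.1} → Prop := fun e => D e.1.1 e.1.2
      (∃! sf : V, ∃ i < m, ((⇑φ)^[i] d).1.1 = sf ∧
        fwd ((⇑φ)^[i] d) ∧ ¬ fwd ((⇑φ)^[(i + (m - 1)) % m] d)) ∧
      (∃! tf : V, ∃ i < m, ((⇑φ)^[i] d).1.1 = tf ∧
        ¬ fwd ((⇑φ)^[i] d) ∧ fwd ((⇑φ)^[(i + (m - 1)) % m] d)) :=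
  bipolar_orientation_faces_general D hasym ρ rev φ hρ_tail hρ_cyclic hrev hφ heuler hacyclic s t
    hsource hsink
end

section
/- In a transversal structure on an internally 4-connected inner triangulation G of a 4-gon with outer vertices s, a, t, b in clockwise order, the red graph G_R = (V, E_R^+) is a bipolar orientation with source s and sink t, and the blue graph G_B = (V, E_B^+) is a bipolar orientation with source a and sink b. -/
set_option maxHeartbeats 1000000

attribute [local instance] Classical.propDecidable

/-- The four categories of darts at a vertex in a transversal structure: the dart
`(u, v)` is red outgoing (`0`), blue outgoing (`1`), red incoming (`2`), or
blue incoming (`3`) according to the colored orientations `R`, `B`. -/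
noncomputable def dartCat {V : Type*} (R B : V → V → Prop) (p : V × V) : Fin 4 :=
  if R p.1 p.2 then 0 else if B p.1 p.2 then 1 else if R p.2 p.1 then 2 else 3

/-!
A red cycle `C` cuts the sphere in two: by Euler's formula every set of edges of even degree is
a sum of face boundaries mod 2, so crossing an edge of `C` switches sides. Turning around a
vertex of `C`, the labels go from red outgoing to red incoming and back, so on each side of `C`
every vertex of `C` has a blue dart, all outgoing on one side and all incoming on the other.
Start from such blue darts on the side away from the outer face and keep following blue darts
in that direction: vertices off `C` on that side are inner vertices, which have blue darts of
both directions, so the walk never ends and closes into a blue cycle whose inside is strictly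
smaller. Shifting the labels `0, 1, 2, 3` (red out, blue out, red in, blue in) treats all
colors and directions alike, and infinite descent leaves no monochromatic cycle at all. The
sources and sinks are then read off the rotation condition.
-/

namespace TransversalStructure

variable {V : Type*}

abbrev Dart (E : V → V → Prop) : Type _ := {p : V × V // E p.1 p.2}

lemma exists_iterate_mem_periodicPts {α : Type*} [Finite α] (f : α → α) (x : α) :
    ∃ n, f^[n] x ∈ Function.periodicPts f := by
  obtain ⟨i, j, hij, hfij⟩ := Finite.exists_ne_map_eq_of_infinite (fun n => f^[n] x)
  wlog hlt : i < j generalizing i j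
  · exact this j i hij.symm hfij.symm (by omega)
  refine ⟨i, Function.mk_mem_periodicPts (n := j - i) (by omega) ?_⟩
  change f^[j - i] (f^[i] x) = f^[i] x
  rw [← Function.iterate_add_apply, Nat.sub_add_cancel hlt.le]
  exact hfij.symm

lemma exists_first_iterate {α : Type*} {f : α → α} {a b : α} (h : ∃ n, f^[n] a = b)
    (hne : a ≠ b) :
    ∃ m, 0 < m ∧ f^[m] a = b ∧
      ∀ k, 0 < k → k < m → f^[k] a ≠ a ∧ f^[k] a ≠ b := by
  classical
  refine ⟨Nat.find h, Nat.pos_of_ne_zero fun h0 => hne ?_, Nat.find_spec h,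
    fun k hk hkm => ⟨?_, Nat.find_min h hkm⟩⟩
  · simpa [h0] using Nat.find_spec h
  · intro hfix
    apply Nat.find_min h (show Nat.find h - k < Nat.find h by omega)
    have := Nat.find_spec h
    rwa [← Nat.sub_add_cancel hkm.le, Function.iterate_add_apply, hfix] at this

lemma exists_eq_add_one_of_step {m : ℕ} (P : ℕ → Fin 4)
    (hstep : ∀ k < m, P (k + 1) = P k ∨ P (k + 1) = P k + 1)
    (hm : P m ≠ P 0) (hm1 : P m ≠ P 0 + 1) :
    ∃ k, 0 < k ∧ k < m ∧ P k = P 0 + 1 := by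
  have hex : ∃ k, P k ≠ P 0 := ⟨m, hm⟩
  have hk : P (Nat.find hex) ≠ P 0 := Nat.find_spec hex
  have hpos : 0 < Nat.find hex := Nat.pos_of_ne_zero fun h => hk (by rw [h])
  have hle : Nat.find hex ≤ m := Nat.find_min' hex hm
  have hprev : P (Nat.find hex - 1) = P 0 := not_not.mp (Nat.find_min hex (by omega))
  have hval : P (Nat.find hex) = P 0 + 1 := by
    have := hstep (Nat.find hex - 1) (by omega)
    rw [Nat.sub_add_cancel hpos, hprev] at this
    exact this.resolve_left hk
  exact ⟨_, hpos, lt_of_le_of_ne hle fun h => hm1 (h ▸ hval), hval⟩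

/-- A directed cycle in `S`, as the orbit of `base` under a permutation: successors and
predecessors along it are unique, so the cycle is simple. -/
structure DirCycle (S : V → V → Prop) where
  next : Equiv.Perm V
  base : V
  rel : ∀ n : ℤ, S ((next ^ n) base) ((next ^ (n + 1)) base)

namespace DirCycle

variable {S : V → V → Prop}

def vertex (C : DirCycle S) (n : ℤ) : V := (C.next ^ n) C.base

lemma vertex_add_one (C : DirCycle S) (n : ℤ) : C.vertex (n + 1) = C.next (C.vertex n) := by
  rw [vertex, vertex, add_comm, zpow_one_add, Equiv.Perm.mul_apply]

lemma vertex_add_one_eq_iff (C : DirCycle S) {m n : ℤ} :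
    C.vertex (m + 1) = C.vertex (n + 1) ↔ C.vertex m = C.vertex n := by
  rw [vertex_add_one, vertex_add_one, EmbeddingLike.apply_eq_iff_eq]

/-- The map choosing successors in `U` is a bijection on its periodic points. -/
theorem nonempty_of_forall_exists [Finite V] {U : Set V} (hU : U.Nonempty)
    (h : ∀ v ∈ U, ∃ w ∈ U, S v w) : Nonempty (DirCycle S) := by
  choose! f hfU hfS using h
  obtain ⟨v₀, hv₀⟩ := hU
  have hiter : ∀ n, f^[n] v₀ ∈ U := fun n => by
    induction n with
    | zero => exact hv₀
    | succ n ih => rw [Function.iterate_succ_apply']; exact hfU _ ih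
  obtain ⟨m, hm⟩ := exists_iterate_mem_periodicPts f v₀
  set σ : Equiv.Perm V :=
    Equiv.Perm.ofSubtype ((Function.bijOn_periodicPts f).equiv f)
  have hσ : ∀ v ∈ Function.periodicPts f, σ v = f v := fun v hv => by
    simp only [σ, Equiv.Perm.ofSubtype_apply_of_mem _ hv]; rfl
  have hpow : ∀ k : ℕ, (σ ^ k) (f^[m] v₀) = f^[k + m] v₀ ∧
      f^[k + m] v₀ ∈ Function.periodicPts f := fun k => by
    induction k with
    | zero => simpa using hm
    | succ k ih =>
      rw [pow_succ', Equiv.Perm.mul_apply, ih.1, hσ _ ih.2, add_right_comm,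
        Function.iterate_succ_apply']
      exact ⟨rfl, (Function.bijOn_periodicPts f).mapsTo ih.2⟩
  refine ⟨⟨σ, f^[m] v₀, fun n => ?_⟩⟩
  obtain ⟨k, hk⟩ := Equiv.Perm.SameCycle.exists_nat_pow_eq (f := σ) ⟨n, rfl⟩
  rw [add_comm, zpow_one_add, Equiv.Perm.mul_apply, ← hk, (hpow k).1, hσ _ (hpow k).2]
  exact hfS _ (hiter _)

def mono {S' : V → V → Prop} (C : DirCycle S) (h : ∀ u v, S u v → S' u v) : DirCycle S' :=
  ⟨C.next, C.base, fun n => h _ _ (C.rel n)⟩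

end DirCycle

def LabelRel {E : V → V → Prop} (O : Set V) (κ : Dart E → Fin 4) (c : Fin 4) (u v : V) :
    Prop :=
  u ∉ O ∧ ∃ h : E u v, κ ⟨(u, v), h⟩ = c

namespace DirCycle

variable {E : V → V → Prop} {O : Set V} {κ : Dart E → Fin 4} {c : Fin 4}
  (C : DirCycle (LabelRel O κ c))

def dart (n : ℤ) : Dart E := ⟨(C.vertex n, C.vertex (n + 1)), (C.rel n).2.fst⟩

lemma vertex_notMem (n : ℤ) : C.vertex n ∉ O := (C.rel n).1

lemma label_dart (n : ℤ) : κ (C.dart n) = c := (C.rel n).2.snd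

lemma dart_congr {m n : ℤ} (h : C.vertex m = C.vertex n) : C.dart m = C.dart n :=
  Subtype.ext (Prod.ext h (C.vertex_add_one_eq_iff.2 h))

end DirCycle

/-- A connected combinatorial map of genus `0` on the graph `E`: `ρ` rotates the darts around
their tail, `rv` reverses a dart, and `φ = ρ ∘ rv` traces the faces. -/
structure PlanarMap [Fintype V] (E : V → V → Prop) where
  ρ : Equiv.Perm (Dart E)
  rv : Equiv.Perm (Dart E)
  φ : Equiv.Perm (Dart E)
  irrefl : ∀ v, ¬ E v v
  tail_ρ : ∀ d, (ρ d).1.1 = d.1.1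
  exists_iterate_ρ : ∀ d d' : Dart E, d.1.1 = d'.1.1 → ∃ n : ℕ, (⇑ρ)^[n] d = d'
  rv_val : ∀ d, (rv d).1 = (d.1.2, d.1.1)
  φ_apply : ∀ d, φ d = ρ (rv d)
  connected : ∀ u v : V, Relation.ReflTransGen E u v
  euler : (Fintype.card V : ℤ) - Fintype.card (Dart E) / 2 + numOrbits φ = 2

namespace PlanarMap

variable [Fintype V] {E : V → V → Prop} (M : PlanarMap E)

lemma tail_rv (d : Dart E) : (M.rv d).1.1 = d.1.2 := by rw [M.rv_val]

@[simp]
lemma rv_rv (d : Dart E) : M.rv (M.rv d) = d :=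
  Subtype.ext (by rw [M.rv_val, M.rv_val])

lemma symm (M : PlanarMap E) {u v : V} (h : E u v) : E v u := by
  simpa [M.rv_val] using (M.rv ⟨(u, v), h⟩).2

lemma rv_eq (d : Dart E) : M.rv d = ⟨(d.1.2, d.1.1), M.symm d.2⟩ := Subtype.ext (M.rv_val d)

lemma rv_ne (d : Dart E) : M.rv d ≠ d := fun h =>
  M.irrefl d.1.1 (by simpa [← M.tail_rv d, h] using d.2)

lemma ρ_apply (d : Dart E) : M.ρ d = M.φ (M.rv d) := by rw [M.φ_apply, rv_rv]

lemma tail_ρ_iterate (k : ℕ) (d : Dart E) : ((⇑M.ρ)^[k] d).1.1 = d.1.1 := by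
  induction k with
  | zero => rfl
  | succ k ih => rw [Function.iterate_succ_apply', M.tail_ρ, ih]

theorem forall_of_invariant {P : Dart E → Prop} (hφ : ∀ d, P d → P (M.φ d))
    (hrv : ∀ d, P d → P (M.rv d)) {d : Dart E} (hd : P d) (e : Dart E) : P e := by
  have hvertex : ∀ d e : Dart E, d.1.1 = e.1.1 → P d → P e := by
    intro d e h hd
    obtain ⟨n, rfl⟩ := M.exists_iterate_ρ d e h
    exact Function.Iterate.rec P hd (fun d h => M.ρ_apply d ▸ hφ _ (hrv _ h)) n
  have hpath : ∀ v, Relation.ReflTransGen E d.1.1 v → ∀ e : Dart E, e.1.1 = v → P e := by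
    intro v hv
    induction hv with
    | refl => exact fun e he => hvertex d e he.symm hd
    | @tail b c _ hbc ih =>
      exact fun e he => hvertex _ e (by rw [M.tail_rv, he])
        (hrv _ (ih (⟨(b, c), hbc⟩ : Dart E) rfl))
  exact hpath _ (M.connected _ _) e rfl

abbrev Face := Quotient (Equiv.Perm.SameCycle.setoid M.φ)

abbrev Edge := Quotient (Equiv.Perm.SameCycle.setoid M.rv)

def face (d : Dart E) : M.Face := Quotient.mk _ d

def edge (d : Dart E) : M.Edge := Quotient.mk _ d

lemma face_φ (d : Dart E) : M.face (M.φ d) = M.face d :=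
  Quotient.sound (Equiv.Perm.SameCycle.symm ⟨1, by simp⟩)

lemma face_rv (d : Dart E) : M.face (M.rv d) = M.face (M.ρ d) := by
  rw [ρ_apply, face_φ]

lemma edge_eq_edge_iff {d e : Dart E} : M.edge e = M.edge d ↔ e = d ∨ e = M.rv d := by
  have hinv : M.rv * M.rv = 1 := Equiv.ext fun d => M.rv_rv d
  refine ⟨fun h => ?_, fun h => ?_⟩
  · obtain ⟨i, rfl⟩ := Quotient.exact h.symm
    obtain ⟨k, rfl | rfl⟩ := Int.even_or_odd' i
    · left; rw [zpow_mul, zpow_two, hinv, one_zpow, Equiv.Perm.one_apply]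
    · right; rw [zpow_add_one, zpow_mul, zpow_two, hinv, one_zpow, one_mul]
  · rcases h with rfl | rfl
    · rfl
    · exact Quotient.sound (Equiv.Perm.SameCycle.symm ⟨1, by simp⟩)

@[simp]
lemma edge_rv (d : Dart E) : M.edge (M.rv d) = M.edge d :=
  M.edge_eq_edge_iff.2 (Or.inr rfl)

lemma card_dart : Fintype.card (Dart E) = 2 * Fintype.card M.Edge := by
  rw [← Finset.card_univ, Finset.card_eq_sum_card_fiberwise (f := M.edge) (t := Finset.univ)
    (fun _ _ => Finset.mem_univ _), Finset.sum_const_nat (m := 2), Finset.card_univ, mul_comm]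
  intro e _
  induction e using Quotient.inductionOn with
  | h d =>
    have hfib : Finset.univ.filter (fun e => M.edge e = M.edge d) = {d, M.rv d} := by
      ext e; simp [M.edge_eq_edge_iff]
    rw [← edge, hfib, Finset.card_pair (M.rv_ne d).symm]

noncomputable def faceBoundary : (M.Face → ZMod 2) →ₗ[ZMod 2] (M.Edge → ZMod 2) where
  toFun T e := T (M.face e.out) + T (M.face (M.rv e.out))
  map_add' T T' := by ext; simp only [Pi.add_apply]; ring
  map_smul' c T := by ext; simp only [Pi.smul_apply, smul_eq_mul, RingHom.id_apply]; ring

noncomputable def edgeBoundary : (M.Edge → ZMod 2) →ₗ[ZMod 2] (V → ZMod 2) where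
  toFun y v := ∑ d ∈ Finset.univ.filter (fun d : Dart E => d.1.1 = v), y (M.edge d)
  map_add' y y' := by ext; simp only [Pi.add_apply, Finset.sum_add_distrib]
  map_smul' c y := by
    ext; simp only [Pi.smul_apply, smul_eq_mul, RingHom.id_apply, Finset.mul_sum]

lemma faceBoundary_apply (T : M.Face → ZMod 2) (d : Dart E) :
    M.faceBoundary T (M.edge d) = T (M.face d) + T (M.face (M.rv d)) := by
  have hout : (M.edge d).out = d ∨ (M.edge d).out = M.rv d :=
    M.edge_eq_edge_iff.1 (Quotient.out_eq _)
  change T (M.face (M.edge d).out) + T (M.face (M.rv (M.edge d).out)) = _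
  rcases hout with h | h <;> rw [h]
  rw [rv_rv, add_comm]

lemma edgeBoundary_apply (y : M.Edge → ZMod 2) (v : V) :
    M.edgeBoundary y v = ∑ d ∈ Finset.univ.filter (fun d : Dart E => d.1.1 = v), y (M.edge d) :=
  rfl

lemma edgeBoundary_faceBoundary (T : M.Face → ZMod 2) :
    M.edgeBoundary (M.faceBoundary T) = 0 := by
  ext v
  simp only [edgeBoundary_apply, faceBoundary_apply, Finset.sum_add_distrib, face_rv,
    Pi.zero_apply]
  rw [Finset.sum_equiv M.ρ (t := Finset.univ.filter fun d : Dart E => d.1.1 = v)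
    (g := fun d => T (M.face d)) (fun d => by simp [M.tail_ρ]) (fun _ _ => rfl),
    CharTwo.add_self_eq_zero]

lemma finrank_ker_faceBoundary_le_one :
    Module.finrank (ZMod 2) (LinearMap.ker M.faceBoundary) ≤ 1 := by
  have hconst : ∀ T ∈ LinearMap.ker M.faceBoundary, ∀ d e, T (M.face e) = T (M.face d) := by
    intro T hT d
    have hrv : ∀ d, T (M.face (M.rv d)) = T (M.face d) := fun d => by
      have := congrFun hT (M.edge d)
      rw [faceBoundary_apply, Pi.zero_apply, CharTwo.add_eq_zero] at this
      exact this.symm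
    exact M.forall_of_invariant (P := fun e => T (M.face e) = T (M.face d))
      (fun e h => by rw [face_φ, h]) (fun e h => by rw [hrv, h]) rfl
  have hle : LinearMap.ker M.faceBoundary ≤ Submodule.span (ZMod 2) {1} := by
    intro T hT
    rw [Submodule.mem_span_singleton]
    rcases isEmpty_or_nonempty (Dart E) with hD | ⟨⟨d⟩⟩
    · refine ⟨0, funext fun q => ?_⟩
      induction q using Quotient.inductionOn with | h e => exact hD.elim e
    · refine ⟨T (M.face d), funext fun q => ?_⟩
      induction q using Quotient.inductionOn with
      | h e => exact (mul_one _).trans (hconst T hT d e).symm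
  refine (Submodule.finrank_mono hle).trans ?_
  simpa using finrank_span_le_card ({1} : Set (M.Face → ZMod 2))

lemma edgeBoundary_single (d : Dart E) :
    M.edgeBoundary (Pi.single (M.edge d) 1) =
      Pi.single d.1.1 (1 : ZMod 2) + Pi.single d.1.2 1 := by
  have hsplit : ∀ e : Dart E, (Pi.single (M.edge d) 1 : M.Edge → ZMod 2) (M.edge e) =
      (if d = e then (1 : ZMod 2) else 0) + (if M.rv d = e then 1 else 0) := by
    intro e
    rcases eq_or_ne d e with rfl | h1
    · simp [(M.rv_ne d)]
    rcases eq_or_ne (M.rv d) e with rfl | h2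
    · simp [h1]
    · simp [M.edge_eq_edge_iff, h1, h2, Ne.symm h1, Ne.symm h2]
  ext v
  simp only [edgeBoundary_apply, hsplit, Finset.sum_add_distrib, Finset.sum_ite_eq,
    Finset.mem_filter, Finset.mem_univ, true_and, M.tail_rv, Pi.add_apply, Pi.single_apply]
  simp only [eq_comm]

lemma single_add_single_mem_range (v₀ u : V) :
    Pi.single u (1 : ZMod 2) + Pi.single v₀ 1 ∈ LinearMap.range M.edgeBoundary := by
  induction M.connected v₀ u with
  | refl =>
    convert Submodule.zero_mem _
    exact funext fun v => CharTwo.add_self_eq_zero _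
  | @tail w u _ hwu ih =>
    have hstep := LinearMap.mem_range_self M.edgeBoundary (Pi.single (M.edge ⟨(w, u), hwu⟩) 1)
    rw [edgeBoundary_single] at hstep
    convert Submodule.add_mem _ ih hstep using 1
    ext v
    simp only [Pi.add_apply]
    rw [add_add_add_comm, CharTwo.add_self_eq_zero, zero_add, add_comm]

lemma card_le_finrank_range_edgeBoundary_add_one :
    Fintype.card V ≤ Module.finrank (ZMod 2) (LinearMap.range M.edgeBoundary) + 1 := by
  rcases isEmpty_or_nonempty V with hV | ⟨⟨v₀⟩⟩
  · simp
  have htop :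
      LinearMap.range M.edgeBoundary ⊔ Submodule.span (ZMod 2) {Pi.single v₀ 1} = ⊤ := by
    rw [eq_top_iff, ← (Pi.basisFun (ZMod 2) V).span_eq, Submodule.span_le]
    rintro _ ⟨u, rfl⟩
    have := Submodule.add_mem_sup (M.single_add_single_mem_range v₀ u)
      (Submodule.mem_span_singleton_self (Pi.single v₀ (1 : ZMod 2)))
    have hz : (Pi.single v₀ 1 : V → ZMod 2) + Pi.single v₀ 1 = 0 :=
      funext fun v => CharTwo.add_self_eq_zero _
    rwa [add_assoc, hz, add_zero, ← Pi.basisFun_apply] at this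
  calc Fintype.card V = Module.finrank (ZMod 2) (⊤ : Submodule (ZMod 2) (V → ZMod 2)) := by
        rw [finrank_top, Module.finrank_fintype_fun_eq_card]
    _ ≤ _ := htop ▸ Submodule.finrank_add_le_finrank_add_finrank _ _
    _ ≤ _ := by
        gcongr
        simpa using finrank_span_le_card ({Pi.single v₀ 1} : Set (V → ZMod 2))

lemma card_add_card_face :
    Fintype.card V + Fintype.card M.Face = Fintype.card M.Edge + 2 := by
  have h := M.euler
  have hF : numOrbits M.φ = Fintype.card M.Face := Fintype.card_congr (Equiv.refl _)
  rw [hF, M.card_dart] at h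
  push_cast at h
  omega

/-- `H₁` of the sphere vanishes: by Euler's formula,
`dim ker ∂₁ ≤ #edges - #vertices + 1 = #faces - 1 ≤ rank ∂₂`. -/
theorem range_faceBoundary :
    LinearMap.range M.faceBoundary = LinearMap.ker M.edgeBoundary := by
  refine Submodule.eq_of_le_of_finrank_le ?_ ?_
  · rintro _ ⟨T, rfl⟩
    exact M.edgeBoundary_faceBoundary T
  have h1 := LinearMap.finrank_range_add_finrank_ker M.edgeBoundary
  have h2 := LinearMap.finrank_range_add_finrank_ker M.faceBoundary
  rw [Module.finrank_fintype_fun_eq_card] at h1 h2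
  have := M.card_le_finrank_range_edgeBoundary_add_one
  have := M.finrank_ker_faceBoundary_le_one
  have := M.card_add_card_face
  omega

section Cut

def CutStep (X : Set M.Edge) (d e : Dart E) : Prop :=
  e = M.φ d ∨ (M.edge d ∉ X ∧ e = M.rv d)

/-- Two darts lie in the same region of the sphere cut open along the edges in `X`. -/
def CutRel (X : Set M.Edge) : Dart E → Dart E → Prop := Relation.EqvGen (M.CutStep X)

variable {M} {X Y : Set M.Edge} {d e o : Dart E}

@[refl]
lemma CutRel.refl (d : Dart E) : M.CutRel X d d := Relation.EqvGen.refl d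

lemma CutRel.symm (h : M.CutRel X d e) : M.CutRel X e d := Relation.EqvGen.symm _ _ h

lemma CutRel.trans {f : Dart E} (h : M.CutRel X d e) (h' : M.CutRel X e f) : M.CutRel X d f :=
  Relation.EqvGen.trans _ _ _ h h'

variable (M) in
lemma cutRel_φ (d : Dart E) : M.CutRel X d (M.φ d) := Relation.EqvGen.rel _ _ (Or.inl rfl)

lemma cutRel_rv (h : M.edge d ∉ X) : M.CutRel X d (M.rv d) :=
  Relation.EqvGen.rel _ _ (Or.inr ⟨h, rfl⟩)

lemma cutRel_ρ (h : M.edge d ∉ X) : M.CutRel X d (M.ρ d) :=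
  (cutRel_rv h).trans (M.ρ_apply d ▸ M.cutRel_φ _)

lemma cutRel_φ_iterate (k : ℕ) (d : Dart E) : M.CutRel X ((⇑M.φ)^[k] d) d := by
  induction k generalizing d with
  | zero => rfl
  | succ k ih => exact (ih _).trans (M.cutRel_φ d).symm

lemma cutRel_of_tail_eq (hX : ∀ g : Dart E, g.1.1 = d.1.1 → M.edge g ∉ X)
    (he : e.1.1 = d.1.1) : M.CutRel X d e := by
  obtain ⟨n, rfl⟩ := M.exists_iterate_ρ d e he.symm
  induction n with
  | zero => rfl
  | succ n ih =>
    rw [Function.iterate_succ_apply']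
    exact (ih (M.tail_ρ_iterate n d)).trans (cutRel_ρ (hX _ (M.tail_ρ_iterate n d)))

lemma cutRel_ρ_iterate {A : Dart E} {m : ℕ}
    (hX : ∀ k, 0 < k → k < m → M.edge ((⇑M.ρ)^[k] A) ∉ X) :
    ∀ k, 0 < k → k ≤ m → M.CutRel X (M.ρ A) ((⇑M.ρ)^[k] A) := by
  intro k hk hkm
  induction k with
  | zero => omega
  | succ k ih =>
    rcases Nat.eq_zero_or_pos k with rfl | hk'
    · rfl
    rw [Function.iterate_succ_apply']
    exact (ih hk' (by omega)).trans (cutRel_ρ (hX k hk' (by omega)))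

lemma CutRel.of_forall_not_cutRel (hY : ∀ g, M.edge g ∈ Y → ¬ M.CutRel X g o)
    (h : M.CutRel X d o) : M.CutRel Y d o := by
  suffices ∀ p q, M.CutRel X p q → M.CutRel X p o → M.CutRel Y p q from this d o h h
  intro p q hpq
  induction hpq with
  | rel p q hpq =>
    intro hp
    rcases hpq with rfl | ⟨-, rfl⟩
    · exact M.cutRel_φ p
    · exact cutRel_rv fun hpY => hY p hpY hp
  | refl p => exact fun _ => .refl p
  | symm p q _ ih => exact fun hq => (ih (CutRel.trans ‹_› hq)).symm
  | trans p q r hpq _ ih ih' =>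
    exact fun hp => (ih hp).trans (ih' ((CutRel.symm hpq).trans hp))

lemma exists_cutRel_mem {g : Dart E} (hg : M.edge g ∈ X) (d : Dart E) :
    ∃ g', M.edge g' ∈ X ∧ M.CutRel X d g' := by
  refine M.forall_of_invariant (P := fun d => ∃ g', M.edge g' ∈ X ∧ M.CutRel X d g')
    (fun d ⟨g', hg', h⟩ => ⟨g', hg', (M.cutRel_φ d).symm.trans h⟩)
    (fun d ⟨g', hg', h⟩ => ?_)
    ⟨g, hg, .refl g⟩ d
  by_cases hd : M.edge d ∈ X
  · exact ⟨M.rv d, by rwa [edge_rv], .refl _⟩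
  · exact ⟨g', hg', (cutRel_rv hd).symm.trans h⟩

/-- The parity of a face potential (`range_faceBoundary`) changes exactly across `X`. -/
theorem not_cutRel_rv (hX : M.edgeBoundary (X.indicator 1) = 0) (hd : M.edge d ∈ X) :
    ¬ M.CutRel X d (M.rv d) := by
  obtain ⟨T, hT⟩ : X.indicator 1 ∈ LinearMap.range M.faceBoundary := by
    rw [range_faceBoundary]; exact hX
  have hpot : ∀ d, T (M.face d) + T (M.face (M.rv d)) = X.indicator 1 (M.edge d) := fun d => by
    rw [← faceBoundary_apply, hT]
  intro h
  suffices hinv : ∀ p q, M.CutRel X p q → T (M.face p) = T (M.face q) by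
    have := hpot d
    rw [hinv d _ h, CharTwo.add_self_eq_zero, Set.indicator_of_mem hd] at this
    exact zero_ne_one this
  intro p q hpq
  induction hpq with
  | rel p q hpq =>
    rcases hpq with rfl | ⟨hp, rfl⟩
    · rw [M.face_φ]
    · have := hpot p
      rwa [Set.indicator_of_notMem hp, CharTwo.add_eq_zero] at this
  | refl => rfl
  | symm _ _ _ ih => exact ih.symm
  | trans _ _ _ _ _ ih ih' => exact ih.trans ih'

end Cut

/-- A labelling of the darts by `Fin 4` that is a transversal structure around every vertex
outside the set `O` of vertices on the face of `o`. Labels `0, 1, 2, 3` stand for red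
outgoing, blue outgoing, red incoming, blue incoming. -/
structure IsTransversalLabelling (o : Dart E) (O : Set V) (κ : Dart E → Fin 4) : Prop where
  mem_face : ∀ v ∈ O, ∃ k, ((⇑M.φ)^[k] o).1.1 = v
  label_rv : ∀ d : Dart E, d.1.1 ∉ O → κ (M.rv d) = κ d + 2
  label_ρ : ∀ d : Dart E, d.1.1 ∉ O → κ (M.ρ d) = κ d ∨ κ (M.ρ d) = κ d + 1
  exists_label : ∀ v ∉ O, ∀ c, ∃ d : Dart E, d.1.1 = v ∧ κ d = c

def cycleEdges {O : Set V} {κ : Dart E → Fin 4} {c : Fin 4}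
    (C : DirCycle (LabelRel O κ c)) : Set M.Edge :=
  Set.range fun n => M.edge (C.dart n)

def inside (X : Set M.Edge) (o : Dart E) : Set (Dart E) := {d | ¬ M.CutRel X d o}

section Cycle

variable {M} {O : Set V} {κ : Dart E → Fin 4} {c : Fin 4} (C : DirCycle (LabelRel O κ c))
  {d : Dart E}

lemma edge_mem_cycleEdges_iff :
    M.edge d ∈ M.cycleEdges C ↔ ∃ n, d = C.dart n ∨ d = M.rv (C.dart n) := by
  simp only [cycleEdges, Set.mem_range, eq_comm (b := M.edge d), M.edge_eq_edge_iff]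

lemma eq_of_mem_cycleEdges {n : ℤ} (hd : d.1.1 = C.vertex (n + 1))
    (hX : M.edge d ∈ M.cycleEdges C) :
    d = M.rv (C.dart n) ∨ d = C.dart (n + 1) := by
  obtain ⟨m, rfl | rfl⟩ := (edge_mem_cycleEdges_iff C).1 hX
  · exact Or.inr (C.dart_congr hd)
  · rw [M.tail_rv] at hd
    exact Or.inl (congrArg M.rv (C.dart_congr (C.vertex_add_one_eq_iff.1 hd)))

lemma edge_notMem_cycleEdges (hd : ∀ n, C.vertex n ≠ d.1.1) : M.edge d ∉ M.cycleEdges C := by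
  rintro hX
  obtain ⟨m, rfl | rfl⟩ := (edge_mem_cycleEdges_iff C).1 hX
  · exact hd m rfl
  · exact hd (m + 1) (M.tail_rv (C.dart m)).symm

end Cycle

namespace IsTransversalLabelling

variable {M} {o : Dart E} {O : Set V} {κ : Dart E → Fin 4} {c : Fin 4}
  (C : DirCycle (LabelRel O κ c)) {d : Dart E}

lemma label_rv_dart (hL : M.IsTransversalLabelling o O κ) (n : ℤ) :
    κ (M.rv (C.dart n)) = c + 2 := by
  rw [hL.label_rv _ (C.vertex_notMem n), C.label_dart]

lemma edge_notMem_cycleEdges_of_label (hL : M.IsTransversalLabelling o O κ) (h₀ : κ d ≠ c)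
    (h₂ : κ d ≠ c + 2) : M.edge d ∉ M.cycleEdges C := fun hX => by
  obtain ⟨m, rfl | rfl⟩ := (edge_mem_cycleEdges_iff C).1 hX
  exacts [h₀ (C.label_dart m), h₂ (hL.label_rv_dart C m)]

lemma edgeBoundary_indicator_cycleEdges (hL : M.IsTransversalLabelling o O κ) :
    M.edgeBoundary ((M.cycleEdges C).indicator 1) = 0 := by
  ext v
  rw [edgeBoundary_apply, Pi.zero_apply]
  by_cases hv : ∃ n, C.vertex (n + 1) = v
  · obtain ⟨n, rfl⟩ := hv
    have hne : M.rv (C.dart n) ≠ C.dart (n + 1) := fun h => by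
      have := hL.label_rv_dart C n
      rw [h, C.label_dart] at this
      revert this; generalize c = c; revert c; decide
    have hmem : ∀ n, M.edge (C.dart n) ∈ M.cycleEdges C := fun n => ⟨n, rfl⟩
    rw [← Finset.sum_subset (s₁ := {M.rv (C.dart n), C.dart (n + 1)}) (fun g hg => ?_)
      (fun g hg hg' => ?_),
      Finset.sum_pair hne, Set.indicator_of_mem (by rw [edge_rv]; exact hmem n),
      Set.indicator_of_mem (hmem _), Pi.one_apply, Pi.one_apply, CharTwo.add_self_eq_zero]
    · rcases Finset.mem_insert.1 hg with rfl | hg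
      · simp only [Finset.mem_filter, Finset.mem_univ, true_and, M.tail_rv]; rfl
      · simp only [Finset.mem_singleton.1 hg, Finset.mem_filter, Finset.mem_univ, true_and]
        rfl
    · rw [Finset.mem_filter] at hg
      refine Set.indicator_of_notMem (fun hX => hg' ?_) _
      rcases eq_of_mem_cycleEdges C hg.2 hX with rfl | rfl <;> simp
  · refine Finset.sum_eq_zero fun g hg =>
      Set.indicator_of_notMem (edge_notMem_cycleEdges C ?_) _
    intro n hn
    rw [(Finset.mem_filter.1 hg).2] at hn
    exact hv ⟨n - 1, by rwa [sub_add_cancel]⟩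

lemma exists_label_between (hL : M.IsTransversalLabelling o O κ) {X : Set M.Edge}
    {A A' : Dart E} (htail : A'.1.1 = A.1.1) (hv : A.1.1 ∉ O) (hA' : κ A' = κ A + 2)
    (honly : ∀ g : Dart E, g.1.1 = A.1.1 → M.edge g ∈ X → g = A ∨ g = A') :
    M.CutRel X (M.ρ A) A' ∧
      ∃ g : Dart E, g.1.1 = A.1.1 ∧ κ g = κ A + 1 ∧ M.CutRel X (M.ρ A) g := by
  have hlabel : ∀ x : Fin 4, x + 2 ≠ x ∧ x + 2 ≠ x + 1 := by decide
  obtain ⟨m, hpos, hm, hmin⟩ := exists_first_iterate (M.exists_iterate_ρ A A' htail.symm)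
    fun h => (hlabel (κ A)).1 (by rw [← hA', h])
  have hfree : ∀ k, 0 < k → k < m → M.edge ((⇑M.ρ)^[k] A) ∉ X := fun k hk hkm hX =>
    (honly _ (M.tail_ρ_iterate k A) hX).elim (hmin k hk hkm).1 (hmin k hk hkm).2
  have harc := cutRel_ρ_iterate hfree
  refine ⟨hm ▸ harc m hpos le_rfl, ?_⟩
  obtain ⟨k, hk, hkm, hκ⟩ := exists_eq_add_one_of_step (m := m) (fun k => κ ((⇑M.ρ)^[k] A))
    (fun k _ => by
      rw [Function.iterate_succ_apply']
      exact hL.label_ρ _ (by rwa [M.tail_ρ_iterate]))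
    (by simp only [hm, hA', Function.iterate_zero_apply]; exact (hlabel _).1)
    (by simp only [hm, hA', Function.iterate_zero_apply]; exact (hlabel _).2)
  exact ⟨_, M.tail_ρ_iterate k A, hκ, harc k hk hkm.le⟩

lemma cutRel_dart_add_one_and_exists_label (hL : M.IsTransversalLabelling o O κ) (n : ℤ) :
    M.CutRel (M.cycleEdges C) (C.dart n) (C.dart (n + 1)) ∧
      ∃ g : Dart E, g.1.1 = C.vertex (n + 1) ∧ κ g = c + 3 ∧
        M.CutRel (M.cycleEdges C) (C.dart n) g := by
  have htail : (M.rv (C.dart n)).1.1 = C.vertex (n + 1) := M.tail_rv _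
  obtain ⟨h₁, g, hg, hκ, h₂⟩ := hL.exists_label_between (X := M.cycleEdges C)
    (A := M.rv (C.dart n)) (A' := C.dart (n + 1)) htail.symm (htail ▸ C.vertex_notMem _)
    (by rw [C.label_dart, hL.label_rv_dart C]; generalize c = c; revert c; decide)
    (fun g hg hX => eq_of_mem_cycleEdges C (hg.trans htail) hX)
  rw [M.ρ_apply, rv_rv] at h₁ h₂
  refine ⟨(M.cutRel_φ _).trans h₁, g, hg.trans htail, ?_, (M.cutRel_φ _).trans h₂⟩
  rw [hκ, hL.label_rv_dart C, add_assoc]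
  rfl

lemma cutRel_dart (hL : M.IsTransversalLabelling o O κ) (n : ℤ) :
    M.CutRel (M.cycleEdges C) (C.dart 0) (C.dart n) := by
  induction n using Int.induction_on with
  | zero => rfl
  | succ n ih => exact ih.trans (hL.cutRel_dart_add_one_and_exists_label C n).1
  | pred n ih =>
    have := (hL.cutRel_dart_add_one_and_exists_label C (-n - 1)).1
    rw [sub_add_cancel] at this
    exact ih.trans this.symm

lemma exists_label_add_three (hL : M.IsTransversalLabelling o O κ) (n : ℤ) :
    ∃ g : Dart E, g.1.1 = C.vertex n ∧ κ g = c + 3 ∧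
      M.CutRel (M.cycleEdges C) g (C.dart 0) := by
  obtain ⟨-, g, hg, hκ, h⟩ := hL.cutRel_dart_add_one_and_exists_label C (n - 1)
  rw [sub_add_cancel] at hg
  exact ⟨g, hg, hκ, (h.symm.trans (hL.cutRel_dart C _).symm)⟩

lemma not_cutRel_dart_rv (hL : M.IsTransversalLabelling o O κ) (n : ℤ) :
    ¬ M.CutRel (M.cycleEdges C) (C.dart n) (M.rv (C.dart n)) :=
  not_cutRel_rv (hL.edgeBoundary_indicator_cycleEdges C) ⟨n, rfl⟩

def reverse (hL : M.IsTransversalLabelling o O κ) : DirCycle (LabelRel O κ (c + 2)) where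
  next := C.next⁻¹
  base := C.base
  rel n := by
    have h : LabelRel O κ (c + 2) (C.vertex (-n - 1 + 1)) (C.vertex (-n - 1)) :=
      ⟨C.vertex_notMem _, M.symm (C.dart _).2,
        (congrArg κ (M.rv_eq (C.dart _))).symm.trans (hL.label_rv_dart C _)⟩
    rw [sub_add_cancel] at h
    simpa only [DirCycle.vertex, inv_zpow', neg_add'] using h

lemma reverse_dart (hL : M.IsTransversalLabelling o O κ) (n : ℤ) :
    (hL.reverse C).dart n = M.rv (C.dart (-n - 1)) := by
  refine Subtype.ext ?_
  rw [M.rv_val]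
  simp only [DirCycle.dart, DirCycle.vertex, reverse, inv_zpow']
  congr 2 <;> ring_nf

lemma cycleEdges_reverse (hL : M.IsTransversalLabelling o O κ) :
    M.cycleEdges (hL.reverse C) = M.cycleEdges C := by
  ext q
  constructor
  · rintro ⟨n, rfl⟩
    exact ⟨-n - 1, by dsimp only; rw [reverse_dart, edge_rv]⟩
  · rintro ⟨n, rfl⟩
    exact ⟨-n - 1, by dsimp only; rw [reverse_dart, edge_rv, show -(-n - 1) - 1 = n by ring]⟩

lemma cutRel_dart_or_cutRel_rv (hL : M.IsTransversalLabelling o O κ) (d : Dart E) :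
    M.CutRel (M.cycleEdges C) d (C.dart 0) ∨ M.CutRel (M.cycleEdges C) d (M.rv (C.dart 0)) := by
  obtain ⟨g, hg, hdg⟩ := exists_cutRel_mem (X := M.cycleEdges C) (g := C.dart 0) ⟨0, rfl⟩ d
  obtain ⟨m, rfl | rfl⟩ := (edge_mem_cycleEdges_iff C).1 hg
  · exact Or.inl (hdg.trans (hL.cutRel_dart C m).symm)
  · have hrev := hL.cutRel_dart (hL.reverse C)
    rw [cycleEdges_reverse] at hrev
    have h₀ := hrev (-1)
    have hm := hrev (-m - 1)
    rw [hL.reverse_dart C (-1), show -(-1 : ℤ) - 1 = 0 by ring] at h₀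
    rw [hL.reverse_dart C (-m - 1), show -(-m - 1) - 1 = m by ring] at hm
    exact Or.inr (hdg.trans (hm.symm.trans h₀))

lemma exists_label_add_three_of_head (hL : M.IsTransversalLabelling o O κ)
    (hin : ¬ M.CutRel (M.cycleEdges C) (C.dart 0) o) {e : Dart E} (hκ : κ e = c + 3)
    (he : M.CutRel (M.cycleEdges C) e (C.dart 0)) :
    ∃ e' : Dart E, e'.1.1 = e.1.2 ∧ e'.1.1 ∉ O ∧ κ e' = c + 3 ∧
      M.CutRel (M.cycleEdges C) e' (C.dart 0) := by
  by_cases hw : ∃ n, C.vertex n = e.1.2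
  · obtain ⟨n, hn⟩ := hw
    obtain ⟨g, hg, hκg, hgC⟩ := hL.exists_label_add_three C n
    exact ⟨g, hg.trans hn, hg ▸ C.vertex_notMem n, hκg, hgC⟩
  simp only [not_exists] at hw
  have hlabel : ∀ x : Fin 4, x + 3 ≠ x ∧ x + 3 ≠ x + 2 := by decide
  have hX := hL.edge_notMem_cycleEdges_of_label C (hκ ▸ (hlabel c).1) (hκ ▸ (hlabel c).2)
  have hoff : ∀ g : Dart E, g.1.1 = (M.rv e).1.1 → M.edge g ∉ M.cycleEdges C :=
    fun g hg => edge_notMem_cycleEdges C fun n hn => hw n (hn.trans (hg.trans (M.tail_rv e)))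
  have hall : ∀ g : Dart E, g.1.1 = e.1.2 → M.CutRel (M.cycleEdges C) g (C.dart 0) :=
    fun g hg => (cutRel_of_tail_eq hoff (hg.trans (M.tail_rv e).symm)).symm.trans
      ((cutRel_rv hX).symm.trans he)
  have hwO : e.1.2 ∉ O := fun hO => by
    obtain ⟨k, hk⟩ := hL.mem_face _ hO
    exact hin ((hall _ hk).symm.trans (cutRel_φ_iterate k o))
  obtain ⟨e', he', hκ'⟩ := hL.exists_label _ hwO (c + 3)
  exact ⟨e', he', he' ▸ hwO, hκ', hall e' he'⟩

/-- Following darts of label `c + 3` never leaves the inside of `C`, since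
`exists_label_add_three_of_head` always provides the next one. -/
lemma exists_dirCycle_inside (hL : M.IsTransversalLabelling o O κ)
    (hin : ¬ M.CutRel (M.cycleEdges C) (C.dart 0) o) :
    ∃ C' : DirCycle (LabelRel O κ (c + 3)),
      ∀ n, M.CutRel (M.cycleEdges C) (C'.dart n) (C.dart 0) := by
  set W : Dart E → Prop :=
    fun e => e.1.1 ∉ O ∧ κ e = c + 3 ∧ M.CutRel (M.cycleEdges C) e (C.dart 0)
  obtain ⟨C'⟩ : Nonempty (DirCycle fun u v => ∃ h : E u v, W ⟨(u, v), h⟩) := by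
    obtain ⟨g, hg, hκ, hgC⟩ := hL.exists_label_add_three C 0
    refine DirCycle.nonempty_of_forall_exists (U := {v | ∃ w, ∃ h : E v w, W ⟨(v, w), h⟩})
      ⟨g.1.1, g.1.2, g.2, hg ▸ C.vertex_notMem 0, hκ, hgC⟩ ?_
    rintro v ⟨w, h, hW⟩
    obtain ⟨⟨⟨_, w'⟩, h'⟩, rfl, hW'⟩ :=
      hL.exists_label_add_three_of_head C hin hW.2.1 hW.2.2
    exact ⟨_, ⟨w', h', hW'⟩, h, hW⟩
  exact ⟨C'.mono fun u v ⟨h, hu, hκ, _⟩ => ⟨hu, h, hκ⟩, fun n => (C'.rel n).2.2.2⟩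

/-- The new cycle of `exists_dirCycle_inside` lies inside `C`, while `C.dart 0` is outside it:
crossing `C.dart 0` leads to the outer side of `C`. -/
theorem exists_inside_ssubset (hL : M.IsTransversalLabelling o O κ)
    (hin : ¬ M.CutRel (M.cycleEdges C) (C.dart 0) o) :
    ∃ C' : DirCycle (LabelRel O κ (c + 3)),
      M.inside (M.cycleEdges C') o ⊂ M.inside (M.cycleEdges C) o := by
  obtain ⟨C', hC'⟩ := hL.exists_dirCycle_inside C hin
  have hlabel : ∀ x : Fin 4, x + 3 ≠ x ∧ x + 3 ≠ x + 2 ∧ x ≠ x + 3 + 2 := by decide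
  have hfar : ∀ g, M.edge g ∈ M.cycleEdges C' → ¬ M.CutRel (M.cycleEdges C) g o := by
    intro g hg hgo
    obtain ⟨n, rfl | rfl⟩ := (edge_mem_cycleEdges_iff C').1 hg
    · exact hin ((hC' n).symm.trans hgo)
    · have hX := hL.edge_notMem_cycleEdges_of_label C (d := C'.dart n)
        (by rw [C'.label_dart]; exact (hlabel c).1) (by rw [C'.label_dart]; exact (hlabel c).2.1)
      exact hin ((hC' n).symm.trans ((cutRel_rv hX).trans hgo))
  have hsub : M.inside (M.cycleEdges C') o ⊆ M.inside (M.cycleEdges C) o :=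
    fun d hd hdo => hd (hdo.of_forall_not_cutRel hfar)
  refine ⟨C', (Set.ssubset_iff_of_subset hsub).2 ⟨C.dart 0, hin, fun h => h ?_⟩⟩
  have hX' := hL.edge_notMem_cycleEdges_of_label C' (d := C.dart 0)
    (by rw [C.label_dart]; exact (hlabel c).1.symm) (by rw [C.label_dart]; exact (hlabel c).2.2)
  have hout := (hL.cutRel_dart_or_cutRel_rv C o).resolve_left fun h => hin h.symm
  exact (cutRel_rv hX').trans (hout.symm.of_forall_not_cutRel hfar)

/-- Infinite descent on the inside, by `exists_inside_ssubset` applied to `C` or to its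
reverse. -/
theorem isEmpty_dirCycle (hL : M.IsTransversalLabelling o O κ) (c : Fin 4) :
    IsEmpty (DirCycle (LabelRel O κ c)) := by
  suffices ∀ N c (C : DirCycle (LabelRel O κ c)), (M.inside (M.cycleEdges C) o).ncard ≠ N from
    ⟨fun C => this _ c C rfl⟩
  intro N
  induction N using Nat.strong_induction_on with
  | _ N ih =>
  have hdesc : ∀ c (C : DirCycle (LabelRel O κ c)), ¬ M.CutRel (M.cycleEdges C) (C.dart 0) o →
      (M.inside (M.cycleEdges C) o).ncard ≠ N := fun c C hin hN => by
    obtain ⟨C', hC'⟩ := hL.exists_inside_ssubset C hin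
    exact ih _ (hN ▸ Set.ncard_lt_ncard hC') _ C' rfl
  intro c C
  by_cases hin : M.CutRel (M.cycleEdges C) (C.dart 0) o
  · have := hdesc _ (hL.reverse C)
    rw [cycleEdges_reverse] at this
    refine this fun h => hL.not_cutRel_dart_rv C (-1) ?_
    rw [hL.reverse_dart C 0, show -(0 : ℤ) - 1 = -1 by ring] at h
    exact (hL.cutRel_dart C (-1)).symm.trans (hin.trans h.symm)
  · exact hdesc c C hin

end IsTransversalLabelling

end PlanarMap

def withOuter (S : V → V → Prop) (x m₁ m₂ y : V) (u v : V) : Prop :=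
  S u v ∨ (u, v) = (x, m₁) ∨ (u, v) = (x, m₂) ∨ (u, v) = (m₁, y) ∨ (u, v) = (m₂, y)

def IsBipolar (S : V → V → Prop) (x y : V) : Prop :=
  (∀ v, ¬ Relation.TransGen S v v) ∧
    (∀ u, ¬ S u x) ∧ (∀ v, (∀ u, ¬ S u v) → v = x) ∧
    (∀ u, ¬ S y u) ∧ (∀ v, (∀ u, ¬ S v u) → v = y)

section withOuter

variable {S : V → V → Prop} {x m₁ m₂ y : V}

lemma exists_pred_of_transGen_self {w : V} (h : Relation.TransGen S w w) :
    ∃ u, S u w ∧ Relation.TransGen S u u := by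
  obtain ⟨u, hwu, hu⟩ := Relation.TransGen.tail'_iff.1 h
  exact ⟨u, hu, Relation.TransGen.head' hu hwu⟩

lemma exists_succ_of_transGen_self {w : V} (h : Relation.TransGen S w w) :
    ∃ v, S w v ∧ Relation.TransGen S v v := by
  obtain ⟨v, hwv, hv⟩ := Relation.TransGen.head'_iff.1 h
  exact ⟨v, hwv, Relation.TransGen.tail' hv hwv⟩

lemma withOuter_not_into_src (hx : ∀ u, ¬ S u x) (h₁ : x ≠ m₁) (h₂ : x ≠ m₂)
    (h₃ : x ≠ y) (u : V) : ¬ withOuter S x m₁ m₂ y u x := by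
  simp [withOuter, hx, h₁, h₂, h₃]

lemma withOuter_not_out_snk (hy : ∀ u, ¬ S y u) (h₁ : x ≠ y) (h₂ : m₁ ≠ y)
    (h₃ : m₂ ≠ y) (u : V) : ¬ withOuter S x m₁ m₂ y y u := by
  simp [withOuter, hy, h₁.symm, h₂.symm, h₃.symm]

lemma eq_src_of_withOuter_into_mid (hm₁ : ∀ u, ¬ S u m₁) (hm₂ : ∀ u, ¬ S u m₂)
    (h₁ : m₁ ≠ m₂) (h₂ : m₁ ≠ y) (h₃ : m₂ ≠ y) {u : V}
    (h : withOuter S x m₁ m₂ y u m₁ ∨ withOuter S x m₁ m₂ y u m₂) : u = x := by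
  simp [withOuter, hm₁, hm₂, h₁, h₁.symm, h₂, h₃] at h
  exact h

/-- A closed walk of `withOuter S x m₁ m₂ y` avoids the four outer vertices, so it is a closed
walk of `S` through the remaining vertices. -/
lemma not_transGen_withOuter_self [Finite V] {L : V → V → Prop} (hL : IsEmpty (DirCycle L))
    (hSL : ∀ u v, S u v → u ∉ ({x, m₁, m₂, y} : Set V) → L u v)
    (hsrc : ∀ u, ¬ withOuter S x m₁ m₂ y u x)
    (hsnk : ∀ u, ¬ withOuter S x m₁ m₂ y y u)
    (hmid : ∀ u, withOuter S x m₁ m₂ y u m₁ ∨ withOuter S x m₁ m₂ y u m₂ → u = x)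
    (v : V) :
    ¬ Relation.TransGen (withOuter S x m₁ m₂ y) v v := by
  have hinner : ∀ w, Relation.TransGen (withOuter S x m₁ m₂ y) w w →
      w ∉ ({x, m₁, m₂, y} : Set V) := by
    intro w hw hmem
    simp only [Set.mem_insert_iff, Set.mem_singleton_iff] at hmem
    obtain ⟨u, hu, hu'⟩ := exists_pred_of_transGen_self hw
    rcases hmem with rfl | rfl | rfl | rfl
    · exact hsrc u hu
    · obtain ⟨u', hu'', -⟩ := exists_pred_of_transGen_self hu'
      exact hsrc u' (hmid u (Or.inl hu) ▸ hu'')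
    · obtain ⟨u', hu'', -⟩ := exists_pred_of_transGen_self hu'
      exact hsrc u' (hmid u (Or.inr hu) ▸ hu'')
    · obtain ⟨v, hv, -⟩ := exists_succ_of_transGen_self hw
      exact hsnk v hv
  intro hv
  refine (DirCycle.nonempty_of_forall_exists (S := L)
    (U := {w | Relation.TransGen (withOuter S x m₁ m₂ y) w w}) ⟨v, hv⟩
    fun w hw => ?_).elim hL.false
  obtain ⟨v, hwv, hv⟩ := exists_succ_of_transGen_self hw
  refine ⟨v, hv, hSL _ _ ?_ (hinner w hw)⟩
  have := hinner w hw
  simp only [Set.mem_insert_iff, Set.mem_singleton_iff, not_or] at this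
  rcases hwv with h | h | h | h | h
  · exact h
  all_goals simp only [Prod.mk.injEq] at h; tauto

theorem isBipolar_withOuter [Finite V] {L : V → V → Prop}
    (hne : [x, m₁, m₂, y].Nodup) (hL : IsEmpty (DirCycle L))
    (hSL : ∀ u v, S u v → u ∉ ({x, m₁, m₂, y} : Set V) → L u v)
    (hx : ∀ u, ¬ S u x) (hy : ∀ u, ¬ S y u)
    (hm₁ : ∀ u, ¬ S u m₁) (hm₂ : ∀ u, ¬ S u m₂)
    (hin : ∀ v ∉ ({x, m₁, m₂, y} : Set V), ∃ u, S u v)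
    (hout : ∀ v ∉ ({x, m₁, m₂, y} : Set V), ∃ w, S v w) :
    IsBipolar (withOuter S x m₁ m₂ y) x y := by
  simp only [List.nodup_cons, List.mem_cons, List.not_mem_nil, or_false, not_or,
    List.nodup_nil, not_false_eq_true, and_true] at hne
  obtain ⟨⟨hxm₁, hxm₂, hxy⟩, ⟨hm₁m₂, hm₁y⟩, hm₂y⟩ := hne
  have hsrc := withOuter_not_into_src (m₁ := m₁) (m₂ := m₂) hx hxm₁ hxm₂ hxy
  have hsnk := withOuter_not_out_snk (m₁ := m₁) (m₂ := m₂) hy hxy hm₁y hm₂y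
  refine ⟨not_transGen_withOuter_self hL hSL hsrc hsnk
    (fun u => eq_src_of_withOuter_into_mid hm₁ hm₂ hm₁m₂ hm₁y hm₂y),
    hsrc, fun v hv => ?_, hsnk, fun v hv => ?_⟩
  · by_contra hvx
    by_cases hv4 : v ∈ ({x, m₁, m₂, y} : Set V)
    · simp only [Set.mem_insert_iff, Set.mem_singleton_iff] at hv4
      rcases hv4 with rfl | rfl | rfl | rfl
      exacts [hvx rfl, hv x (Or.inr (Or.inl rfl)), hv x (Or.inr (Or.inr (Or.inl rfl))),
        hv m₁ (Or.inr (Or.inr (Or.inr (Or.inl rfl))))]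
    · obtain ⟨u, hu⟩ := hin v hv4
      exact hv u (Or.inl hu)
  · by_contra hvy
    by_cases hv4 : v ∈ ({x, m₁, m₂, y} : Set V)
    · simp only [Set.mem_insert_iff, Set.mem_singleton_iff] at hv4
      rcases hv4 with rfl | rfl | rfl | rfl
      exacts [hv m₁ (Or.inr (Or.inl rfl)), hv y (Or.inr (Or.inr (Or.inr (Or.inl rfl)))),
        hv y (Or.inr (Or.inr (Or.inr (Or.inr rfl)))), hvy rfl]
    · obtain ⟨w, hw⟩ := hout v hv4
      exact hv w (Or.inl hw)

end withOuter

section Coloring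

def outerEdges (s a t b : V) : Set (Set V) := {{s, a}, {a, t}, {t, b}, {b, s}}

lemma pair_notMem_outerEdges {s a t b u : V} (hu : u ∉ ({s, a, t, b} : Set V)) (v : V) :
    ({u, v} : Set V) ∉ outerEdges s a t b := by
  intro h
  simp only [outerEdges, Set.mem_insert_iff, Set.mem_singleton_iff] at h
  apply hu
  rcases h with h | h | h | h <;>
  · have := h ▸ Set.mem_insert u {v}
    simp only [Set.mem_insert_iff, Set.mem_singleton_iff] at this ⊢
    tauto

/-- The conditions on the colored orientations `R`, `B` of the inner edges (the edges off the
outer 4-cycle `s a t b`), except the rotation condition around the inner vertices. -/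
structure IsTransversalColoring (E : V → V → Prop) (s a t b : V) (R B : V → V → Prop) :
    Prop where
  symm : ∀ u v, E u v → E v u
  R_edge : ∀ u v, R u v → E u v
  B_edge : ∀ u v, B u v → E u v
  R_inner : ∀ u v, R u v → ({u, v} : Set V) ∉ outerEdges s a t b
  B_inner : ∀ u v, B u v → ({u, v} : Set V) ∉ outerEdges s a t b
  exactly : ∀ u v, E u v → ({u, v} : Set V) ∉ outerEdges s a t b →
    (R u v ∨ R v u ∨ B u v ∨ B v u) ∧ (R u v → ¬ R v u ∧ ¬ B u v ∧ ¬ B v u) ∧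
      (R v u → ¬ B u v ∧ ¬ B v u) ∧ (B u v → ¬ B v u)
  at_s : ∀ v, E s v → ({s, v} : Set V) ∉ outerEdges s a t b → R s v
  at_a : ∀ v, E a v → ({a, v} : Set V) ∉ outerEdges s a t b → B a v
  at_t : ∀ v, E t v → ({t, v} : Set V) ∉ outerEdges s a t b → R v t
  at_b : ∀ v, E b v → ({b, v} : Set V) ∉ outerEdges s a t b → B v b

namespace IsTransversalColoring

variable {E : V → V → Prop} {s a t b : V} {R B : V → V → Prop} {u v : V}

lemma not_R_into_s (hT : IsTransversalColoring E s a t b R B) (u : V) :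
    ¬ R u s := by
  intro h
  have hin := hT.R_inner u s h
  exact ((hT.exactly u s (hT.R_edge u s h) hin).2.1 h).1
    (hT.at_s u (hT.symm u s (hT.R_edge u s h)) (Set.pair_comm u s ▸ hin))

lemma not_R_out_t (hT : IsTransversalColoring E s a t b R B) (u : V) :
    ¬ R t u := by
  intro h
  have hin := hT.R_inner t u h
  exact ((hT.exactly t u (hT.R_edge t u h) hin).2.1 h).1 (hT.at_t u (hT.R_edge t u h) hin)

lemma not_R_into_a (hT : IsTransversalColoring E s a t b R B) (u : V) :
    ¬ R u a := by
  intro h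
  have hin := hT.R_inner u a h
  exact ((hT.exactly u a (hT.R_edge u a h) hin).2.1 h).2.2
    (hT.at_a u (hT.symm u a (hT.R_edge u a h)) (Set.pair_comm u a ▸ hin))

lemma not_R_into_b (hT : IsTransversalColoring E s a t b R B) (u : V) :
    ¬ R u b := by
  intro h
  have hin := hT.R_inner u b h
  exact ((hT.exactly u b (hT.R_edge u b h) hin).2.1 h).2.1
    (hT.at_b u (hT.symm u b (hT.R_edge u b h)) (Set.pair_comm u b ▸ hin))

lemma not_B_into_a (hT : IsTransversalColoring E s a t b R B) (u : V) :
    ¬ B u a := by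
  intro h
  have hin := hT.B_inner u a h
  exact (hT.exactly u a (hT.B_edge u a h) hin).2.2.2 h
    (hT.at_a u (hT.symm u a (hT.B_edge u a h)) (Set.pair_comm u a ▸ hin))

lemma not_B_out_b (hT : IsTransversalColoring E s a t b R B) (u : V) :
    ¬ B b u := by
  intro h
  have hin := hT.B_inner b u h
  exact (hT.exactly b u (hT.B_edge b u h) hin).2.2.2 h (hT.at_b u (hT.B_edge b u h) hin)

lemma not_B_into_s (hT : IsTransversalColoring E s a t b R B) (u : V) :
    ¬ B u s := by
  intro h
  have hin := hT.B_inner u s h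
  exact ((hT.exactly u s (hT.B_edge u s h) hin).2.2.1
    (hT.at_s u (hT.symm u s (hT.B_edge u s h)) (Set.pair_comm u s ▸ hin))).1 h

lemma not_B_into_t (hT : IsTransversalColoring E s a t b R B) (u : V) :
    ¬ B u t := by
  intro h
  have hin := hT.B_inner u t h
  exact ((hT.exactly u t (hT.B_edge u t h) hin).2.1
    (hT.at_t u (hT.symm u t (hT.B_edge u t h)) (Set.pair_comm u t ▸ hin))).2.1 h

lemma dartCat_swap (hT : IsTransversalColoring E s a t b R B) (hE : E u v)
    (hin : ({u, v} : Set V) ∉ outerEdges s a t b) :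
    dartCat R B (v, u) = dartCat R B (u, v) + 2 := by
  obtain ⟨h | h | h | h, hR, hR', hB⟩ := hT.exactly u v hE hin
  · obtain ⟨h₁, h₂, h₃⟩ := hR h
    simp only [dartCat, h, h₁, h₂, h₃, if_true, if_false]; rfl
  · obtain ⟨h₂, h₃⟩ := hR' h
    have h₁ : ¬ R u v := fun h' => (hR h').1 h
    simp only [dartCat, h, h₁, h₂, h₃, if_true, if_false]; rfl
  · have h₁ : ¬ R u v := fun h' => (hR h').2.1 h
    have h₂ : ¬ R v u := fun h' => (hR' h').1 h
    simp only [dartCat, h, h₁, h₂, hB h, if_true, if_false]; rfl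
  · have h₁ : ¬ R u v := fun h' => (hR h').2.2 h
    have h₂ : ¬ R v u := fun h' => (hR' h').2 h
    have h₃ : ¬ B u v := fun h' => hB h' h
    simp only [dartCat, h, h₁, h₂, h₃, if_true, if_false]; rfl

end IsTransversalColoring

section dartCat

variable {R B : V → V → Prop} {p : V × V}

lemma dartCat_eq_zero (h : dartCat R B p = 0) : R p.1 p.2 := by
  unfold dartCat at h; split_ifs at h <;> first | assumption | exact absurd h (by decide)

lemma dartCat_eq_one (h : dartCat R B p = 1) : B p.1 p.2 := by
  unfold dartCat at h; split_ifs at h <;> first | assumption | exact absurd h (by decide)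

lemma dartCat_eq_two (h : dartCat R B p = 2) : R p.2 p.1 := by
  unfold dartCat at h; split_ifs at h <;> first | assumption | exact absurd h (by decide)

lemma dartCat_eq_three (h : dartCat R B p = 3) :
    ¬ R p.1 p.2 ∧ ¬ B p.1 p.2 ∧ ¬ R p.2 p.1 := by
  unfold dartCat at h; split_ifs at h <;> first | exact absurd h (by decide) | tauto

end dartCat

namespace IsTransversalColoring

variable [Finite V] {E : V → V → Prop} {s a t b : V} {R B : V → V → Prop}

theorem isBipolar_red (hT : IsTransversalColoring E s a t b R B) (hne : [s, a, t, b].Nodup)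
    (hcyc : IsEmpty (DirCycle (LabelRel {s, a, t, b} (fun d : Dart E => dartCat R B d.1) 0)))
    (hlabel : ∀ v ∉ ({s, a, t, b} : Set V), ∀ c,
      ∃ d : Dart E, d.1.1 = v ∧ dartCat R B d.1 = c) :
    IsBipolar (withOuter R s a b t) s t := by
  have hO : ({s, a, b, t} : Set V) = {s, a, t, b} := by rw [Set.pair_comm]
  refine isBipolar_withOuter ((((List.Perm.swap t b []).cons a).cons s).nodup_iff.2 hne) hcyc
    (fun u v h hu => ⟨hO ▸ hu, hT.R_edge u v h, if_pos h⟩) hT.not_R_into_s hT.not_R_out_t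
    hT.not_R_into_a hT.not_R_into_b (fun v hv => ?_) (fun v hv => ?_)
  · obtain ⟨d, rfl, hd⟩ := hlabel v (hO ▸ hv) 2
    exact ⟨d.1.2, dartCat_eq_two hd⟩
  · obtain ⟨d, rfl, hd⟩ := hlabel v (hO ▸ hv) 0
    exact ⟨d.1.2, dartCat_eq_zero hd⟩

theorem isBipolar_blue (hT : IsTransversalColoring E s a t b R B) (hne : [s, a, t, b].Nodup)
    (hcyc : IsEmpty (DirCycle (LabelRel {s, a, t, b} (fun d : Dart E => dartCat R B d.1) 1)))
    (hlabel : ∀ v ∉ ({s, a, t, b} : Set V), ∀ c,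
      ∃ d : Dart E, d.1.1 = v ∧ dartCat R B d.1 = c) :
    IsBipolar (withOuter B a s t b) a b := by
  have hO : ({a, s, t, b} : Set V) = {s, a, t, b} := Set.insert_comm a s _
  refine isBipolar_withOuter ((List.Perm.swap s a [t, b]).nodup_iff.2 hne) hcyc
    (fun u v h hu => ⟨hO ▸ hu, hT.B_edge u v h, ?_⟩) hT.not_B_into_a hT.not_B_out_b
    hT.not_B_into_s hT.not_B_into_t (fun v hv => ?_) (fun v hv => ?_)
  · have hR : ¬ R u v := fun hR =>
      ((hT.exactly u v (hT.B_edge u v h) (hT.B_inner u v h)).2.1 hR).2.1 h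
    simp only [dartCat, if_neg hR, if_pos h]
  · obtain ⟨d, rfl, hd⟩ := hlabel v (hO ▸ hv) 3
    obtain ⟨h₁, h₂, h₃⟩ := dartCat_eq_three hd
    refine ⟨d.1.2, ?_⟩
    have := (hT.exactly _ _ d.2 (pair_notMem_outerEdges (hO ▸ hv) _)).1
    tauto
  · obtain ⟨d, rfl, hd⟩ := hlabel v (hO ▸ hv) 1
    exact ⟨d.1.2, dartCat_eq_one hd⟩

end IsTransversalColoring

end Coloring

end TransversalStructure

open TransversalStructure

theorem transversal_structure_bipolar_general {V : Type*} [Fintype V]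
    (E : V → V → Prop) (hsymm : ∀ u v, E u v → E v u) (hirr : ∀ v, ¬ E v v)
    (ρ rev φ : Equiv.Perm {p : V × V // E p.1 p.2})
    (hρ_tail : ∀ d, (ρ d).1.1 = d.1.1)
    (hρ_cyclic : ∀ d d' : {p : V × V // E p.1 p.2},
      d.1.1 = d'.1.1 → ∃ n : ℕ, (⇑ρ)^[n] d = d')
    (hrev : ∀ d, (rev d).1 = (d.1.2, d.1.1))
    (hφ : ∀ d, φ d = ρ (rev d))
    (hconn : ∀ u v : V, Relation.ReflTransGen E u v)
    (heuler : (Fintype.card V : ℤ)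
        - Fintype.card {p : V × V // E p.1 p.2} / 2 + numOrbits φ = 2)
    -- the outer face is a 4-gon with vertices `s, a, t, b` in clockwise order
    (s a t b : V) (houter_distinct : [s, a, t, b].Nodup)
    (d₀ : {p : V × V // E p.1 p.2})
    (houter_s : d₀.1.1 = s) (houter_a : (φ d₀).1.1 = a)
    (houter_t : ((⇑φ)^[2] d₀).1.1 = t) (houter_b : ((⇑φ)^[3] d₀).1.1 = b)
    -- `R`, `B` orient and color exactly the inner edges
    (R B : V → V → Prop)
    (hRE : ∀ u v, R u v → E u v) (hBE : ∀ u v, B u v → E u v)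
    (hRinner : ∀ u v, R u v → ({u, v} : Set V) ∉ ({{s,a},{a,t},{t,b},{b,s}} : Set (Set V)))
    (hBinner : ∀ u v, B u v → ({u, v} : Set V) ∉ ({{s,a},{a,t},{t,b},{b,s}} : Set (Set V)))
    (hexactly : ∀ u v, E u v → ({u, v} : Set V) ∉ ({{s,a},{a,t},{t,b},{b,s}} : Set (Set V)) →
      (R u v ∨ R v u ∨ B u v ∨ B v u) ∧
      (R u v → ¬ R v u ∧ ¬ B u v ∧ ¬ B v u) ∧
      (R v u → ¬ B u v ∧ ¬ B v u) ∧ (B u v → ¬ B v u))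
    -- condition (1): inner edges at the outer vertices
    (hs : ∀ v, E s v → ({s, v} : Set V) ∉ ({{s,a},{a,t},{t,b},{b,s}} : Set (Set V)) → R s v)
    (ha : ∀ v, E a v → ({a, v} : Set V) ∉ ({{s,a},{a,t},{t,b},{b,s}} : Set (Set V)) → B a v)
    (ht : ∀ v, E t v → ({t, v} : Set V) ∉ ({{s,a},{a,t},{t,b},{b,s}} : Set (Set V)) → R v t)
    (hb : ∀ v, E b v → ({b, v} : Set V) ∉ ({{s,a},{a,t},{t,b},{b,s}} : Set (Set V)) → B v b)
    -- condition (2): four non-empty clockwise blocks around each inner vertex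
    (hblocks : ∀ v : V, v ∉ ({s, a, t, b} : Set V) →
      (∀ e : {p : V × V // E p.1 p.2}, e.1.1 = v →
        dartCat R B (ρ e).1 = dartCat R B e.1 ∨
        dartCat R B (ρ e).1 = dartCat R B e.1 + 1) ∧
      (∀ c : Fin 4, ∃ e : {p : V × V // E p.1 p.2}, e.1.1 = v ∧ dartCat R B e.1 = c)) :
    -- conclusion: the red and blue graphs are bipolar orientations
    (let Rp : V → V → Prop := fun u v => R u v ∨
        (u, v) = (s, a) ∨ (u, v) = (s, b) ∨ (u, v) = (a, t) ∨ (u, v) = (b, t)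
     (∀ v : V, ¬ Relation.TransGen Rp v v) ∧
     (∀ u, ¬ Rp u s) ∧ (∀ v, (∀ u, ¬ Rp u v) → v = s) ∧
     (∀ u, ¬ Rp t u) ∧ (∀ v, (∀ u, ¬ Rp v u) → v = t)) ∧
    (let Bp : V → V → Prop := fun u v => B u v ∨
        (u, v) = (a, s) ∨ (u, v) = (a, t) ∨ (u, v) = (s, b) ∨ (u, v) = (t, b)
     (∀ v : V, ¬ Relation.TransGen Bp v v) ∧
     (∀ u, ¬ Bp u a) ∧ (∀ v, (∀ u, ¬ Bp u v) → v = a) ∧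
     (∀ u, ¬ Bp b u) ∧ (∀ v, (∀ u, ¬ Bp v u) → v = b)) := by
  have hT : IsTransversalColoring E s a t b R B :=
    ⟨hsymm, hRE, hBE, hRinner, hBinner, hexactly, hs, ha, ht, hb⟩
  let M : PlanarMap E := ⟨ρ, rev, φ, hirr, hρ_tail, hρ_cyclic, hrev, hφ, hconn, heuler⟩
  have hL : M.IsTransversalLabelling d₀ {s, a, t, b} (fun d => dartCat R B d.1) :=
    { mem_face := by
        simp only [Set.mem_insert_iff, Set.mem_singleton_iff, forall_eq_or_imp, forall_eq]
        exact ⟨⟨0, houter_s⟩, ⟨1, houter_a⟩, ⟨2, houter_t⟩, ⟨3, houter_b⟩⟩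
      label_rv := fun d hd => by
        simp only [M, hrev]
        exact hT.dartCat_swap d.2 (pair_notMem_outerEdges hd _)
      label_ρ := fun d hd => (hblocks _ hd).1 d rfl
      exists_label := fun v hv => (hblocks v hv).2 }
  exact ⟨hT.isBipolar_red houter_distinct (hL.isEmpty_dirCycle 0) fun v hv => (hblocks v hv).2,
    hT.isBipolar_blue houter_distinct (hL.isEmpty_dirCycle 1) fun v hv => (hblocks v hv).2⟩

/-- **Transversal structures give bipolar orientations.**  Let `G` be an internally
4-connected inner triangulation of a 4-gon with outer vertices `s, a, t, b` in
clockwise order: a connected plane graph (embedding given by a rotation system `ρ` on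
darts with face-tracing permutation `φ = ρ ∘ rev` and Euler's formula), whose outer
face is the 4-gon `s a t b`, all inner faces are triangles, and which has no
separating triangle.  Let `(R, B)` be a transversal structure: an orientation and
red/blue coloring of the inner edges such that all inner edges at `s, a, t, b` are
respectively red outgoing, blue outgoing, red incoming, blue incoming, and around
each inner vertex the darts form four non-empty blocks, in clockwise order: red
outgoing, blue outgoing, red incoming, blue incoming.  Then the red graph
`E_R⁺ = R ∪ {(s,a), (s,b), (a,t), (b,t)}` is a bipolar orientation with source `s`
and sink `t`, and the blue graph `E_B⁺ = B ∪ {(a,s), (a,t), (s,b), (t,b)}` is a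
bipolar orientation with source `a` and sink `b`. -/
theorem transversal_structure_bipolar {V : Type*} [Fintype V] [DecidableEq V]
    (E : V → V → Prop) (hsymm : ∀ u v, E u v → E v u) (hirr : ∀ v, ¬ E v v)
    (ρ rev φ : Equiv.Perm {p : V × V // E p.1 p.2})
    (hρ_tail : ∀ d, (ρ d).1.1 = d.1.1)
    (hρ_cyclic : ∀ d d' : {p : V × V // E p.1 p.2},
      d.1.1 = d'.1.1 → ∃ n : ℕ, (⇑ρ)^[n] d = d')
    (hrev : ∀ d, (rev d).1 = (d.1.2, d.1.1))
    (hφ : ∀ d, φ d = ρ (rev d))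
    (hconn : ∀ u v : V, Relation.ReflTransGen E u v)
    (heuler : (Fintype.card V : ℤ)
        - Fintype.card {p : V × V // E p.1 p.2} / 2 + numOrbits φ = 2)
    -- the outer face is a 4-gon with vertices `s, a, t, b` in clockwise order
    (s a t b : V) (houter_distinct : [s, a, t, b].Nodup)
    (d₀ : {p : V × V // E p.1 p.2})
    (houter4 : Function.minimalPeriod (⇑φ) d₀ = 4)
    (houter_s : d₀.1.1 = s) (houter_a : (φ d₀).1.1 = a)
    (houter_t : ((⇑φ)^[2] d₀).1.1 = t) (houter_b : ((⇑φ)^[3] d₀).1.1 = b)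
    -- all inner faces are triangles
    (htri : ∀ d : {p : V × V // E p.1 p.2}, ¬ φ.SameCycle d₀ d →
      Function.minimalPeriod (⇑φ) d = 3)
    -- internal 4-connectivity: no separating triangle
    (hnosep : ¬ ∃ u v w : V, E u v ∧ E v w ∧ E u w ∧
      ∃ x y : V, x ∉ ({u, v, w} : Set V) ∧ y ∉ ({u, v, w} : Set V) ∧
        ¬ Relation.ReflTransGen
          (fun p q => E p q ∧ p ∉ ({u, v, w} : Set V) ∧ q ∉ ({u, v, w} : Set V)) x y)
    -- `R`, `B` orient and color exactly the inner edges
    (R B : V → V → Prop)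
    (hRE : ∀ u v, R u v → E u v) (hBE : ∀ u v, B u v → E u v)
    (hRinner : ∀ u v, R u v → ({u, v} : Set V) ∉ ({{s,a},{a,t},{t,b},{b,s}} : Set (Set V)))
    (hBinner : ∀ u v, B u v → ({u, v} : Set V) ∉ ({{s,a},{a,t},{t,b},{b,s}} : Set (Set V)))
    (hexactly : ∀ u v, E u v → ({u, v} : Set V) ∉ ({{s,a},{a,t},{t,b},{b,s}} : Set (Set V)) →
      (R u v ∨ R v u ∨ B u v ∨ B v u) ∧
      (R u v → ¬ R v u ∧ ¬ B u v ∧ ¬ B v u) ∧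
      (R v u → ¬ B u v ∧ ¬ B v u) ∧ (B u v → ¬ B v u))
    -- condition (1): inner edges at the outer vertices
    (hs : ∀ v, E s v → ({s, v} : Set V) ∉ ({{s,a},{a,t},{t,b},{b,s}} : Set (Set V)) → R s v)
    (ha : ∀ v, E a v → ({a, v} : Set V) ∉ ({{s,a},{a,t},{t,b},{b,s}} : Set (Set V)) → B a v)
    (ht : ∀ v, E t v → ({t, v} : Set V) ∉ ({{s,a},{a,t},{t,b},{b,s}} : Set (Set V)) → R v t)
    (hb : ∀ v, E b v → ({b, v} : Set V) ∉ ({{s,a},{a,t},{t,b},{b,s}} : Set (Set V)) → B v b)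
    -- condition (2): four non-empty clockwise blocks around each inner vertex
    (hblocks : ∀ v : V, v ∉ ({s, a, t, b} : Set V) →
      (∀ e : {p : V × V // E p.1 p.2}, e.1.1 = v →
        dartCat R B (ρ e).1 = dartCat R B e.1 ∨
        dartCat R B (ρ e).1 = dartCat R B e.1 + 1) ∧
      (∀ c : Fin 4, ∃ e : {p : V × V // E p.1 p.2}, e.1.1 = v ∧ dartCat R B e.1 = c)) :
    -- conclusion: the red and blue graphs are bipolar orientations
    (let Rp : V → V → Prop := fun u v => R u v ∨
        (u, v) = (s, a) ∨ (u, v) = (s, b) ∨ (u, v) = (a, t) ∨ (u, v) = (b, t)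
     (∀ v : V, ¬ Relation.TransGen Rp v v) ∧
     (∀ u, ¬ Rp u s) ∧ (∀ v, (∀ u, ¬ Rp u v) → v = s) ∧
     (∀ u, ¬ Rp t u) ∧ (∀ v, (∀ u, ¬ Rp v u) → v = t)) ∧
    (let Bp : V → V → Prop := fun u v => B u v ∨
        (u, v) = (a, s) ∨ (u, v) = (a, t) ∨ (u, v) = (s, b) ∨ (u, v) = (t, b)
     (∀ v : V, ¬ Relation.TransGen Bp v v) ∧
     (∀ u, ¬ Bp u a) ∧ (∀ v, (∀ u, ¬ Bp u v) → v = a) ∧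
     (∀ u, ¬ Bp b u) ∧ (∀ v, (∀ u, ¬ Bp v u) → v = b)) :=
  transversal_structure_bipolar_general E hsymm hirr ρ rev φ hρ_tail hρ_cyclic hrev hφ hconn heuler
    s a t b houter_distinct d₀ houter_s houter_a houter_t houter_b R B hRE hBE hRinner hBinner
    hexactly hs ha ht hb hblocks
end

section
/- Let C_1, …, C_w be the canonical chain partition of a finite 2-dimensional poset P with realizer [L_1, L_2], and let C_i^+ be obtained from C_i by successively adding all compatible elements of C_{i-1}, C_{i-2}, …, C_1 in this order. Then each C_i^+ is a maximal chain of the subposet of P induced by C_1 ∪ … ∪ C_i. -/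
open Finset

attribute [local instance] Classical.propDecidable

/-- Add to the chain `S` all elements of `T` which are compatible with `S`,
i.e. comparable to every element of `S`. -/
noncomputable def extendChain {α : Type*} [DecidableEq α] [PartialOrder α]
    (S T : Finset α) : Finset α :=
  S ∪ T.filter (fun x => ∀ y ∈ S, x ≤ y ∨ y ≤ x)

/-- `chainCover C i` is `C_i⁺`: starting from `C_i`, successively add all compatible
elements of `C_{i-1}, C_{i-2}, …, C_0`, in this order. -/
noncomputable def chainCover {α : Type*} [DecidableEq α] [PartialOrder α]
    (C : ℕ → Finset α) (i : ℕ) : Finset α :=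
  (List.range i).reverse.foldl (fun S j => extendChain S (C j)) (C i)

/-!
Each `C j` is an antichain of the conjugate order `Q = L₁ ∩ reverse L₂`; since `L₁` and `L₂`
are total, two distinct elements incomparable in `Q` and in its dual are comparable in
`P = L₁ ∩ L₂`, so every `C j` is a chain of `P`. Adding compatible elements to a chain keeps
it a chain. For maximality, an element of `C j` (`j < i`) that is
comparable to all of `C_i⁺` was comparable to the smaller set present when `C j` was
processed, so it was added at that moment.
-/

theorem isAntichain_canonAntichain_s19 {α : Type*} [DecidableEq α] (lt : α → α → Prop)
    (S : Finset α) (j : ℕ) : IsAntichain lt (canonAntichain lt S j : Set α) := by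
  intro a ha b hb _
  rw [mem_coe, canonAntichain] at ha hb
  simp only [mem_filter] at ha hb
  exact hb.2 a ha.1

theorem isChain_of_isAntichain_conjugate {X : Type*} [PartialOrder X] {r₁ r₂ : X → X → Prop}
    [Std.Total r₁] [Std.Total r₂] (hreal : ∀ a b : X, a ≤ b ↔ (r₁ a b ∧ r₂ a b)) {s : Set X}
    (hs : IsAntichain (fun a b => (r₁ a b ∧ r₂ b a) ∧ a ≠ b) s) : IsChain (· ≤ ·) s := by
  intro a ha b hb hab
  have hab' : ¬ (r₁ a b ∧ r₂ b a) := fun h => hs ha hb hab ⟨h, hab⟩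
  have hba' : ¬ (r₁ b a ∧ r₂ a b) := fun h => hs hb ha (Ne.symm hab) ⟨h, Ne.symm hab⟩
  change a ≤ b ∨ b ≤ a
  rw [hreal, hreal]
  rcases Std.Total.total (r := r₁) a b with h1 | h1 <;>
    rcases Std.Total.total (r := r₂) a b with h2 | h2 <;> tauto

section ChainCover

variable {α : Type*} [DecidableEq α] [PartialOrder α]

theorem subset_extendChain (S T : Finset α) : S ⊆ extendChain S T :=
  subset_union_left

theorem extendChain_subset_union (S T : Finset α) : extendChain S T ⊆ S ∪ T :=
  union_subset_union_right (filter_subset _ _)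

theorem mem_extendChain_of_forall {S T : Finset α} {x : α} (hx : x ∈ T)
    (h : ∀ y ∈ S, x ≤ y ∨ y ≤ x) : x ∈ extendChain S T :=
  mem_union_right _ (mem_filter.mpr ⟨hx, h⟩)

theorem isChain_extendChain {S T : Finset α} (hS : IsChain (· ≤ ·) (S : Set α))
    (hT : IsChain (· ≤ ·) (T : Set α)) :
    IsChain (· ≤ ·) (extendChain S T : Set α) := by
  rw [extendChain, coe_union, isChain_union]
  refine ⟨hS, hT.mono (coe_subset.mpr (filter_subset _ _)), fun a ha b hb _ => ?_⟩
  exact ((mem_filter.mp hb).2 a ha).symm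

variable (C : ℕ → Finset α)

theorem subset_foldl_extendChain (L : List ℕ) (S : Finset α) :
    S ⊆ L.foldl (fun S j => extendChain S (C j)) S := by
  induction L generalizing S with
  | nil => exact Subset.refl S
  | cons j L ih => exact (subset_extendChain _ _).trans (ih _)

theorem foldl_extendChain_subset {L : List ℕ} {S U : Finset α} (hS : S ⊆ U)
    (hC : ∀ j ∈ L, C j ⊆ U) : L.foldl (fun S j => extendChain S (C j)) S ⊆ U := by
  induction L generalizing S with
  | nil => exact hS
  | cons j L ih =>
    refine ih ((extendChain_subset_union _ _).trans (union_subset hS (hC j (by simp))))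
      fun k hk => hC k (List.mem_cons_of_mem j hk)

theorem isChain_foldl_extendChain (hC : ∀ j, IsChain (· ≤ ·) (C j : Set α)) (L : List ℕ)
    {S : Finset α} (hS : IsChain (· ≤ ·) (S : Set α)) :
    IsChain (· ≤ ·) ((L.foldl (fun S j => extendChain S (C j)) S : Finset α) : Set α) := by
  induction L generalizing S with
  | nil => exact hS
  | cons j L ih => exact ih (isChain_extendChain hS (hC j))

theorem mem_foldl_extendChain_of_forall {L : List ℕ} {S : Finset α} {j : ℕ} (hj : j ∈ L)
    {x : α} (hx : x ∈ C j)
    (h : ∀ y ∈ L.foldl (fun S j => extendChain S (C j)) S, x ≤ y ∨ y ≤ x) :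
    x ∈ L.foldl (fun S j => extendChain S (C j)) S := by
  induction L generalizing S with
  | nil => simp at hj
  | cons k L ih =>
    rw [List.foldl_cons] at h ⊢
    rcases List.mem_cons.mp hj with rfl | hj
    · refine subset_foldl_extendChain C L _ (mem_extendChain_of_forall hx fun y hy => ?_)
      exact h y (subset_foldl_extendChain C L _ (subset_extendChain _ _ hy))
    · exact ih hj h

theorem chainCover_subset_biUnion (i : ℕ) :
    chainCover C i ⊆ (range (i + 1)).biUnion C := by
  refine foldl_extendChain_subset C (subset_biUnion_of_mem C (self_mem_range_succ i))
    fun j hj => subset_biUnion_of_mem C ?_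
  simp only [List.mem_reverse, List.mem_range] at hj
  exact mem_range.mpr (by omega)

theorem isChain_chainCover (hC : ∀ j, IsChain (· ≤ ·) (C j : Set α)) (i : ℕ) :
    IsChain (· ≤ ·) (chainCover C i : Set α) :=
  isChain_foldl_extendChain C hC _ (hC i)

theorem mem_chainCover_of_forall {i j : ℕ} (hj : j ≤ i) {x : α} (hx : x ∈ C j)
    (h : ∀ y ∈ chainCover C i, x ≤ y ∨ y ≤ x) : x ∈ chainCover C i := by
  rcases hj.lt_or_eq with hj | rfl
  · exact mem_foldl_extendChain_of_forall C (by simpa using hj) hx h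
  · exact subset_foldl_extendChain C _ _ hx

theorem eq_chainCover_of_isChain (i : ℕ) {S : Finset α} (hSU : S ⊆ (range (i + 1)).biUnion C)
    (hS : IsChain (· ≤ ·) (S : Set α)) (hsub : chainCover C i ⊆ S) : S = chainCover C i := by
  refine Subset.antisymm (fun x hxS => ?_) hsub
  obtain ⟨j, hj, hxj⟩ := mem_biUnion.mp (hSU hxS)
  refine mem_chainCover_of_forall C (Nat.lt_succ_iff.mp (mem_range.mp hj)) hxj fun y hy => ?_
  rcases eq_or_ne x y with rfl | hxy
  · exact Or.inl le_rfl
  · exact hS hxS (hsub hy) hxy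

end ChainCover

/-- Let `C_0, …` be the canonical chain partition of a finite 2-dimensional poset `P`
with realizer `[L₁, L₂]` (the canonical antichain partition of the primary conjugate
`Q = L₁ ∩ reverse L₂`, viewed as chains of `P`), and let `C_i⁺` be obtained from `C_i`
by successively adding all compatible elements of `C_{i-1}, …, C_0` in this order.
Then each `C_i⁺` is a maximal chain of the subposet of `P` induced on
`C_0 ∪ … ∪ C_i`. -/
theorem chainCover_maximal_chain {X : Type*} [Fintype X] [DecidableEq X]
    [PartialOrder X]
    (r₁ r₂ : X → X → Prop) (h₁ : IsLinearOrder X r₁) (h₂ : IsLinearOrder X r₂)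
    (hreal : ∀ a b : X, a ≤ b ↔ (r₁ a b ∧ r₂ a b)) :
    let qlt : X → X → Prop := fun a b => (r₁ a b ∧ r₂ b a) ∧ a ≠ b
    let C : ℕ → Finset X := canonAntichain qlt Finset.univ
    ∀ i : ℕ,
      let U : Finset X := (Finset.range (i + 1)).biUnion C
      chainCover C i ⊆ U ∧
      IsChain (· ≤ ·) ((chainCover C i : Finset X) : Set X) ∧
      (∀ S : Finset X, S ⊆ U → IsChain (· ≤ ·) (S : Set X) →
        chainCover C i ⊆ S → S = chainCover C i) := by
  intro qlt C i U
  have hC : ∀ j, IsChain (· ≤ ·) (C j : Set X) := fun j =>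
    isChain_of_isAntichain_conjugate hreal (isAntichain_canonAntichain_s19 qlt univ j)
  exact ⟨chainCover_subset_biUnion C i, isChain_chainCover C hC i,
    fun _ => eq_chainCover_of_isChain C i⟩
end
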